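/- arXiv:2308.07398 — 8 statements merged into one kernel-verified Lean document; each statement's English description precedes it below -/
import Mathlib

section
/- Let k be an algebraically closed field of characteristic ≠ 2 and let θ be the involution of the space of antisymmetric (n+1)×(n+1) matrices over k given by conjugation with diag(1,...,1,-1). Identifying an antisymmetric (n+1)×(n+1) matrix with a pair (M,u) where M is an antisymmetric n×n matrix and u ∈ k^n (so the matrix has block form [[M,u],[-uᵀ,0]]), the map φ(M,u) = (M, u uᵀ) induces an isomorphism of the ring of θ-invariant polynomial functions on so_{n+1} with the coordinate ring of so_n × X, where X is the cone of symmetric n×n matrices of rank at most 1. -/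
open MvPolynomial

section Aux

variable {K : Type} [Field K]

lemma minor_eq {n : ℕ} (A : Matrix (Fin n) (Fin n) K) (h : A.rank ≤ 1)
    (i i' j j' : Fin n) : A i j * A i' j' = A i j' * A i' j := by
  classical
  set W := LinearMap.range A.mulVecLin with hW
  have hv : (fun r => A r j) ∈ W := ⟨Pi.single j 1, by ext r; simp [Matrix.mulVecLin_apply]⟩
  have hv' : (fun r => A r j') ∈ W := ⟨Pi.single j' 1, by ext r; simp [Matrix.mulVecLin_apply]⟩
  have hnli : ¬ LinearIndependent K ![(⟨_, hv⟩ : W), ⟨_, hv'⟩] := by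
    intro hli
    have h2 := hli.fintype_card_le_finrank
    simp only [Fintype.card_fin] at h2
    have hr : A.rank = Module.finrank K W := rfl
    omega
  rw [LinearIndependent.pair_iff] at hnli
  push_neg at hnli
  obtain ⟨s, t, hst, hne⟩ := hnli
  have hfun : ∀ r, s * A r j + t * A r j' = 0 := by
    intro r
    have := congrArg (fun v : W => (v : Fin n → K) r) hst
    simpa using this
  by_cases hs : s = 0
  · have ht : t ≠ 0 := fun h0 => hne hs h0
    have hz : ∀ r, A r j' = 0 := by
      intro r
      have h1 := hfun r
      rw [hs, zero_mul, zero_add] at h1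
      exact (mul_eq_zero.mp h1).resolve_left ht
    rw [hz i, hz i']; ring
  · apply mul_left_cancel₀ hs
    linear_combination A i' j' * hfun i - A i j' * hfun i'

lemma factor_rank_one {n : ℕ} [IsAlgClosed K] (A : Matrix (Fin n) (Fin n) K)
    (hsym : ∀ i j, A i j = A j i) (h : A.rank ≤ 1) :
    ∃ u : Fin n → K, ∀ i j, A i j = u i * u j := by
  by_cases hz : ∀ i j, A i j = 0
  · exact ⟨0, fun i j => by simp [hz i j]⟩
  push_neg at hz
  obtain ⟨i₀, j₀, h0⟩ := hz
  have hdiag : A i₀ i₀ ≠ 0 := by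
    intro hd
    have hm := minor_eq A h i₀ j₀ j₀ i₀
    rw [hd, zero_mul] at hm
    rcases mul_eq_zero.mp hm with h' | h'
    · exact h0 h'
    · exact h0 (by rw [hsym i₀ j₀]; exact h')
  obtain ⟨r, hr⟩ := IsAlgClosed.exists_pow_nat_eq (A i₀ i₀) (n := 2) (by norm_num)
  have hrne : r ≠ 0 := by
    intro h0
    rw [h0] at hr
    simp only [ne_eq, zero_pow, OfNat.ofNat_ne_zero, not_false_eq_true] at hr
    exact hdiag hr.symm
  refine ⟨fun i => A i i₀ / r, fun i j => ?_⟩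
  have hm := minor_eq A h i i₀ j i₀
  rw [div_mul_div_comm, ← pow_two, hr, eq_div_iff hdiag]
  rw [hm, hsym i₀ j]

noncomputable def pairF {K : Type} [CommSemiring K] {n : ℕ} :
    List (Fin n) → MvPolynomial ((Fin n × Fin n) ⊕ (Fin n × Fin n)) K
  | [] => 1
  | [_] => 1
  | a :: b :: t => X (Sum.inr (a, b)) * pairF t

lemma pairF_eval {K : Type} [CommSemiring K] {n : ℕ}
    (y : ((Fin n × Fin n) ⊕ (Fin n × Fin n)) → K) (u : Fin n → K)
    (hy : ∀ i j, y (Sum.inr (i, j)) = u i * u j) :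
    ∀ l : List (Fin n), Even l.length → eval y (pairF l) = (l.map u).prod
  | [], _ => by simp [pairF]
  | [a], h => by simp at h
  | a :: b :: t, h => by
    have ht : Even t.length := by
      obtain ⟨m, hm⟩ := h
      simp only [List.length_cons] at hm
      exact ⟨m - 1, by omega⟩
    simp only [pairF, map_mul, eval_X, List.map_cons, List.prod_cons,
      pairF_eval y u hy t ht, hy a b]
    ring

lemma map_flatMap_replicate_prod {M ι : Type*} [CommMonoid M] (u : ι → M) (g : ι → ℕ) :
    ∀ L : List ι, ((L.flatMap fun i => List.replicate (g i) i).map u).prod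
      = (L.map fun i => u i ^ g i).prod
  | [] => by simp
  | a :: t => by
    simp [List.flatMap_cons, List.map_append, List.prod_append, List.map_replicate,
      List.prod_replicate, map_flatMap_replicate_prod u g t]

lemma flatMap_replicate_length {ι : Type*} (g : ι → ℕ) :
    ∀ L : List ι, (L.flatMap fun i => List.replicate (g i) i).length = (L.map g).sum
  | [] => by simp
  | a :: t => by simp [flatMap_replicate_length g t]

lemma eval_aeval'' {σ τ : Type*} {K : Type} [CommSemiring K] (z : τ → K)
    (g : σ → MvPolynomial τ K) (p : MvPolynomial σ K) :
    eval z (aeval g p) = eval (fun s => eval z (g s)) p := by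
  induction p using MvPolynomial.induction_on with
  | C a => simp [MvPolynomial.algebraMap_eq]
  | add p q hp hq => simp only [map_add, hp, hq]
  | mul_X p s hp => simp only [map_mul, aeval_X, eval_X, hp]

end Aux
/-- Identifying `so_{n+1}` with pairs `(M,u)` (`M ∈ so_n` antisymmetric, `u ∈ kⁿ`), the map
`φ(M,u) = (M, u uᵀ)` induces an isomorphism of the θ-invariant polynomial functions on
`so_{n+1}` (θ : (M,u) ↦ (M,−u)) with the coordinate ring of `so_n × X`, where `X` is the
cone of symmetric n×n matrices of rank at most 1. -/
theorem stmt_0 (k : Type) [Field k] [IsAlgClosed k] (hchar : (2 : k) ≠ 0) (n : ℕ)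
    (D : Set (((Fin n × Fin n) ⊕ Fin n) → k))
    (hD : D = {p | ∀ i j : Fin n, p (Sum.inl (i, j)) = - p (Sum.inl (j, i))})
    (T : Set (((Fin n × Fin n) ⊕ (Fin n × Fin n)) → k))
    (hT : T = {q | (∀ i j : Fin n, q (Sum.inl (i, j)) = - q (Sum.inl (j, i))) ∧
        (∀ i j : Fin n, q (Sum.inr (i, j)) = q (Sum.inr (j, i))) ∧
        (Matrix.of fun i j : Fin n => q (Sum.inr (i, j))).rank ≤ 1})
    (θ : (((Fin n × Fin n) ⊕ Fin n) → k) → (((Fin n × Fin n) ⊕ Fin n) → k))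
    (hθ : ∀ p, (∀ i j : Fin n, θ p (Sum.inl (i, j)) = p (Sum.inl (i, j))) ∧
        (∀ i : Fin n, θ p (Sum.inr i) = - p (Sum.inr i)))
    (φ : (((Fin n × Fin n) ⊕ Fin n) → k) → (((Fin n × Fin n) ⊕ (Fin n × Fin n)) → k))
    (hφ : ∀ p, (∀ i j : Fin n, φ p (Sum.inl (i, j)) = p (Sum.inl (i, j))) ∧
        (∀ i j : Fin n, φ p (Sum.inr (i, j)) = p (Sum.inr i) * p (Sum.inr j))) :
    Set.MapsTo θ D D ∧ Set.MapsTo φ D T ∧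
    (∀ x ∈ D, φ (θ x) = φ x) ∧
    (∀ p q : MvPolynomial ((Fin n × Fin n) ⊕ (Fin n × Fin n)) k,
      (∀ x ∈ D, MvPolynomial.eval (φ x) p = MvPolynomial.eval (φ x) q) →
      ∀ y ∈ T, MvPolynomial.eval y p = MvPolynomial.eval y q) ∧
    (∀ p₀ : MvPolynomial ((Fin n × Fin n) ⊕ Fin n) k,
      (∀ x ∈ D, MvPolynomial.eval (θ x) p₀ = MvPolynomial.eval x p₀) →
      ∃ p : MvPolynomial ((Fin n × Fin n) ⊕ (Fin n × Fin n)) k,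
        ∀ x ∈ D, MvPolynomial.eval x p₀ = MvPolynomial.eval (φ x) p) := by
  classical
  refine ⟨?_, ?_, ?_, ?_, ?_⟩
  · -- θ maps D to D
    intro x hx
    simp only [hD, Set.mem_setOf_eq] at hx ⊢
    intro i j
    rw [(hθ x).1 i j, (hθ x).1 j i]
    exact hx i j
  · -- φ maps D to T
    intro x hx
    simp only [hD, Set.mem_setOf_eq] at hx
    simp only [hT, Set.mem_setOf_eq]
    refine ⟨fun i j => by rw [(hφ x).1 i j, (hφ x).1 j i]; exact hx i j,
      fun i j => by rw [(hφ x).2 i j, (hφ x).2 j i]; ring, ?_⟩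
    have hM : (Matrix.of fun i j : Fin n => φ x (Sum.inr (i, j)))
        = Matrix.replicateCol Unit (fun i => x (Sum.inr i)) * Matrix.replicateRow Unit (fun i => x (Sum.inr i)) := by
      rw [← Matrix.vecMulVec_eq]
      ext i j
      simp only [Matrix.of_apply, Matrix.vecMulVec_apply]
      exact (hφ x).2 i j
    rw [hM]
    calc (Matrix.replicateCol Unit (fun i => x (Sum.inr i))
            * Matrix.replicateRow Unit (fun i => x (Sum.inr i))).rank
        ≤ (Matrix.replicateCol Unit (fun i => x (Sum.inr i))).rank := Matrix.rank_mul_le_left _ _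
      _ ≤ Fintype.card Unit := Matrix.rank_le_card_width _
      _ = 1 := Fintype.card_unit
  · -- φ ∘ θ = φ on D
    intro x _
    funext s
    obtain (⟨i, j⟩ | ⟨i, j⟩) := s
    · rw [(hφ (θ x)).1 i j, (hφ x).1 i j, (hθ x).1 i j]
    · rw [(hφ (θ x)).2 i j, (hφ x).2 i j, (hθ x).2 i, (hθ x).2 j]; ring
  · -- surjectivity onto T, hence faithfulness
    intro p q hpq y hy
    simp only [hT, Set.mem_setOf_eq] at hy
    obtain ⟨h1, h2, h3⟩ := hy
    obtain ⟨u, hu⟩ := factor_rank_one (Matrix.of fun i j : Fin n => y (Sum.inr (i, j)))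
      (fun i j => h2 i j) h3
    set x : ((Fin n × Fin n) ⊕ Fin n) → k := Sum.elim (fun a => y (Sum.inl a)) u with hxdef
    have hxD : x ∈ D := by
      simp only [hD, Set.mem_setOf_eq]
      intro i j
      exact h1 i j
    have hyx : φ x = y := by
      funext s
      obtain (⟨i, j⟩ | ⟨i, j⟩) := s
      · rw [(hφ x).1 i j]; rfl
      · rw [(hφ x).2 i j]
        have h4 := hu i j
        simp only [Matrix.of_apply] at h4
        exact h4.symm
    rw [← hyx]
    exact hpq x hxD
  · -- invariants
    intro p₀ hp₀
    set ρv : ((Fin n × Fin n) ⊕ Fin n) → MvPolynomial ((Fin n × Fin n) ⊕ Fin n) k :=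
      Sum.elim (fun a : Fin n × Fin n =>
          if a.2 < a.1 then - X (Sum.inl (a.2, a.1)) else if a.1 = a.2 then 0 else X (Sum.inl a))
        (fun i => X (Sum.inr i)) with hρv
    set q : MvPolynomial ((Fin n × Fin n) ⊕ Fin n) k := aeval ρv p₀ with hqdef
    set lift : ((((Fin n × Fin n) ⊕ Fin n) → k)) → ((((Fin n × Fin n) ⊕ Fin n) → k)) :=
      fun z => fun s => eval z (ρv s) with hliftdef
    have hliftD : ∀ z, lift z ∈ D := by
      intro z
      simp only [hD, Set.mem_setOf_eq]
      intro i j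
      simp only [hliftdef, hρv, Sum.elim_inl]
      rcases lt_trichotomy i j with hij | hij | hij
      · rw [if_neg (not_lt.mpr hij.le), if_neg hij.ne, if_pos hij]
        simp
      · subst hij
        simp
      · rw [if_pos hij, if_neg (not_lt.mpr hij.le), if_neg hij.ne]
        simp
    have heval_q : ∀ z, eval z q = eval (lift z) p₀ := fun z => eval_aeval'' z ρv p₀
    have hlift_eq : ∀ x ∈ D, lift x = x := by
      intro x hx
      simp only [hD, Set.mem_setOf_eq] at hx
      funext s
      obtain (⟨i, j⟩ | i) := s
      · simp only [hliftdef, hρv, Sum.elim_inl]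
        rcases lt_trichotomy i j with hij | hij | hij
        · rw [if_neg (not_lt.mpr hij.le), if_neg hij.ne, eval_X]
        · subst hij
          have h0 : x (Sum.inl (i, i)) = 0 := by
            have h2 := hx i i
            have h3 : (2 : k) * x (Sum.inl (i, i)) = 0 := by linear_combination h2
            exact (mul_eq_zero.mp h3).resolve_left hchar
          simp [h0]
        · rw [if_pos hij]
          rw [map_neg, eval_X, hx j i]
          ring
      · simp [hliftdef, hρv]
    set flipz : ((((Fin n × Fin n) ⊕ Fin n) → k)) → ((((Fin n × Fin n) ⊕ Fin n) → k)) :=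
      fun z => Sum.elim (fun a => z (Sum.inl a)) (fun i => - z (Sum.inr i)) with hflip
    have hlift_flip : ∀ z, lift (flipz z) = θ (lift z) := by
      intro z
      funext s
      obtain (⟨i, j⟩ | i) := s
      · rw [(hθ (lift z)).1 i j]
        simp only [hliftdef, hρv, Sum.elim_inl]
        split_ifs <;> simp [hflip]
      · rw [(hθ (lift z)).2 i]
        simp [hliftdef, hρv, hflip]
    have hq_flip : ∀ z, eval (flipz z) q = eval z q := by
      intro z
      rw [heval_q, heval_q, hlift_flip]
      exact hp₀ (lift z) (hliftD z)
    set w : ((Fin n × Fin n) ⊕ Fin n) → MvPolynomial ((Fin n × Fin n) ⊕ Fin n) k :=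
      Sum.elim (fun a => X (Sum.inl a)) (fun i => - X (Sum.inr i)) with hw
    have hεq : aeval w q = q := by
      apply MvPolynomial.funext
      intro z
      rw [eval_aeval'']
      have hzz : (fun s => eval z (w s)) = flipz z := by
        funext s
        obtain (a | i) := s <;> simp [hw, hflip]
      rw [hzz, hq_flip]
    have key : ∀ (d' : ((Fin n × Fin n) ⊕ Fin n) →₀ ℕ) (c : k),
        aeval w (monomial d' c)
          = C ((-1 : k) ^ (∑ i, d' (Sum.inr i))) * monomial d' c := by
      intro d' c
      conv_lhs => rw [monomial_eq, Finsupp.prod_fintype _ _ (fun s => pow_zero _),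
        Fintype.prod_sum_type]
      conv_rhs => rw [monomial_eq, Finsupp.prod_fintype _ _ (fun s => pow_zero _),
        Fintype.prod_sum_type]
      rw [map_mul, map_mul, map_prod, map_prod]
      simp only [map_pow, aeval_X, hw, Sum.elim_inl, Sum.elim_inr, aeval_C]
      have hneg : ∀ i : Fin n, (- X (Sum.inr i) : MvPolynomial ((Fin n × Fin n) ⊕ Fin n) k)
          ^ d' (Sum.inr i) = (-1) ^ d' (Sum.inr i) * X (Sum.inr i) ^ d' (Sum.inr i) :=
        fun i => by rw [neg_pow]
      rw [Finset.prod_congr rfl (fun i _ => hneg i), Finset.prod_mul_distrib,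
        Finset.prod_pow_eq_pow_sum]
      have hC : ((-1 : MvPolynomial ((Fin n × Fin n) ⊕ Fin n) k) ^ (∑ i, d' (Sum.inr i)))
          = C ((-1 : k) ^ (∑ i, d' (Sum.inr i))) := by
        rw [map_pow, map_neg, map_one]
      rw [hC]
      simp only [MvPolynomial.algebraMap_eq]
      rw [map_pow]
      ring
    have heven : ∀ d ∈ q.support, Even (∑ i, d (Sum.inr i)) := by
      intro d hd
      have hrep : aeval w q = ∑ d' ∈ q.support,
          C ((-1 : k) ^ (∑ i, d' (Sum.inr i))) * monomial d' (coeff d' q) := by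
        conv_lhs => rw [q.as_sum]
        rw [map_sum]
        exact Finset.sum_congr rfl fun d' _ => key d' _
      have hcd : coeff d q = (-1 : k) ^ (∑ i, d (Sum.inr i)) * coeff d q := by
        conv_lhs => rw [← hεq, hrep]
        rw [MvPolynomial.coeff_sum]
        rw [Finset.sum_eq_single d]
        · rw [coeff_C_mul, coeff_monomial, if_pos rfl]
        · intro d' _ hne
          rw [coeff_C_mul, coeff_monomial, if_neg hne, mul_zero]
        · intro hnot
          exact absurd hd hnot
      have hc0 : coeff d q ≠ 0 := mem_support_iff.mp hd
      rcases Nat.even_or_odd (∑ i, d (Sum.inr i)) with he | ho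
      · exact he
      · exfalso
        rw [ho.neg_one_pow] at hcd
        have h2 : (2 : k) * coeff d q = 0 := by linear_combination hcd
        exact hc0 ((mul_eq_zero.mp h2).resolve_left hchar)
    set Lst : (((Fin n × Fin n) ⊕ Fin n) →₀ ℕ) → List (Fin n) :=
      fun d => (List.finRange n).flatMap fun i => List.replicate (d (Sum.inr i)) i with hLst
    refine ⟨∑ d ∈ q.support, C (coeff d q)
        * (∏ a : Fin n × Fin n, X (Sum.inl a) ^ d (Sum.inl a)) * pairF (Lst d), ?_⟩
    intro x hx
    have h1 : eval x p₀ = eval x q := by rw [heval_q, hlift_eq x hx]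
    rw [h1]
    conv_lhs => rw [q.as_sum]
    rw [map_sum, map_sum]
    refine Finset.sum_congr rfl fun d hd => ?_
    rw [eval_monomial, Finsupp.prod_fintype _ _ (fun s => pow_zero _), Fintype.prod_sum_type]
    rw [map_mul, map_mul, eval_C, map_prod]
    have hXl : ∀ a : Fin n × Fin n, eval (φ x) (X (Sum.inl a) ^ d (Sum.inl a))
        = x (Sum.inl a) ^ d (Sum.inl a) := by
      intro a
      obtain ⟨i, j⟩ := a
      rw [map_pow, eval_X, (hφ x).1 i j]
    have hlen : Even (Lst d).length := by
      have hlen2 : (Lst d).length = ∑ i, d (Sum.inr i) := by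
        rw [hLst]
        rw [flatMap_replicate_length (fun i => d (Sum.inr i)) (List.finRange n)]
        rw [← Fin.sum_univ_def]
      rw [hlen2]
      exact heven d hd
    have hpair : eval (φ x) (pairF (Lst d)) = ∏ i, x (Sum.inr i) ^ d (Sum.inr i) := by
      rw [pairF_eval (φ x) (fun i => x (Sum.inr i)) (fun i j => (hφ x).2 i j) (Lst d) hlen]
      rw [hLst, map_flatMap_replicate_prod (fun i => x (Sum.inr i)) (fun i => d (Sum.inr i))
        (List.finRange n)]
      rw [← Fin.prod_univ_def]
    rw [hpair, Finset.prod_congr rfl (fun a _ => hXl a)]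
    ring
end

section
/- Let V = k^{2n} with symplectic form, n ≥ 1, and let Γ ⊆ GL(V × V) be the group generated by the G_m-action t·(x,y) = (tx, t⁻¹y) and the involution (x,y) ↦ (y,x). Then (V × V)/Γ is isomorphic to the determinantal variety S₀ of matrices in sp_{2n}(k) of rank at most 2, via the map (x,y) ↦ (x yᵀ + y xᵀ)J'. -/
/-!
A matrix `A` lies in `sp_{2n}` iff `A J'` is symmetric, and `J'² = -1`, so `A ↦ -A J'` identifies
`S₀` with the symmetric matrices of rank `≤ 2`, and `m x y` with `xyᵀ + yxᵀ`. Over an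
algebraically closed field of characteristic `≠ 2`, a symmetric matrix of rank `≤ 2` is a sum of
two squares `w₁w₁ᵀ + w₂w₂ᵀ`, which equals `xyᵀ + yxᵀ` for `x = w₁ + i w₂`, `y = (w₁ - i w₂)/2`.

For the invariants: `𝔾ₘ`-invariance of `q` forces each of its monomials to have the same degree
in `x` as in `y` (compare coefficients of powers of `t`), and swap invariance writes `2q` as a
combination of the symmetrised monomials `xᴬyᴮ + xᴮyᴬ` with `|A| = |B|`. Each of these is a
polynomial in the `sᵢⱼ = xᵢyⱼ + xⱼyᵢ`, which are, up to sign, the entries of `m x y`.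
-/

open Matrix MvPolynomial Module

namespace Matrix

variable {K ι : Type*} [Field K] [Fintype ι]

theorem rank_add_le (A B : Matrix ι ι K) : (A + B).rank ≤ A.rank + B.rank := by
  have h : LinearMap.range (A + B).mulVecLin ≤
      LinearMap.range A.mulVecLin ⊔ LinearMap.range B.mulVecLin := by
    rintro _ ⟨v, rfl⟩
    rw [mulVecLin_add]
    exact Submodule.add_mem_sup ⟨v, rfl⟩ ⟨v, rfl⟩
  exact (Submodule.finrank_mono h).trans (Submodule.finrank_add_le_finrank_add_finrank _ _)

theorem rank_vecMulVec_add_vecMulVec_le (x y : ι → K) :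
    (vecMulVec x y + vecMulVec y x).rank ≤ 2 :=
  (rank_add_le _ _).trans (add_le_add (rank_vecMulVec_le x y) (rank_vecMulVec_le y x))

omit [Fintype ι] in
theorem isSymm_vecMulVec_add_vecMulVec (x y : ι → K) : (vecMulVec x y + vecMulVec y x).IsSymm := by
  rw [IsSymm, transpose_add, transpose_vecMulVec, transpose_vecMulVec, add_comm]

theorem rank_lt_rank_of_ker_lt {A B : Matrix ι ι K}
    (h : LinearMap.ker A.mulVecLin < LinearMap.ker B.mulVecLin) : B.rank < A.rank := by
  have hA := LinearMap.finrank_range_add_finrank_ker A.mulVecLin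
  have hB := LinearMap.finrank_range_add_finrank_ker B.mulVecLin
  have := Submodule.finrank_lt_finrank_of_lt h
  rw [rank, rank]
  omega

theorem IsSymm.exists_dotProduct_mulVec_self_ne_zero [DecidableEq ι] (h2 : (2 : K) ≠ 0)
    {S : Matrix ι ι K} (hS : S.IsSymm) (hS0 : S ≠ 0) : ∃ v, v ⬝ᵥ S *ᵥ v ≠ 0 := by
  have : Invertible (2 : K) := invertibleOfNonzero h2
  obtain ⟨v, hv⟩ := LinearMap.BilinForm.exists_bilinForm_self_ne_zero
    ((LinearEquiv.map_ne_zero_iff toBilin').mpr hS0)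
    (LinearMap.BilinForm.isSymm_iff.mp (isSymm_toBilin'_iff_isSymm.mpr hS))
  exact ⟨v, by rwa [toBilin'_apply'] at hv⟩

/-- The kernel grows: it keeps that of `S` and gains `v`. -/
theorem IsSymm.rank_sub_vecMulVec_self_lt {S : Matrix ι ι K} (hS : S.IsSymm) {v : ι → K}
    {α : K} (hα : α * α = v ⬝ᵥ S *ᵥ v) (hα0 : α ≠ 0) :
    (S - vecMulVec (α⁻¹ • S *ᵥ v) (α⁻¹ • S *ᵥ v)).rank < S.rank := by
  have hdot : ∀ u, (α⁻¹ • S *ᵥ v) ⬝ᵥ u = α⁻¹ * (v ⬝ᵥ S *ᵥ u) := fun u => by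
    rw [smul_dotProduct, dotProduct_mulVec, ← mulVec_transpose, hS.eq, smul_eq_mul]
  apply rank_lt_rank_of_ker_lt
  refine SetLike.lt_iff_le_and_exists.mpr ⟨fun u (hu : S *ᵥ u = 0) => ?_, v, ?_, ?_⟩
  · show (S - _) *ᵥ u = 0
    rw [sub_mulVec, vecMulVec_mulVec, hdot, hu]
    simp
  · show (S - _) *ᵥ v = 0
    rw [sub_mulVec, vecMulVec_mulVec, hdot, ← hα, inv_mul_cancel_left₀ hα0, op_smul_eq_smul,
      smul_smul, mul_inv_cancel₀ hα0, one_smul, sub_self]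
  · intro (hv : S *ᵥ v = 0)
    rw [hv, dotProduct_zero, mul_self_eq_zero] at hα
    exact hα0 hα

theorem IsSymm.exists_eq_sum_vecMulVec_self [DecidableEq ι] [IsAlgClosed K] (h2 : (2 : K) ≠ 0)
    (r : ℕ) : ∀ {S : Matrix ι ι K}, S.IsSymm → S.rank ≤ r →
      ∃ w : Fin r → ι → K, S = ∑ k, vecMulVec (w k) (w k) := by
  induction r with
  | zero =>
    intro S _ hr
    refine ⟨0, ?_⟩
    rw [Nat.le_zero, rank, Submodule.finrank_eq_zero, LinearMap.range_eq_bot,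
      ← toLin'_apply', LinearEquiv.map_eq_zero_iff] at hr
    simp [hr]
  | succ r ih =>
    intro S hS hr
    by_cases hS0 : S = 0
    · exact ⟨0, by simp [hS0, vecMulVec_zero]⟩
    obtain ⟨v, hv⟩ := hS.exists_dotProduct_mulVec_self_ne_zero h2 hS0
    obtain ⟨α, hα⟩ := IsAlgClosed.exists_eq_mul_self (v ⬝ᵥ S *ᵥ v)
    have hα0 : α ≠ 0 := by rintro rfl; exact hv (by simpa using hα)
    have hlt := hS.rank_sub_vecMulVec_self_lt hα.symm hα0
    set w := α⁻¹ • S *ᵥ v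
    obtain ⟨u, hu⟩ := ih (hS.sub (by simp [IsSymm])) (by omega : (S - vecMulVec w w).rank ≤ r)
    refine ⟨Fin.cons w u, ?_⟩
    rw [Fin.sum_univ_succ, Fin.cons_zero]
    simp only [Fin.cons_succ, ← hu]
    abel

theorem IsSymm.exists_eq_vecMulVec_add_vecMulVec [DecidableEq ι] [IsAlgClosed K]
    (h2 : (2 : K) ≠ 0) {S : Matrix ι ι K} (hS : S.IsSymm) (hr : S.rank ≤ 2) :
    ∃ x y : ι → K, vecMulVec x y + vecMulVec y x = S := by
  obtain ⟨w, rfl⟩ := hS.exists_eq_sum_vecMulVec_self h2 2 hr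
  obtain ⟨i, hi⟩ := IsAlgClosed.exists_eq_mul_self (-1 : K)
  refine ⟨w 0 + i • w 1, (2 : K)⁻¹ • (w 0 - i • w 1), ?_⟩
  ext a b
  simp only [Fin.sum_univ_two, add_apply, vecMulVec_apply, Pi.add_apply, Pi.sub_apply,
    Pi.smul_apply, smul_eq_mul]
  linear_combination (w 0 a * w 0 b - i * i * w 1 a * w 1 b) * inv_mul_cancel₀ h2 +
    w 1 a * w 1 b * hi

end Matrix

namespace Matrix

variable {K ι : Type*} [CommRing K]

theorem fromBlocks_antidiag_transpose {J : Matrix ι ι K} (hJ : Jᵀ = J) :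
    (fromBlocks 0 J (-J) 0)ᵀ = -fromBlocks 0 J (-J) 0 := by
  rw [fromBlocks_transpose, fromBlocks_neg, transpose_neg, hJ]
  simp

theorem fromBlocks_antidiag_mul_self [Fintype ι] [DecidableEq ι] {J : Matrix ι ι K}
    (hJ : J * J = 1) : fromBlocks 0 J (-J) 0 * fromBlocks 0 J (-J) 0 = -1 := by
  rw [fromBlocks_multiply, ← fromBlocks_one, fromBlocks_neg]
  simp [hJ]

theorem transpose_mul_add_mul_eq_zero_iff [Fintype ι] [DecidableEq ι] {J A : Matrix ι ι K}
    (hJT : Jᵀ = -J) (hJJ : J * J = -1) : Aᵀ * J + J * A = 0 ↔ (A * J).IsSymm := by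
  rw [IsSymm, transpose_mul, hJT]
  constructor
  · intro h
    calc -J * Aᵀ = J * Aᵀ * (J * J) := by rw [hJJ]; noncomm_ring
      _ = J * (Aᵀ * J + J * A) * J - J * J * (A * J) := by noncomm_ring
      _ = A * J := by rw [h, hJJ]; noncomm_ring
  · intro h
    calc Aᵀ * J + J * A = J * (-J * Aᵀ) * J + J * A := by
          rw [show J * (-J * Aᵀ) * J = -(J * J) * Aᵀ * J by noncomm_ring, hJJ]; noncomm_ring
      _ = 0 := by
          rw [h, show J * (A * J) * J = J * A * (J * J) by noncomm_ring, hJJ]; noncomm_ring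

end Matrix

theorem antidiag_eq_toMatrix_revPerm (K : Type*) [Semiring K] (n : ℕ) :
    (of fun i j : Fin n => if (i : ℕ) + (j : ℕ) + 1 = n then (1 : K) else 0) =
      (Fin.revPerm : Equiv.Perm (Fin n)).toPEquiv.toMatrix := by
  ext i j
  simp only [of_apply, PEquiv.toMatrix_apply, Equiv.toPEquiv_apply, Option.mem_def,
    Option.some.injEq, Fin.revPerm_apply, Fin.ext_iff, Fin.val_rev]
  congr 1
  apply propext
  omega

theorem antidiag_transpose (K : Type*) [Semiring K] (n : ℕ) :
    (of fun i j : Fin n => if (i : ℕ) + (j : ℕ) + 1 = n then (1 : K) else 0)ᵀ =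
      of fun i j : Fin n => if (i : ℕ) + (j : ℕ) + 1 = n then (1 : K) else 0 := by
  rw [antidiag_eq_toMatrix_revPerm, ← PEquiv.toMatrix_symm, ← Equiv.toPEquiv_symm,
    Fin.revPerm_symm]

theorem antidiag_mul_self (K : Type*) [Semiring K] (n : ℕ) :
    (of fun i j : Fin n => if (i : ℕ) + (j : ℕ) + 1 = n then (1 : K) else 0) *
      (of fun i j : Fin n => if (i : ℕ) + (j : ℕ) + 1 = n then (1 : K) else 0) = 1 := by
  rw [antidiag_eq_toMatrix_revPerm, ← PEquiv.toMatrix_trans, ← Equiv.toPEquiv_trans,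
    show Fin.revPerm.trans Fin.revPerm = Equiv.refl (Fin n) from Equiv.ext Fin.rev_rev,
    Equiv.toPEquiv_refl, PEquiv.toMatrix_refl]

section WeightScale

variable {K σ : Type*} [CommRing K]

noncomputable def weightScale (w : σ → ℕ) :
    MvPolynomial σ K →ₐ[K] Polynomial (MvPolynomial σ K) :=
  aeval fun i => Polynomial.C (X i) * Polynomial.X ^ w i

theorem weightScale_monomial (w : σ → ℕ) (a : σ →₀ ℕ) (c : K) :
    weightScale w (monomial a c) =
      Polynomial.C (monomial a c) * Polynomial.X ^ Finsupp.weight w a := by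
  rw [weightScale, aeval_monomial, monomial_eq, Finsupp.weight_apply]
  simp only [mul_pow, ← pow_mul, Finsupp.prod, Finsupp.sum, Finset.prod_mul_distrib,
    Finset.prod_pow_eq_pow_sum, map_mul, map_prod, map_pow, Polynomial.algebraMap_apply,
    algebraMap_eq, smul_eq_mul, mul_comm (w _), mul_assoc]

theorem coeff_weightScale (w : σ → ℕ) (q : MvPolynomial σ K) (d : ℕ) :
    (weightScale w q).coeff d = weightedHomogeneousComponent w d q := by
  classical
  induction q using MvPolynomial.induction_on' with
  | monomial a c =>
    rw [weightScale_monomial, Polynomial.coeff_C_mul_X_pow,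
      weightedHomogeneousComponent_of_mem (isWeightedHomogeneous_monomial w a c rfl)]
  | add p q hp hq => rw [map_add, Polynomial.coeff_add, hp, hq, map_add]

theorem eval_map_weightScale (w : σ → ℕ) (q : MvPolynomial σ K) (z : σ → K) (t : K) :
    ((weightScale w q).map (eval z)).eval t = eval (fun i => t ^ w i * z i) q := by
  have := congrArg (· q) <| MvPolynomial.comp_aeval
    (φ := (Polynomial.aeval t).comp (Polynomial.mapAlgHom (aeval z)))
    (fun i => Polynomial.C (X i) * Polynomial.X ^ w i)
  simp only [AlgHom.comp_apply, Polynomial.coe_mapAlgHom, Polynomial.map_C, Polynomial.map_X,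
    map_mul, map_pow, Polynomial.aeval_C, Polynomial.aeval_X, coe_aeval_eq_eval, eval_X] at this
  rw [weightScale, ← Polynomial.coe_aeval_eq_eval, this]
  simp [mul_comm]

theorem weightScale_eq_of_eval_eq [IsDomain K] [Infinite K] {w w' : σ → ℕ} {q : MvPolynomial σ K}
    (hq : ∀ t : K, t ≠ 0 → ∀ z : σ → K,
      eval (fun i => t ^ w i * z i) q = eval (fun i => t ^ w' i * z i) q) :
    weightScale w q = weightScale w' q := by
  ext1 d
  refine MvPolynomial.funext fun z => ?_
  have hroots : (weightScale w q - weightScale w' q).map (eval z) = 0 := by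
    refine Polynomial.eq_zero_of_infinite_isRoot _
      ((Set.finite_singleton 0).infinite_compl.mono fun t (ht : t ≠ 0) => ?_)
    simp [Polynomial.IsRoot, Polynomial.map_sub, eval_map_weightScale, hq t ht]
  simpa [Polynomial.coeff_map, sub_eq_zero] using congrArg (Polynomial.coeff · d) hroots

theorem weight_eq_of_mem_support [IsDomain K] [Infinite K] {w w' : σ → ℕ} {q : MvPolynomial σ K}
    (hq : ∀ t : K, t ≠ 0 → ∀ z : σ → K,
      eval (fun i => t ^ w i * z i) q = eval (fun i => t ^ w' i * z i) q)
    {a : σ →₀ ℕ} (ha : a ∈ q.support) : Finsupp.weight w a = Finsupp.weight w' a := by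
  classical
  have := congrArg (coeff a ∘ (Polynomial.coeff · (Finsupp.weight w a)))
    (weightScale_eq_of_eval_eq hq)
  simp only [Function.comp_apply, coeff_weightScale, coeff_weightedHomogeneousComponent]
    at this
  by_contra hne
  rw [if_neg (Ne.symm hne)] at this
  exact mem_support_iff.mp ha this

end WeightScale

section SymmetricInvariants

variable {K ι : Type*} [Field K]

noncomputable def symmProd (i j : ι) : MvPolynomial (ι ⊕ ι) K :=
  X (Sum.inl i) * X (Sum.inr j) + X (Sum.inl j) * X (Sum.inr i)

noncomputable def altProd (i j : ι) : MvPolynomial (ι ⊕ ι) K :=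
  X (Sum.inl i) * X (Sum.inr j) - X (Sum.inl j) * X (Sum.inr i)

variable (K ι) in
noncomputable abbrev symmProdAlgebra : Subalgebra K (MvPolynomial (ι ⊕ ι) K) :=
  Algebra.adjoin K (Set.range fun p : ι × ι => symmProd p.1 p.2)

theorem symmProd_mem (i j : ι) : symmProd i j ∈ symmProdAlgebra K ι :=
  Algebra.subset_adjoin ⟨(i, j), rfl⟩

theorem altProd_mul_altProd_mem (i j a b : ι) :
    altProd i j * altProd a b ∈ symmProdAlgebra K ι := by
  have : altProd i j * altProd a b =
      symmProd i b * symmProd j a - symmProd i a * symmProd j b (K := K) := by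
    simp only [altProd, symmProd]; ring
  rw [this]
  exact sub_mem (mul_mem (symmProd_mem _ _) (symmProd_mem _ _))
    (mul_mem (symmProd_mem _ _) (symmProd_mem _ _))

noncomputable def leftMonomial (A : Multiset ι) : MvPolynomial (ι ⊕ ι) K :=
  (A.map fun i => X (Sum.inl i)).prod

noncomputable def rightMonomial (A : Multiset ι) : MvPolynomial (ι ⊕ ι) K :=
  (A.map fun i => X (Sum.inr i)).prod

/-- Peel off `u = xᵢyⱼ` (and `v = xⱼyᵢ`): since `2(uP + vQ) = (u + v)(P + Q) + (u - v)(P - Q)`,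
the symmetric parts need the alternating ones, and those need `altProd_mul_altProd_mem`. -/
theorem leftMonomial_mul_rightMonomial_mem (h2 : (2 : K) ≠ 0) (A : Multiset ι) :
    ∀ B : Multiset ι, Multiset.card A = Multiset.card B →
      leftMonomial A * rightMonomial B + leftMonomial B * rightMonomial A
          ∈ symmProdAlgebra K ι ∧
        ∀ a b : ι, altProd a b * (leftMonomial A * rightMonomial B
          - leftMonomial B * rightMonomial A) ∈ symmProdAlgebra K ι := by
  induction A using Multiset.induction_on with
  | empty =>
    intro B hB
    rw [Multiset.card_zero, eq_comm, Multiset.card_eq_zero] at hB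
    subst hB
    simp only [leftMonomial, rightMonomial, Multiset.map_zero, Multiset.prod_zero, mul_one,
      sub_self, mul_zero]
    exact ⟨add_mem (one_mem _) (one_mem _), fun _ _ => zero_mem _⟩
  | cons i A ih =>
    intro B hB
    obtain ⟨j, hj⟩ := Multiset.card_pos_iff_exists_mem.mp (by simp [← hB] : 0 < B.card)
    obtain ⟨B, rfl⟩ := Multiset.exists_cons_of_mem hj
    obtain ⟨hsymm, halt⟩ := ih B (by simpa using hB)
    have half : (C (2⁻¹ : K) : MvPolynomial (ι ⊕ ι) K) * 2 = 1 := by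
      rw [← map_ofNat C 2, ← C_mul, inv_mul_cancel₀ h2, C_1]
    simp only [leftMonomial, rightMonomial, Multiset.map_cons, Multiset.prod_cons] at *
    set a₁ : MvPolynomial (ι ⊕ ι) K := (A.map fun i => X (Sum.inl i)).prod
    set a₂ : MvPolynomial (ι ⊕ ι) K := (A.map fun i => X (Sum.inr i)).prod
    set b₁ : MvPolynomial (ι ⊕ ι) K := (B.map fun i => X (Sum.inl i)).prod
    set b₂ : MvPolynomial (ι ⊕ ι) K := (B.map fun i => X (Sum.inr i)).prod
    constructor
    · have := Subalgebra.smul_mem _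
        (add_mem (mul_mem (symmProd_mem i j) hsymm) (halt i j)) (2 : K)⁻¹
      convert this using 1
      simp only [symmProd, altProd, Algebra.smul_def, algebraMap_eq]
      linear_combination (-(X (Sum.inl i) * X (Sum.inr j) * a₁ * b₂ +
        X (Sum.inl j) * X (Sum.inr i) * b₁ * a₂)) * half
    · intro a b
      have := Subalgebra.smul_mem _ (add_mem (mul_mem (symmProd_mem i j) (halt a b))
        (mul_mem (altProd_mul_altProd_mem a b i j) hsymm)) (2 : K)⁻¹
      convert this using 1
      simp only [symmProd, altProd, Algebra.smul_def, algebraMap_eq]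
      linear_combination (-(X (Sum.inl a) * X (Sum.inr b) - X (Sum.inl b) * X (Sum.inr a)) *
        (X (Sum.inl i) * X (Sum.inr j) * a₁ * b₂ - X (Sum.inl j) * X (Sum.inr i) * b₁ * a₂)) *
        half

theorem Multiset.exists_card_eq_sum_and_prod_map_eq {M : Type*} [CommMonoid M] [Fintype ι]
    (c : ι → ℕ) : ∃ A : Multiset ι, Multiset.card A = ∑ i, c i ∧
      ∀ f : ι → M, (A.map f).prod = ∏ i, f i ^ c i := by
  refine ⟨Finset.univ.val.bind fun i => Multiset.replicate (c i) i, by simp [Multiset.card_bind],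
    fun f => ?_⟩
  rw [Multiset.map_bind, Multiset.prod_bind]
  simp only [Multiset.map_replicate, Multiset.prod_replicate]
  rfl

theorem monomial_add_rename_swap_mem [Fintype ι] (h2 : (2 : K) ≠ 0) {a : ι ⊕ ι →₀ ℕ}
    (ha : ∑ i, a (Sum.inl i) = ∑ i, a (Sum.inr i)) :
    monomial a 1 + rename Sum.swap (monomial a 1) ∈ symmProdAlgebra K ι := by
  obtain ⟨A, hAcard, hA⟩ := Multiset.exists_card_eq_sum_and_prod_map_eq
    (M := MvPolynomial (ι ⊕ ι) K) fun i => a (Sum.inl i)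
  obtain ⟨B, hBcard, hB⟩ := Multiset.exists_card_eq_sum_and_prod_map_eq
    (M := MvPolynomial (ι ⊕ ι) K) fun i => a (Sum.inr i)
  have hmono : monomial a (1 : K) =
      (∏ i, X (Sum.inl i) ^ a (Sum.inl i)) * ∏ i, X (Sum.inr i) ^ a (Sum.inr i) := by
    rw [monomial_eq, C_1, one_mul, Finsupp.prod_fintype _ _ fun _ => pow_zero _,
      Fintype.prod_sum_type]
  have : monomial a 1 + rename Sum.swap (monomial a 1) =
      leftMonomial A * rightMonomial B + leftMonomial B * rightMonomial A (K := K) := by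
    simp [hmono, leftMonomial, rightMonomial, hA, hB, mul_comm]
  rw [this]
  exact (leftMonomial_mul_rightMonomial_mem h2 A B (hAcard.trans (ha.trans hBcard.symm))).1

end SymmetricInvariants

section Invariants

variable {K ι : Type*} [Field K] [Infinite K] [Fintype ι]

theorem sum_inl_eq_sum_inr_of_mem_support {q : MvPolynomial (ι ⊕ ι) K}
    (hq : ∀ t : K, t ≠ 0 → ∀ x y : ι → K,
      eval (Sum.elim (t • x) (t⁻¹ • y)) q = eval (Sum.elim x y) q)
    {a : ι ⊕ ι →₀ ℕ} (ha : a ∈ q.support) : ∑ i, a (Sum.inl i) = ∑ i, a (Sum.inr i) := by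
  have hscale : ∀ t : K, t ≠ 0 → ∀ z : ι ⊕ ι → K,
      eval (fun v => t ^ (Sum.elim 1 0 : ι ⊕ ι → ℕ) v * z v) q =
        eval (fun v => t ^ (Sum.elim 0 1 : ι ⊕ ι → ℕ) v * z v) q := by
    intro t ht z
    have hL : (fun v => t ^ (Sum.elim 1 0 : ι ⊕ ι → ℕ) v * z v) =
        Sum.elim (t • (z ∘ Sum.inl)) (t⁻¹ • t • (z ∘ Sum.inr)) := by
      ext (i | i) <;> simp [inv_smul_smul₀ ht]
    have hR : (fun v => t ^ (Sum.elim 0 1 : ι ⊕ ι → ℕ) v * z v) =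
        Sum.elim (z ∘ Sum.inl) (t • (z ∘ Sum.inr)) := by
      ext (i | i) <;> simp
    rw [hL, hR, hq t ht]
  have := weight_eq_of_mem_support hscale ha
  simpa [Finsupp.weight_apply, Finsupp.sum_fintype, Fintype.sum_sum_type] using this

omit [Fintype ι] in
theorem rename_swap_eq_self {q : MvPolynomial (ι ⊕ ι) K}
    (hq : ∀ x y : ι → K, eval (Sum.elim y x) q = eval (Sum.elim x y) q) :
    rename Sum.swap q = q := by
  refine MvPolynomial.funext fun z => ?_
  have hz : z ∘ Sum.swap = Sum.elim (z ∘ Sum.inr) (z ∘ Sum.inl) := by ext (i | i) <;> rfl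
  rw [eval_rename, hz, hq, Sum.elim_comp_inl_inr]

theorem mem_symmProdAlgebra_of_invariant (h2 : (2 : K) ≠ 0) {q : MvPolynomial (ι ⊕ ι) K}
    (hscale : ∀ t : K, t ≠ 0 → ∀ x y : ι → K,
      eval (Sum.elim (t • x) (t⁻¹ • y)) q = eval (Sum.elim x y) q)
    (hswap : ∀ x y : ι → K, eval (Sum.elim y x) q = eval (Sum.elim x y) q) :
    q ∈ symmProdAlgebra K ι := by
  have hdouble : (2 : K) • q =
      ∑ a ∈ q.support, coeff a q • (monomial a 1 + rename Sum.swap (monomial a 1)) := by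
    calc (2 : K) • q = q + rename Sum.swap q := by rw [two_smul, rename_swap_eq_self hswap]
      _ = ∑ a ∈ q.support,
            (monomial a (coeff a q) + rename Sum.swap (monomial a (coeff a q))) := by
        rw [Finset.sum_add_distrib, ← map_sum, ← q.as_sum]
      _ = _ := Finset.sum_congr rfl fun a _ => by
        rw [smul_add, smul_monomial, ← map_smul, smul_monomial, smul_eq_mul, mul_one]
  have : (2 : K) • q ∈ symmProdAlgebra K ι := by
    rw [hdouble]
    exact Subalgebra.sum_mem _ fun a ha => Subalgebra.smul_mem _
      (monomial_add_rename_swap_mem h2 (sum_inl_eq_sum_inr_of_mem_support hscale ha)) _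
  simpa [smul_smul, inv_mul_cancel₀ h2] using Subalgebra.smul_mem _ this (2 : K)⁻¹

theorem exists_eval_eq_eval_vecMulVec_add_vecMulVec (h2 : (2 : K) ≠ 0)
    {q : MvPolynomial (ι ⊕ ι) K}
    (hscale : ∀ t : K, t ≠ 0 → ∀ x y : ι → K,
      eval (Sum.elim (t • x) (t⁻¹ • y)) q = eval (Sum.elim x y) q)
    (hswap : ∀ x y : ι → K, eval (Sum.elim y x) q = eval (Sum.elim x y) q) :
    ∃ p : MvPolynomial (ι × ι) K, ∀ x y : ι → K,
      eval (Sum.elim x y) q = eval (fun v => (vecMulVec x y + vecMulVec y x) v.1 v.2) p := by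
  have hq := mem_symmProdAlgebra_of_invariant h2 hscale hswap
  rw [symmProdAlgebra, Algebra.adjoin_range_eq_range_aeval] at hq
  obtain ⟨p, rfl⟩ := hq
  refine ⟨p, fun x y => ?_⟩
  change eval₂Hom (RingHom.id K) _ (aeval _ p) = _
  rw [aeval_eq_bind₁, eval₂Hom_bind₁]
  simp [symmProd, vecMulVec_apply, mul_comm]

end Invariants

theorem MvPolynomial.exists_eval_entries_eq_eval_entries_mul {K l m n : Type*} [CommRing K]
    [Fintype m] (P : Matrix m n K) (p₀ : MvPolynomial (l × n) K) :
    ∃ p : MvPolynomial (l × m) K, ∀ M : Matrix l m K,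
      eval (fun v => M v.1 v.2) p = eval (fun v => (M * P) v.1 v.2) p₀ := by
  refine ⟨bind₁ (fun v => ∑ k, C (P k v.2) * X (v.1, k)) p₀, fun M => ?_⟩
  change eval₂Hom (RingHom.id K) _ (bind₁ _ p₀) = _
  rw [eval₂Hom_bind₁]
  simp [mul_apply, mul_comm]

theorem stmt_5_general (k : Type) [Field k] [IsAlgClosed k] (h2 : (2 : k) ≠ 0)
    (n : ℕ) :
    let J : Matrix (Fin n) (Fin n) k :=
      Matrix.of fun i j => if (i : ℕ) + (j : ℕ) + 1 = n then 1 else 0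
    let J' : Matrix (Fin n ⊕ Fin n) (Fin n ⊕ Fin n) k := Matrix.fromBlocks 0 J (-J) 0
    let m : ((Fin n ⊕ Fin n) → k) → ((Fin n ⊕ Fin n) → k) →
        Matrix (Fin n ⊕ Fin n) (Fin n ⊕ Fin n) k :=
      fun x y => (Matrix.vecMulVec x y + Matrix.vecMulVec y x) * J'
    let S₀ : Set (Matrix (Fin n ⊕ Fin n) (Fin n ⊕ Fin n) k) :=
      {A | Aᵀ * J' + J' * A = 0 ∧ A.rank ≤ 2}
    (∀ t : k, t ≠ 0 → ∀ x y : (Fin n ⊕ Fin n) → k, m (t • x) (t⁻¹ • y) = m x y) ∧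
    (∀ x y : (Fin n ⊕ Fin n) → k, m y x = m x y) ∧
    (∀ x y : (Fin n ⊕ Fin n) → k, m x y ∈ S₀) ∧
    (∀ A ∈ S₀, ∃ x y : (Fin n ⊕ Fin n) → k, m x y = A) ∧
    (∀ p q : MvPolynomial ((Fin n ⊕ Fin n) × (Fin n ⊕ Fin n)) k,
      (∀ x y : (Fin n ⊕ Fin n) → k,
        MvPolynomial.eval (fun v => m x y v.1 v.2) p
          = MvPolynomial.eval (fun v => m x y v.1 v.2) q) →
      ∀ A ∈ S₀, MvPolynomial.eval (fun v => A v.1 v.2) p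
          = MvPolynomial.eval (fun v => A v.1 v.2) q) ∧
    (∀ q₀ : MvPolynomial ((Fin n ⊕ Fin n) ⊕ (Fin n ⊕ Fin n)) k,
      (∀ t : k, t ≠ 0 → ∀ x y : (Fin n ⊕ Fin n) → k,
        MvPolynomial.eval (Sum.elim (t • x) (t⁻¹ • y)) q₀
          = MvPolynomial.eval (Sum.elim x y) q₀) →
      (∀ x y : (Fin n ⊕ Fin n) → k,
        MvPolynomial.eval (Sum.elim y x) q₀ = MvPolynomial.eval (Sum.elim x y) q₀) →
      ∃ p : MvPolynomial ((Fin n ⊕ Fin n) × (Fin n ⊕ Fin n)) k,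
        ∀ x y : (Fin n ⊕ Fin n) → k,
          MvPolynomial.eval (Sum.elim x y) q₀
            = MvPolynomial.eval (fun v => m x y v.1 v.2) p) := by
  intro J J' m S₀
  have hJT : J'ᵀ = -J' := fromBlocks_antidiag_transpose (antidiag_transpose k n)
  have hJJ : J' * J' = -1 := fromBlocks_antidiag_mul_self (antidiag_mul_self k n)
  have hmJ : ∀ x y, m x y * J' = -(vecMulVec x y + vecMulVec y x) := fun x y => by
    simp only [m, mul_assoc, hJJ, mul_neg, mul_one]
  have hsurj : ∀ A ∈ S₀, ∃ x y, m x y = A := by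
    rintro A ⟨hA, hrank⟩
    have hS : (A * -J').IsSymm := by
      simpa [mul_neg] using ((transpose_mul_add_mul_eq_zero_iff hJT hJJ).mp hA).neg
    obtain ⟨x, y, hxy⟩ :=
      hS.exists_eq_vecMulVec_add_vecMulVec h2 ((rank_mul_le_left _ _).trans hrank)
    exact ⟨x, y, by simp only [m, hxy, mul_assoc, neg_mul, mul_neg, hJJ, neg_neg, mul_one]⟩
  refine ⟨fun t ht x y => ?_, fun x y => by simp only [m, add_comm], fun x y => ⟨?_, ?_⟩, hsurj,
    fun p q hpq A hA => ?_, fun q₀ hscale hswap => ?_⟩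
  · simp only [m, smul_vecMulVec, vecMulVec_smul, smul_smul, mul_inv_cancel₀ ht,
      inv_mul_cancel₀ ht, one_smul]
  · rw [transpose_mul_add_mul_eq_zero_iff hJT hJJ, hmJ]
    exact (isSymm_vecMulVec_add_vecMulVec x y).neg
  · exact (rank_mul_le_left _ _).trans (rank_vecMulVec_add_vecMulVec_le x y)
  · obtain ⟨x, y, rfl⟩ := hsurj A hA
    exact hpq x y
  · obtain ⟨p₀, hp₀⟩ := exists_eval_eq_eval_vecMulVec_add_vecMulVec h2 hscale hswap
    obtain ⟨p, hp⟩ := exists_eval_entries_eq_eval_entries_mul (-J') p₀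
    exact ⟨p, fun x y => by rw [hp₀, hp, mul_neg, hmJ, neg_neg]⟩

/-- Let `Γ` be the group generated by `t·(x,y) = (tx, t⁻¹y)` and the swap `(x,y) ↦ (y,x)` on
`V × V`, `V = k^{2n}` symplectic. Then `(V × V)/Γ ≅ S₀`, the determinantal variety of
rank ≤ 2 matrices in `sp_{2n}`, via `(x,y) ↦ (xyᵀ + yxᵀ)J'`. -/
theorem stmt_5 (k : Type) [Field k] [IsAlgClosed k] (h2 : (2 : k) ≠ 0)
    (n : ℕ) (hn : 0 < n) :
    let J : Matrix (Fin n) (Fin n) k :=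
      Matrix.of fun i j => if (i : ℕ) + (j : ℕ) + 1 = n then 1 else 0
    let J' : Matrix (Fin n ⊕ Fin n) (Fin n ⊕ Fin n) k := Matrix.fromBlocks 0 J (-J) 0
    let m : ((Fin n ⊕ Fin n) → k) → ((Fin n ⊕ Fin n) → k) →
        Matrix (Fin n ⊕ Fin n) (Fin n ⊕ Fin n) k :=
      fun x y => (Matrix.vecMulVec x y + Matrix.vecMulVec y x) * J'
    let S₀ : Set (Matrix (Fin n ⊕ Fin n) (Fin n ⊕ Fin n) k) :=
      {A | Aᵀ * J' + J' * A = 0 ∧ A.rank ≤ 2}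
    (∀ t : k, t ≠ 0 → ∀ x y : (Fin n ⊕ Fin n) → k, m (t • x) (t⁻¹ • y) = m x y) ∧
    (∀ x y : (Fin n ⊕ Fin n) → k, m y x = m x y) ∧
    (∀ x y : (Fin n ⊕ Fin n) → k, m x y ∈ S₀) ∧
    (∀ A ∈ S₀, ∃ x y : (Fin n ⊕ Fin n) → k, m x y = A) ∧
    (∀ p q : MvPolynomial ((Fin n ⊕ Fin n) × (Fin n ⊕ Fin n)) k,
      (∀ x y : (Fin n ⊕ Fin n) → k,
        MvPolynomial.eval (fun v => m x y v.1 v.2) p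
          = MvPolynomial.eval (fun v => m x y v.1 v.2) q) →
      ∀ A ∈ S₀, MvPolynomial.eval (fun v => A v.1 v.2) p
          = MvPolynomial.eval (fun v => A v.1 v.2) q) ∧
    (∀ q₀ : MvPolynomial ((Fin n ⊕ Fin n) ⊕ (Fin n ⊕ Fin n)) k,
      (∀ t : k, t ≠ 0 → ∀ x y : (Fin n ⊕ Fin n) → k,
        MvPolynomial.eval (Sum.elim (t • x) (t⁻¹ • y)) q₀
          = MvPolynomial.eval (Sum.elim x y) q₀) →
      (∀ x y : (Fin n ⊕ Fin n) → k,
        MvPolynomial.eval (Sum.elim y x) q₀ = MvPolynomial.eval (Sum.elim x y) q₀) →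
      ∃ p : MvPolynomial ((Fin n ⊕ Fin n) × (Fin n ⊕ Fin n)) k,
        ∀ x y : (Fin n ⊕ Fin n) → k,
          MvPolynomial.eval (Sum.elim x y) q₀
            = MvPolynomial.eval (fun v => m x y v.1 v.2) p) :=
  stmt_5_general k h2 n
end

section
/- Let k be a field with char k ≠ 2,3, let U = k³ be the permutation representation of S₃, and let W = U ⊕ U with the diagonal S₃-action. Then the invariant ring k[W]^{S₃} is generated by the polarizations of the elementary symmetric polynomials e₁, e₂, e₃, i.e., by the coefficients of the monomials t₁^{i}t₂^{j} in e_m(t₁u + t₂v) for m = 1,2,3, where u, v are the two coordinate vectors in U. -/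
open MvPolynomial

noncomputable def polE (k : Type) [Field k] (a b : ℕ) : MvPolynomial (Fin 3 ⊕ Fin 3) k :=
  ∑ A ∈ Finset.powersetCard (a + b) (Finset.univ : Finset (Fin 3)),
    ∑ B ∈ Finset.powersetCard a A,
      (∏ i ∈ B, X (Sum.inl i)) * ∏ i ∈ A \ B, X (Sum.inr i)

lemma polE_10 (k : Type) [Field k] : polE k 1 0 = X (Sum.inl 0) + X (Sum.inl 1) + X (Sum.inl 2) := by
  unfold polE
  rw [show Finset.powersetCard (1+0) (Finset.univ : Finset (Fin 3)) = {{0},{1},{2}} from by decide]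
  rw [Finset.sum_insert (by decide), Finset.sum_insert (by decide), Finset.sum_singleton]
  rw [show Finset.powersetCard 1 ({0} : Finset (Fin 3)) = {{0}} from by decide]
  rw [Finset.sum_singleton]
  rw [show Finset.powersetCard 1 ({1} : Finset (Fin 3)) = {{1}} from by decide]
  rw [Finset.sum_singleton]
  rw [show Finset.powersetCard 1 ({2} : Finset (Fin 3)) = {{2}} from by decide]
  rw [Finset.sum_singleton]
  rw [show ({0} : Finset (Fin 3)) \ {0} = {} from by decide,
      show ({1} : Finset (Fin 3)) \ {1} = {} from by decide,
      show ({2} : Finset (Fin 3)) \ {2} = {} from by decide]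
  simp (config := { decide := true }) only [Finset.prod_insert, Finset.prod_singleton,
    Finset.prod_empty, Finset.mem_insert, Finset.mem_singleton]
  ring

lemma polE_01 (k : Type) [Field k] : polE k 0 1 = X (Sum.inr 0) + X (Sum.inr 1) + X (Sum.inr 2) := by
  unfold polE
  rw [show Finset.powersetCard (0+1) (Finset.univ : Finset (Fin 3)) = {{0},{1},{2}} from by decide]
  rw [Finset.sum_insert (by decide), Finset.sum_insert (by decide), Finset.sum_singleton]
  rw [show Finset.powersetCard 0 ({0} : Finset (Fin 3)) = {{}} from by decide]
  rw [Finset.sum_singleton]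
  rw [show Finset.powersetCard 0 ({1} : Finset (Fin 3)) = {{}} from by decide]
  rw [Finset.sum_singleton]
  rw [show Finset.powersetCard 0 ({2} : Finset (Fin 3)) = {{}} from by decide]
  rw [Finset.sum_singleton]
  rw [show ({0} : Finset (Fin 3)) \ {} = {0} from by decide,
      show ({1} : Finset (Fin 3)) \ {} = {1} from by decide,
      show ({2} : Finset (Fin 3)) \ {} = {2} from by decide]
  simp (config := { decide := true }) only [Finset.prod_insert, Finset.prod_singleton,
    Finset.prod_empty, Finset.mem_insert, Finset.mem_singleton]
  ring

lemma polE_20 (k : Type) [Field k] : polE k 2 0 = X (Sum.inl 0) * X (Sum.inl 1) + X (Sum.inl 0) * X (Sum.inl 2) + X (Sum.inl 1) * X (Sum.inl 2) := by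
  unfold polE
  rw [show Finset.powersetCard (2+0) (Finset.univ : Finset (Fin 3)) = {{0,1},{0,2},{1,2}} from by decide]
  rw [Finset.sum_insert (by decide), Finset.sum_insert (by decide), Finset.sum_singleton]
  rw [show Finset.powersetCard 2 ({0,1} : Finset (Fin 3)) = {{0,1}} from by decide]
  rw [Finset.sum_singleton]
  rw [show Finset.powersetCard 2 ({0,2} : Finset (Fin 3)) = {{0,2}} from by decide]
  rw [Finset.sum_singleton]
  rw [show Finset.powersetCard 2 ({1,2} : Finset (Fin 3)) = {{1,2}} from by decide]
  rw [Finset.sum_singleton]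
  rw [show ({0,1} : Finset (Fin 3)) \ {0,1} = {} from by decide,
      show ({0,2} : Finset (Fin 3)) \ {0,2} = {} from by decide,
      show ({1,2} : Finset (Fin 3)) \ {1,2} = {} from by decide]
  simp (config := { decide := true }) only [Finset.prod_insert, Finset.prod_singleton,
    Finset.prod_empty, Finset.mem_insert, Finset.mem_singleton]
  ring

lemma polE_11 (k : Type) [Field k] : polE k 1 1 = X (Sum.inl 0) * X (Sum.inr 1) + X (Sum.inl 1) * X (Sum.inr 0) + X (Sum.inl 0) * X (Sum.inr 2) + X (Sum.inl 2) * X (Sum.inr 0) + X (Sum.inl 1) * X (Sum.inr 2) + X (Sum.inl 2) * X (Sum.inr 1) := by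
  unfold polE
  rw [show Finset.powersetCard (1+1) (Finset.univ : Finset (Fin 3)) = {{0,1},{0,2},{1,2}} from by decide]
  rw [Finset.sum_insert (by decide), Finset.sum_insert (by decide), Finset.sum_singleton]
  rw [show Finset.powersetCard 1 ({0,1} : Finset (Fin 3)) = {{0},{1}} from by decide]
  rw [Finset.sum_insert (by decide), Finset.sum_singleton]
  rw [show Finset.powersetCard 1 ({0,2} : Finset (Fin 3)) = {{0},{2}} from by decide]
  rw [Finset.sum_insert (by decide), Finset.sum_singleton]
  rw [show Finset.powersetCard 1 ({1,2} : Finset (Fin 3)) = {{1},{2}} from by decide]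
  rw [Finset.sum_insert (by decide), Finset.sum_singleton]
  rw [show ({0,1} : Finset (Fin 3)) \ {0} = {1} from by decide,
      show ({0,1} : Finset (Fin 3)) \ {1} = {0} from by decide,
      show ({0,2} : Finset (Fin 3)) \ {0} = {2} from by decide,
      show ({0,2} : Finset (Fin 3)) \ {2} = {0} from by decide,
      show ({1,2} : Finset (Fin 3)) \ {1} = {2} from by decide,
      show ({1,2} : Finset (Fin 3)) \ {2} = {1} from by decide]
  simp (config := { decide := true }) only [Finset.prod_insert, Finset.prod_singleton,
    Finset.prod_empty, Finset.mem_insert, Finset.mem_singleton]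
  ring

lemma polE_02 (k : Type) [Field k] : polE k 0 2 = X (Sum.inr 0) * X (Sum.inr 1) + X (Sum.inr 0) * X (Sum.inr 2) + X (Sum.inr 1) * X (Sum.inr 2) := by
  unfold polE
  rw [show Finset.powersetCard (0+2) (Finset.univ : Finset (Fin 3)) = {{0,1},{0,2},{1,2}} from by decide]
  rw [Finset.sum_insert (by decide), Finset.sum_insert (by decide), Finset.sum_singleton]
  rw [show Finset.powersetCard 0 ({0,1} : Finset (Fin 3)) = {{}} from by decide]
  rw [Finset.sum_singleton]
  rw [show Finset.powersetCard 0 ({0,2} : Finset (Fin 3)) = {{}} from by decide]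
  rw [Finset.sum_singleton]
  rw [show Finset.powersetCard 0 ({1,2} : Finset (Fin 3)) = {{}} from by decide]
  rw [Finset.sum_singleton]
  rw [show ({0,1} : Finset (Fin 3)) \ {} = {0,1} from by decide,
      show ({0,2} : Finset (Fin 3)) \ {} = {0,2} from by decide,
      show ({1,2} : Finset (Fin 3)) \ {} = {1,2} from by decide]
  simp (config := { decide := true }) only [Finset.prod_insert, Finset.prod_singleton,
    Finset.prod_empty, Finset.mem_insert, Finset.mem_singleton]
  ring

lemma polE_30 (k : Type) [Field k] : polE k 3 0 = X (Sum.inl 0) * X (Sum.inl 1) * X (Sum.inl 2) := by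
  unfold polE
  rw [show Finset.powersetCard (3+0) (Finset.univ : Finset (Fin 3)) = {{0,1,2}} from by decide]
  rw [Finset.sum_singleton]
  rw [show Finset.powersetCard 3 ({0,1,2} : Finset (Fin 3)) = {{0,1,2}} from by decide]
  rw [Finset.sum_singleton]
  rw [show ({0,1,2} : Finset (Fin 3)) \ {0,1,2} = {} from by decide]
  simp (config := { decide := true }) only [Finset.prod_insert, Finset.prod_singleton,
    Finset.prod_empty, Finset.mem_insert, Finset.mem_singleton]
  ring

lemma polE_21 (k : Type) [Field k] : polE k 2 1 = X (Sum.inl 0) * X (Sum.inl 1) * X (Sum.inr 2) + X (Sum.inl 0) * X (Sum.inl 2) * X (Sum.inr 1) + X (Sum.inl 1) * X (Sum.inl 2) * X (Sum.inr 0) := by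
  unfold polE
  rw [show Finset.powersetCard (2+1) (Finset.univ : Finset (Fin 3)) = {{0,1,2}} from by decide]
  rw [Finset.sum_singleton]
  rw [show Finset.powersetCard 2 ({0,1,2} : Finset (Fin 3)) = {{0,1},{0,2},{1,2}} from by decide]
  rw [Finset.sum_insert (by decide), Finset.sum_insert (by decide), Finset.sum_singleton]
  rw [show ({0,1,2} : Finset (Fin 3)) \ {0,1} = {2} from by decide,
      show ({0,1,2} : Finset (Fin 3)) \ {0,2} = {1} from by decide,
      show ({0,1,2} : Finset (Fin 3)) \ {1,2} = {0} from by decide]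
  simp (config := { decide := true }) only [Finset.prod_insert, Finset.prod_singleton,
    Finset.prod_empty, Finset.mem_insert, Finset.mem_singleton]
  ring

lemma polE_12 (k : Type) [Field k] : polE k 1 2 = X (Sum.inl 0) * X (Sum.inr 1) * X (Sum.inr 2) + X (Sum.inl 1) * X (Sum.inr 0) * X (Sum.inr 2) + X (Sum.inl 2) * X (Sum.inr 0) * X (Sum.inr 1) := by
  unfold polE
  rw [show Finset.powersetCard (1+2) (Finset.univ : Finset (Fin 3)) = {{0,1,2}} from by decide]
  rw [Finset.sum_singleton]
  rw [show Finset.powersetCard 1 ({0,1,2} : Finset (Fin 3)) = {{0},{1},{2}} from by decide]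
  rw [Finset.sum_insert (by decide), Finset.sum_insert (by decide), Finset.sum_singleton]
  rw [show ({0,1,2} : Finset (Fin 3)) \ {0} = {1,2} from by decide,
      show ({0,1,2} : Finset (Fin 3)) \ {1} = {0,2} from by decide,
      show ({0,1,2} : Finset (Fin 3)) \ {2} = {0,1} from by decide]
  simp (config := { decide := true }) only [Finset.prod_insert, Finset.prod_singleton,
    Finset.prod_empty, Finset.mem_insert, Finset.mem_singleton]
  ring

lemma polE_03 (k : Type) [Field k] : polE k 0 3 = X (Sum.inr 0) * X (Sum.inr 1) * X (Sum.inr 2) := by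
  unfold polE
  rw [show Finset.powersetCard (0+3) (Finset.univ : Finset (Fin 3)) = {{0,1,2}} from by decide]
  rw [Finset.sum_singleton]
  rw [show Finset.powersetCard 0 ({0,1,2} : Finset (Fin 3)) = {{}} from by decide]
  rw [Finset.sum_singleton]
  rw [show ({0,1,2} : Finset (Fin 3)) \ {} = {0,1,2} from by decide]
  simp (config := { decide := true }) only [Finset.prod_insert, Finset.prod_singleton,
    Finset.prod_empty, Finset.mem_insert, Finset.mem_singleton]
  ring

noncomputable def Pq (k : Type) [Field k] (r s : ℕ) : MvPolynomial (Fin 3 ⊕ Fin 3) k :=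
  ∑ i : Fin 3, X (Sum.inl i) ^ r * X (Sum.inr i) ^ s

lemma PqI_00 (k : Type) [Field k] : Pq k 0 0 = 3 := by
  simp only [Pq, Fin.sum_univ_three, pow_zero, one_mul]
  norm_num

lemma PqI_10 (k : Type) [Field k] : Pq k 1 0 = polE k 1 0 := by
  simp only [Pq, Fin.sum_univ_three, polE_10, polE_01, polE_20, polE_11, polE_02, polE_30, polE_21, polE_12, polE_03]
  ring

lemma PqI_01 (k : Type) [Field k] : Pq k 0 1 = polE k 0 1 := by
  simp only [Pq, Fin.sum_univ_three, polE_10, polE_01, polE_20, polE_11, polE_02, polE_30, polE_21, polE_12, polE_03]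
  ring

lemma PqI_20 (k : Type) [Field k] : Pq k 2 0 = polE k 1 0 * polE k 1 0 - 2 * polE k 2 0 := by
  simp only [Pq, Fin.sum_univ_three, polE_10, polE_01, polE_20, polE_11, polE_02, polE_30, polE_21, polE_12, polE_03]
  ring

lemma PqI_11 (k : Type) [Field k] : Pq k 1 1 = polE k 0 1 * polE k 1 0 - polE k 1 1 := by
  simp only [Pq, Fin.sum_univ_three, polE_10, polE_01, polE_20, polE_11, polE_02, polE_30, polE_21, polE_12, polE_03]
  ring

lemma PqI_02 (k : Type) [Field k] : Pq k 0 2 = polE k 0 1 * polE k 0 1 - 2 * polE k 0 2 := by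
  simp only [Pq, Fin.sum_univ_three, polE_10, polE_01, polE_20, polE_11, polE_02, polE_30, polE_21, polE_12, polE_03]
  ring

lemma PqI_21 (k : Type) [Field k] : Pq k 2 1 = polE k 0 1 * polE k 1 0 * polE k 1 0 - polE k 0 1 * polE k 2 0 - polE k 1 0 * polE k 1 1 + polE k 2 1 := by
  simp only [Pq, Fin.sum_univ_three, polE_10, polE_01, polE_20, polE_11, polE_02, polE_30, polE_21, polE_12, polE_03]
  ring

lemma PqI_12 (k : Type) [Field k] : Pq k 1 2 = polE k 0 1 * polE k 0 1 * polE k 1 0 - polE k 0 1 * polE k 1 1 - polE k 0 2 * polE k 1 0 + polE k 1 2 := by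
  simp only [Pq, Fin.sum_univ_three, polE_10, polE_01, polE_20, polE_11, polE_02, polE_30, polE_21, polE_12, polE_03]
  ring

lemma PqI_22 (k : Type) [Field k] : 3 * Pq k 2 2 = 3 * polE k 0 1 * polE k 0 1 * polE k 1 0 * polE k 1 0 - 2 * polE k 0 1 * polE k 0 1 * polE k 2 0 - 4 * polE k 0 1 * polE k 1 0 * polE k 1 1 + 2 * polE k 0 1 * polE k 2 1 - 2 * polE k 0 2 * polE k 1 0 * polE k 1 0 + 2 * polE k 0 2 * polE k 2 0 + 2 * polE k 1 0 * polE k 1 2 + polE k 1 1 * polE k 1 1 := by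
  simp only [Pq, Fin.sum_univ_three, polE_10, polE_01, polE_20, polE_11, polE_02, polE_30, polE_21, polE_12, polE_03]
  ring

-- recursion in x
lemma Pq_rec_x (k : Type) [Field k] (r s : ℕ) :
    Pq k (r+3) s = polE k 1 0 * Pq k (r+2) s - polE k 2 0 * Pq k (r+1) s
      + polE k 3 0 * Pq k r s := by
  simp only [Pq, Fin.sum_univ_three, polE_10, polE_20, polE_30]
  ring

-- recursion in y
lemma Pq_rec_y (k : Type) [Field k] (r s : ℕ) :
    Pq k r (s+3) = polE k 0 1 * Pq k r (s+2) - polE k 0 2 * Pq k r (s+1)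
      + polE k 0 3 * Pq k r s := by
  simp only [Pq, Fin.sum_univ_three, polE_01, polE_02, polE_03]
  ring

noncomputable abbrev Bsub (k : Type) [Field k] : Subalgebra k (MvPolynomial (Fin 3 ⊕ Fin 3) k) :=
  Algebra.adjoin k {q | ∃ a b : ℕ, 1 ≤ a + b ∧ a + b ≤ 3 ∧ q = polE k a b}

lemma polE_mem (k : Type) [Field k] {a b : ℕ} (h1 : 1 ≤ a + b) (h2 : a + b ≤ 3) :
    polE k a b ∈ Bsub k :=
  Algebra.subset_adjoin ⟨a, b, h1, h2, rfl⟩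

lemma C_mem (k : Type) [Field k] (c : k) : (C c : MvPolynomial (Fin 3 ⊕ Fin 3) k) ∈ Bsub k := by
  rw [← MvPolynomial.algebraMap_eq]
  exact Subalgebra.algebraMap_mem _ c

lemma nat_mem (k : Type) [Field k] (n : ℕ) [n.AtLeastTwo] :
    (OfNat.ofNat n : MvPolynomial (Fin 3 ⊕ Fin 3) k) ∈ Bsub k := by
  have : ((n : ℕ) : MvPolynomial (Fin 3 ⊕ Fin 3) k) ∈ Bsub k := Subalgebra.natCast_mem _ n
  simpa using this

lemma Qmem (k : Type) [Field k] (h3 : (3 : k) ≠ 0) (r s : ℕ) : Pq k r s ∈ Bsub k := by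
  suffices h : ∀ n r s : ℕ, r + s ≤ n → Pq k r s ∈ Bsub k from h (r + s) r s le_rfl
  intro n
  induction n with
  | zero =>
    intro r s h
    obtain ⟨rfl, rfl⟩ : r = 0 ∧ s = 0 := by omega
    rw [PqI_00]
    exact nat_mem k 3
  | succ n ih =>
    intro r s h
    rcases Nat.lt_or_ge r 3 with hr | hr
    · rcases Nat.lt_or_ge s 3 with hs | hs
      · interval_cases r <;> interval_cases s
        · rw [PqI_00]; exact nat_mem k 3
        · rw [PqI_01]; exact polE_mem k (by norm_num) (by norm_num)
        · rw [PqI_02]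
          exact sub_mem (mul_mem (polE_mem k (by norm_num) (by norm_num))
            (polE_mem k (by norm_num) (by norm_num)))
            (mul_mem (nat_mem k 2) (polE_mem k (by norm_num) (by norm_num)))
        · rw [PqI_10]; exact polE_mem k (by norm_num) (by norm_num)
        · rw [PqI_11]
          exact sub_mem (mul_mem (polE_mem k (by norm_num) (by norm_num))
            (polE_mem k (by norm_num) (by norm_num)))
            (polE_mem k (by norm_num) (by norm_num))
        · rw [PqI_12]
          have p01 := polE_mem k (a := 0) (b := 1) (by norm_num) (by norm_num)
          have p10 := polE_mem k (a := 1) (b := 0) (by norm_num) (by norm_num)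
          have p11 := polE_mem k (a := 1) (b := 1) (by norm_num) (by norm_num)
          have p02 := polE_mem k (a := 0) (b := 2) (by norm_num) (by norm_num)
          have p12 := polE_mem k (a := 1) (b := 2) (by norm_num) (by norm_num)
          exact add_mem (sub_mem (sub_mem (mul_mem (mul_mem p01 p01) p10)
            (mul_mem p01 p11)) (mul_mem p02 p10)) p12
        · rw [PqI_20]
          exact sub_mem (mul_mem (polE_mem k (by norm_num) (by norm_num))
            (polE_mem k (by norm_num) (by norm_num)))
            (mul_mem (nat_mem k 2) (polE_mem k (by norm_num) (by norm_num)))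
        · rw [PqI_21]
          have p01 := polE_mem k (a := 0) (b := 1) (by norm_num) (by norm_num)
          have p10 := polE_mem k (a := 1) (b := 0) (by norm_num) (by norm_num)
          have p11 := polE_mem k (a := 1) (b := 1) (by norm_num) (by norm_num)
          have p20 := polE_mem k (a := 2) (b := 0) (by norm_num) (by norm_num)
          have p21 := polE_mem k (a := 2) (b := 1) (by norm_num) (by norm_num)
          exact add_mem (sub_mem (sub_mem (mul_mem (mul_mem p01 p10) p10)
            (mul_mem p01 p20)) (mul_mem p10 p11)) p21
        · -- (2,2) case
          have key : (3 : MvPolynomial (Fin 3 ⊕ Fin 3) k) * Pq k 2 2 ∈ Bsub k := by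
            rw [PqI_22]
            have p01 := polE_mem k (a := 0) (b := 1) (by norm_num) (by norm_num)
            have p10 := polE_mem k (a := 1) (b := 0) (by norm_num) (by norm_num)
            have p11 := polE_mem k (a := 1) (b := 1) (by norm_num) (by norm_num)
            have p20 := polE_mem k (a := 2) (b := 0) (by norm_num) (by norm_num)
            have p02 := polE_mem k (a := 0) (b := 2) (by norm_num) (by norm_num)
            have p21 := polE_mem k (a := 2) (b := 1) (by norm_num) (by norm_num)
            have p12 := polE_mem k (a := 1) (b := 2) (by norm_num) (by norm_num)
            have h2' := nat_mem k (n := 2)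
            have h3' := nat_mem k (n := 3)
            have h4' := nat_mem k (n := 4)
            exact add_mem (add_mem (add_mem (sub_mem (add_mem (sub_mem (sub_mem
              (mul_mem (mul_mem (mul_mem (mul_mem h3' p01) p01) p10) p10)
              (mul_mem (mul_mem (mul_mem h2' p01) p01) p20))
              (mul_mem (mul_mem (mul_mem h4' p01) p10) p11))
              (mul_mem (mul_mem h2' p01) p21))
              (mul_mem (mul_mem (mul_mem h2' p02) p10) p10))
              (mul_mem (mul_mem h2' p02) p20))
              (mul_mem (mul_mem h2' p10) p12))
              (mul_mem p11 p11)
          have h3C : (3 : MvPolynomial (Fin 3 ⊕ Fin 3) k) = C (3 : k) := (map_ofNat C 3).symm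
          have : Pq k 2 2 = C ((3 : k)⁻¹) * ((3 : MvPolynomial (Fin 3 ⊕ Fin 3) k) * Pq k 2 2) := by
            rw [h3C, ← mul_assoc, ← C_mul, inv_mul_cancel₀ h3, C_1, one_mul]
          rw [this]
          exact mul_mem (C_mem k _) key
      · obtain ⟨s', rfl⟩ : ∃ s', s = s' + 3 := ⟨s - 3, by omega⟩
        rw [Pq_rec_y]
        exact add_mem (sub_mem
          (mul_mem (polE_mem k (by norm_num) (by norm_num)) (ih r (s' + 2) (by omega)))
          (mul_mem (polE_mem k (by norm_num) (by norm_num)) (ih r (s' + 1) (by omega))))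
          (mul_mem (polE_mem k (by norm_num) (by norm_num)) (ih r s' (by omega)))
    · obtain ⟨r', rfl⟩ : ∃ r', r = r' + 3 := ⟨r - 3, by omega⟩
      rw [Pq_rec_x]
      exact add_mem (sub_mem
        (mul_mem (polE_mem k (by norm_num) (by norm_num)) (ih (r' + 2) s (by omega)))
        (mul_mem (polE_mem k (by norm_num) (by norm_num)) (ih (r' + 1) s (by omega))))
        (mul_mem (polE_mem k (by norm_num) (by norm_num)) (ih r' s (by omega)))

lemma mono_eq (k : Type) [Field k] (d : (Fin 3 ⊕ Fin 3) →₀ ℕ) :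
    (monomial d 1 : MvPolynomial (Fin 3 ⊕ Fin 3) k)
      = ∏ j : Fin 3, (X (Sum.inl j) ^ d (Sum.inl j) * X (Sum.inr j) ^ d (Sum.inr j)) := by
  rw [monomial_eq, C_1, one_mul]
  rw [Finsupp.prod_fintype _ _ (fun i => pow_zero _)]
  rw [Fintype.prod_sum_type]
  rw [← Finset.prod_mul_distrib]

lemma rename_mono (k : Type) [Field k] (σ : Equiv.Perm (Fin 3)) (d : (Fin 3 ⊕ Fin 3) →₀ ℕ) :
    rename (Sum.map σ σ) (monomial d 1 : MvPolynomial (Fin 3 ⊕ Fin 3) k)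
      = ∏ j : Fin 3, (X (Sum.inl j) ^ d (Sum.inl (σ⁻¹ j)) * X (Sum.inr j) ^ d (Sum.inr (σ⁻¹ j))) := by
  rw [rename_monomial, mono_eq]
  have hmap : ∀ c : Fin 3 ⊕ Fin 3, Finsupp.mapDomain (Sum.map σ σ) d c
      = d ((Equiv.sumCongr σ σ).symm c) := fun c =>
    Finsupp.mapDomain_equiv_apply (f := Equiv.sumCongr σ σ) d c
  refine Finset.prod_congr rfl fun j _ => ?_
  rw [hmap, hmap]
  rfl

lemma Tid (k : Type) [Field k] (d : (Fin 3 ⊕ Fin 3) →₀ ℕ) :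
    (∑ σ : Equiv.Perm (Fin 3), ∏ j : Fin 3,
        (X (Sum.inl j) ^ d (Sum.inl (σ j)) * X (Sum.inr j) ^ d (Sum.inr (σ j))
          : MvPolynomial (Fin 3 ⊕ Fin 3) k))
    = Pq k (d (Sum.inl 0)) (d (Sum.inr 0)) * Pq k (d (Sum.inl 1)) (d (Sum.inr 1))
        * Pq k (d (Sum.inl 2)) (d (Sum.inr 2))
      - Pq k (d (Sum.inl 0) + d (Sum.inl 1)) (d (Sum.inr 0) + d (Sum.inr 1))
          * Pq k (d (Sum.inl 2)) (d (Sum.inr 2))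
      - Pq k (d (Sum.inl 0) + d (Sum.inl 2)) (d (Sum.inr 0) + d (Sum.inr 2))
          * Pq k (d (Sum.inl 1)) (d (Sum.inr 1))
      - Pq k (d (Sum.inl 1) + d (Sum.inl 2)) (d (Sum.inr 1) + d (Sum.inr 2))
          * Pq k (d (Sum.inl 0)) (d (Sum.inr 0))
      + 2 * Pq k (d (Sum.inl 0) + d (Sum.inl 1) + d (Sum.inl 2))
              (d (Sum.inr 0) + d (Sum.inr 1) + d (Sum.inr 2)) := by
  rw [show (Finset.univ : Finset (Equiv.Perm (Fin 3))) =
      {1, Equiv.swap 0 1, Equiv.swap 0 2, Equiv.swap 1 2,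
       Equiv.swap 0 1 * Equiv.swap 1 2, Equiv.swap 1 2 * Equiv.swap 0 1} from by decide]
  rw [Finset.sum_insert (by decide), Finset.sum_insert (by decide),
      Finset.sum_insert (by decide), Finset.sum_insert (by decide),
      Finset.sum_insert (by decide), Finset.sum_singleton]
  simp only [Pq, Fin.prod_univ_three, Fin.sum_univ_three,
    show ((1 : Equiv.Perm (Fin 3)) 0) = 0 from rfl,
    show ((1 : Equiv.Perm (Fin 3)) 1) = 1 from rfl,
    show ((1 : Equiv.Perm (Fin 3)) 2) = 2 from rfl,
    show (Equiv.swap (0:Fin 3) 1) 0 = 1 from by decide,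
    show (Equiv.swap (0:Fin 3) 1) 1 = 0 from by decide,
    show (Equiv.swap (0:Fin 3) 1) 2 = 2 from by decide,
    show (Equiv.swap (0:Fin 3) 2) 0 = 2 from by decide,
    show (Equiv.swap (0:Fin 3) 2) 1 = 1 from by decide,
    show (Equiv.swap (0:Fin 3) 2) 2 = 0 from by decide,
    show (Equiv.swap (1:Fin 3) 2) 0 = 0 from by decide,
    show (Equiv.swap (1:Fin 3) 2) 1 = 2 from by decide,
    show (Equiv.swap (1:Fin 3) 2) 2 = 1 from by decide,
    show ((Equiv.swap 0 1 * Equiv.swap 1 2 : Equiv.Perm (Fin 3))) 0 = 1 from by decide,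
    show ((Equiv.swap 0 1 * Equiv.swap 1 2 : Equiv.Perm (Fin 3))) 1 = 2 from by decide,
    show ((Equiv.swap 0 1 * Equiv.swap 1 2 : Equiv.Perm (Fin 3))) 2 = 0 from by decide,
    show ((Equiv.swap 1 2 * Equiv.swap 0 1 : Equiv.Perm (Fin 3))) 0 = 2 from by decide,
    show ((Equiv.swap 1 2 * Equiv.swap 0 1 : Equiv.Perm (Fin 3))) 1 = 0 from by decide,
    show ((Equiv.swap 1 2 * Equiv.swap 0 1 : Equiv.Perm (Fin 3))) 2 = 1 from by decide,
    pow_add]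
  ring

lemma Tsum_mem (k : Type) [Field k] (h3 : (3 : k) ≠ 0) (d : (Fin 3 ⊕ Fin 3) →₀ ℕ) :
    (∑ σ : Equiv.Perm (Fin 3),
      rename (Sum.map σ σ) (monomial d 1 : MvPolynomial (Fin 3 ⊕ Fin 3) k)) ∈ Bsub k := by
  simp only [rename_mono]
  rw [show (∑ σ : Equiv.Perm (Fin 3), ∏ j : Fin 3,
        (X (Sum.inl j) ^ d (Sum.inl (σ⁻¹ j)) * X (Sum.inr j) ^ d (Sum.inr (σ⁻¹ j))
          : MvPolynomial (Fin 3 ⊕ Fin 3) k))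
      = ∑ σ : Equiv.Perm (Fin 3), ∏ j : Fin 3,
        (X (Sum.inl j) ^ d (Sum.inl (σ j)) * X (Sum.inr j) ^ d (Sum.inr (σ j))) from
    Fintype.sum_equiv (Equiv.inv (Equiv.Perm (Fin 3))) _ _ (fun σ => rfl)]
  rw [Tid]
  exact add_mem (sub_mem (sub_mem (sub_mem
    (mul_mem (mul_mem (Qmem k h3 _ _) (Qmem k h3 _ _)) (Qmem k h3 _ _))
    (mul_mem (Qmem k h3 _ _) (Qmem k h3 _ _)))
    (mul_mem (Qmem k h3 _ _) (Qmem k h3 _ _)))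
    (mul_mem (Qmem k h3 _ _) (Qmem k h3 _ _)))
    (mul_mem (nat_mem k 2) (Qmem k h3 _ _))

lemma polE_inv (k : Type) [Field k] (σ : Equiv.Perm (Fin 3)) (a b : ℕ)
    (h1 : 1 ≤ a + b) (h2 : a + b ≤ 3) :
    rename (Sum.map σ σ) (polE k a b) = polE k a b := by
  have hσ : σ ∈ ({1, Equiv.swap 0 1, Equiv.swap 0 2, Equiv.swap 1 2,
      Equiv.swap 0 1 * Equiv.swap 1 2, Equiv.swap 1 2 * Equiv.swap 0 1} :
      Finset (Equiv.Perm (Fin 3))) := by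
    rw [show ({1, Equiv.swap 0 1, Equiv.swap 0 2, Equiv.swap 1 2,
      Equiv.swap 0 1 * Equiv.swap 1 2, Equiv.swap 1 2 * Equiv.swap 0 1} :
      Finset (Equiv.Perm (Fin 3))) = Finset.univ from by decide]
    exact Finset.mem_univ σ
  simp only [Finset.mem_insert, Finset.mem_singleton] at hσ
  have ha : a ≤ 3 := by omega
  have hb : b ≤ 3 := by omega
  interval_cases a <;> interval_cases b <;> try omega
  all_goals (
    rcases hσ with rfl | rfl | rfl | rfl | rfl | rfl <;>
    · simp only [polE_10, polE_01, polE_20, polE_11, polE_02, polE_30, polE_21, polE_12,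
        polE_03, map_add, map_mul, rename_X, Sum.map_inl, Sum.map_inr,
        show ((1 : Equiv.Perm (Fin 3)) 0) = 0 from rfl,
        show ((1 : Equiv.Perm (Fin 3)) 1) = 1 from rfl,
        show ((1 : Equiv.Perm (Fin 3)) 2) = 2 from rfl,
        show (Equiv.swap (0:Fin 3) 1) 0 = 1 from by decide,
        show (Equiv.swap (0:Fin 3) 1) 1 = 0 from by decide,
        show (Equiv.swap (0:Fin 3) 1) 2 = 2 from by decide,
        show (Equiv.swap (0:Fin 3) 2) 0 = 2 from by decide,
        show (Equiv.swap (0:Fin 3) 2) 1 = 1 from by decide,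
        show (Equiv.swap (0:Fin 3) 2) 2 = 0 from by decide,
        show (Equiv.swap (1:Fin 3) 2) 0 = 0 from by decide,
        show (Equiv.swap (1:Fin 3) 2) 1 = 2 from by decide,
        show (Equiv.swap (1:Fin 3) 2) 2 = 1 from by decide,
        show ((Equiv.swap 0 1 * Equiv.swap 1 2 : Equiv.Perm (Fin 3))) 0 = 1 from by decide,
        show ((Equiv.swap 0 1 * Equiv.swap 1 2 : Equiv.Perm (Fin 3))) 1 = 2 from by decide,
        show ((Equiv.swap 0 1 * Equiv.swap 1 2 : Equiv.Perm (Fin 3))) 2 = 0 from by decide,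
        show ((Equiv.swap 1 2 * Equiv.swap 0 1 : Equiv.Perm (Fin 3))) 0 = 2 from by decide,
        show ((Equiv.swap 1 2 * Equiv.swap 0 1 : Equiv.Perm (Fin 3))) 1 = 0 from by decide,
        show ((Equiv.swap 1 2 * Equiv.swap 0 1 : Equiv.Perm (Fin 3))) 2 = 1 from by decide]
      try ring)

/-- Weyl/Briand polarization for `S₃` acting diagonally on two copies of its permutation
representation `k³` (char k ≠ 2, 3): the invariant ring is generated by the polarizations
of the elementary symmetric polynomials `e₁, e₂, e₃`. -/
theorem stmt_6 (k : Type) [Field k] (h2 : (2 : k) ≠ 0) (h3 : (3 : k) ≠ 0) :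
    let pol : ℕ → ℕ → MvPolynomial (Fin 3 ⊕ Fin 3) k := fun a b =>
      ∑ A ∈ Finset.powersetCard (a + b) (Finset.univ : Finset (Fin 3)),
        ∑ B ∈ Finset.powersetCard a A,
          (∏ i ∈ B, X (Sum.inl i)) * ∏ i ∈ A \ B, X (Sum.inr i)
    ∀ p : MvPolynomial (Fin 3 ⊕ Fin 3) k,
      (∀ σ : Equiv.Perm (Fin 3), MvPolynomial.rename (Sum.map σ σ) p = p) ↔
        p ∈ Algebra.adjoin k {q | ∃ a b : ℕ, 1 ≤ a + b ∧ a + b ≤ 3 ∧ q = pol a b} := by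
  intro pol p
  have hpol : pol = polE k := rfl
  rw [hpol]
  constructor
  · intro hinv
    have h6 : (6 : k) ≠ 0 := by
      intro h
      have h23 : (2 : k) * 3 = 6 := by norm_num
      exact (mul_eq_zero.mp (h23.trans h)).elim h2 h3
    have hsum : (6 : MvPolynomial (Fin 3 ⊕ Fin 3) k) * p
        = ∑ σ : Equiv.Perm (Fin 3), rename (Sum.map σ σ) p := by
      rw [Finset.sum_congr rfl fun σ _ => hinv σ, Finset.sum_const]
      rw [show (Finset.univ : Finset (Equiv.Perm (Fin 3))).card = 6 from by decide]
      rw [nsmul_eq_mul]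
      norm_num
    have hTmem : (∑ σ : Equiv.Perm (Fin 3), rename (Sum.map σ σ) p) ∈ Bsub k := by
      rw [p.as_sum]
      simp only [map_sum]
      rw [Finset.sum_comm]
      refine Subalgebra.sum_mem _ fun d _ => ?_
      have hC : ∀ σ : Equiv.Perm (Fin 3),
          rename (Sum.map σ σ) (monomial d (coeff d p))
            = C (coeff d p) * rename (Sum.map σ σ) (monomial d 1) := by
        intro σ
        rw [rename_monomial, rename_monomial, C_mul_monomial, mul_one]
      rw [Finset.sum_congr rfl fun σ _ => hC σ, ← Finset.mul_sum]
      exact mul_mem (C_mem k _) (Tsum_mem k h3 d)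
    have hrw : p = C ((6 : k)⁻¹) * ((6 : MvPolynomial (Fin 3 ⊕ Fin 3) k) * p) := by
      rw [show (6 : MvPolynomial (Fin 3 ⊕ Fin 3) k) = C (6 : k) from (map_ofNat C 6).symm,
        ← mul_assoc, ← C_mul, inv_mul_cancel₀ h6, C_1, one_mul]
    rw [hrw, hsum]
    exact mul_mem (C_mem k _) hTmem
  · intro hmem σ
    have key : Algebra.adjoin k {q | ∃ a b : ℕ, 1 ≤ a + b ∧ a + b ≤ 3 ∧ q = polE k a b}
        ≤ AlgHom.equalizer
            (rename (Sum.map σ σ) : MvPolynomial (Fin 3 ⊕ Fin 3) k →ₐ[k] _)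
            (AlgHom.id k _) := by
      refine Algebra.adjoin_le fun q hq => ?_
      obtain ⟨a, b, ha, hb, rfl⟩ := hq
      exact polE_inv k σ a b ha hb
    exact key hmem
end

section
/- Let S₃ act on ℂ[s,t]: identify (s,t) with the pair (u,u) ∈ ℂ²×ℂ² fixed by the transposition in the S₃-action of the previous setting. The image under the invariant map (u,v) ↦ (u⊗v, u^{⊗3}+v^{⊗3}) of the diagonal locus {(u,u) : u ∈ ℂ²} has coordinate ring isomorphic to the subring ℂ[s², st, t², s³, s²t, st², t³] of ℂ[s,t], i.e., to the ring of polynomials in s,t with no linear term. In particular this ring is not normal (not integrally closed), since s and t lie in its fraction field and are integral over it but not in the ring. -/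
/-!
Polynomials without linear term form a subalgebra, since the linear part of `p q` is
`p(0) q₁ + p₁ q(0)`; it contains the generators of `R`. Conversely every monomial of degree
at least 2 is a product of monomials of degree 2 and 3, and the coefficients 2 in the generators
of `R` are units over `ℂ`, so `R` is exactly this subalgebra. Then `s = s³ / s²` lies in the
fraction field and is a root of `X² - s²`, but `s ∉ R` because of its linear term.
-/

open MvPolynomial

theorem Subalgebra.mem_of_two_mul_mem {K A : Type*} [Field K] [NeZero (2 : K)] [Ring A]
    [Algebra K A] (S : Subalgebra K A) {x : A} (hx : 2 * x ∈ S) : x ∈ S :=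
  (Submodule.smul_mem_iff (p := Subalgebra.toSubmodule S) (two_ne_zero : (2 : K) ≠ 0)).1 <| by
    rwa [two_smul, ← two_mul]

theorem Subalgebra.isIntegral_of_pow_mem {R A : Type*} [CommRing R] [CommRing A] [Algebra R A]
    (S : Subalgebra R A) {x : A} {n : ℕ} (hn : 0 < n) (hx : x ^ n ∈ S) : IsIntegral S x :=
  IsIntegral.of_pow hn (isIntegral_algebraMap (x := (⟨x ^ n, hx⟩ : S)))

namespace MvPolynomial

section NoLinearTerm

variable {σ R : Type*} [CommSemiring R]

theorem coeff_single_one_mul (i : σ) (p q : MvPolynomial σ R) :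
    coeff (Finsupp.single i 1) (p * q) =
      coeff 0 p * coeff (Finsupp.single i 1) q + coeff (Finsupp.single i 1) p * coeff 0 q := by
  classical
  simp [coeff_mul, Finsupp.antidiagonal_single, Finset.Nat.antidiagonal_succ]

variable (σ R) in
noncomputable def noLinearTerm : Subalgebra R (MvPolynomial σ R) where
  carrier := {p | ∀ i, coeff (Finsupp.single i 1) p = 0}
  add_mem' hp hq i := by simp [hp i, hq i]
  mul_mem' hp hq i := by simp [coeff_single_one_mul, hp i, hq i]
  algebraMap_mem' r i := by
    classical simp [coeff_C, (Finsupp.single_ne_zero.2 one_ne_zero).symm]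

@[simp]
theorem mem_noLinearTerm {p : MvPolynomial σ R} :
    p ∈ noLinearTerm σ R ↔ ∀ i, coeff (Finsupp.single i 1) p = 0 :=
  Iff.rfl

theorem mul_mem_noLinearTerm {p q : MvPolynomial σ R} (hp : constantCoeff p = 0)
    (hq : constantCoeff q = 0) : p * q ∈ noLinearTerm σ R := fun i => by
  simp [coeff_single_one_mul, ← constantCoeff_eq, hp, hq]

theorem X_notMem_noLinearTerm [Nontrivial R] (i : σ) : X i ∉ noLinearTerm σ R := fun h => by
  simpa [coeff_X] using h i

end NoLinearTerm

section TwoVariables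

variable (R : Type*) [CommSemiring R]

def quadCubicMonomials : Set (MvPolynomial (Fin 2) R) :=
  {X 0 ^ 2, X 0 * X 1, X 1 ^ 2, X 0 ^ 3, X 0 ^ 2 * X 1, X 0 * X 1 ^ 2, X 1 ^ 3}

variable {R}

theorem X_zero_pow_mul_X_one_pow_mem_adjoin {a b : ℕ} (h : 2 ≤ a + b) :
    X 0 ^ a * X 1 ^ b ∈ Algebra.adjoin R (quadCubicMonomials R) := by
  induction hn : a + b using Nat.strong_induction_on generalizing a b with
  | _ n ih =>
  by_cases hsmall : a + b ≤ 3
  · apply Algebra.subset_adjoin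
    have : a ≤ 3 := by omega
    have : b ≤ 3 := by omega
    interval_cases a <;> interval_cases b <;> first | omega | simp [quadCubicMonomials]
  rcases le_or_gt 2 a with ha | ha
  · obtain ⟨c, rfl⟩ := Nat.exists_eq_add_of_le ha
    rw [pow_add, mul_assoc]
    exact mul_mem (Algebra.subset_adjoin (by simp [quadCubicMonomials]))
      (ih _ (by omega) (by omega) rfl)
  · obtain ⟨c, rfl⟩ := Nat.exists_eq_add_of_le (show 2 ≤ b by omega)
    rw [pow_add, mul_left_comm]
    exact mul_mem (Algebra.subset_adjoin (by simp [quadCubicMonomials]))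
      (ih _ (by omega) (by omega) rfl)

theorem noLinearTerm_le_adjoin_quadCubicMonomials :
    noLinearTerm (Fin 2) R ≤ Algebra.adjoin R (quadCubicMonomials R) := by
  intro p hp
  rw [p.as_sum]
  refine Subalgebra.sum_mem _ fun n hn => ?_
  rw [monomial_eq, Finsupp.prod_fintype _ _ (by simp), Fin.prod_univ_two]
  obtain h | h | h : n 0 + n 1 = 0 ∨ n 0 + n 1 = 1 ∨ 2 ≤ n 0 + n 1 := by omega
  · simp only [show n 0 = 0 by omega, show n 1 = 0 by omega, pow_zero, mul_one]
    exact Subalgebra.algebraMap_mem _ _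
  · obtain ⟨i, rfl⟩ : ∃ i, n = Finsupp.single i 1 := by
      rcases Nat.eq_zero_or_pos (n 0) with h0 | h0
      · refine ⟨1, Finsupp.ext fun j => ?_⟩
        fin_cases j <;> simp <;> omega
      · refine ⟨0, Finsupp.ext fun j => ?_⟩
        fin_cases j <;> simp <;> omega
    exact absurd (hp i) (mem_support_iff.1 hn)
  · exact mul_mem (Subalgebra.algebraMap_mem _ _) (X_zero_pow_mul_X_one_pow_mem_adjoin h)

-- the entries of `(u ⊗ u, 2 u ⊗ u ⊗ u)` for `u = (X 0, X 1)`
variable (R) in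
def diagonalImageCoordinates : Set (MvPolynomial (Fin 2) R) :=
  {X 0 * X 0, X 0 * X 1, X 1 * X 0, X 1 * X 1,
    2 * X 0 ^ 3, 2 * X 0 ^ 2 * X 1, 2 * X 0 * X 1 ^ 2, 2 * X 1 ^ 3}

theorem adjoin_diagonalImageCoordinates_le_noLinearTerm :
    Algebra.adjoin R (diagonalImageCoordinates R) ≤ noLinearTerm (Fin 2) R := by
  refine Algebra.adjoin_le ?_
  rintro p (rfl | rfl | rfl | rfl | rfl | rfl | rfl | rfl)
  -- with `2 Xᵢ³ = (2 Xᵢ) Xᵢ²`, each generator is a product of factors without constant term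
  on_goal 5 => rw [pow_succ', ← mul_assoc]
  on_goal 8 => rw [pow_succ', ← mul_assoc]
  all_goals exact mul_mem_noLinearTerm (by simp) (by simp)

theorem adjoin_quadCubicMonomials_le_adjoin_diagonalImageCoordinates {K : Type*} [Field K]
    [NeZero (2 : K)] :
    Algebra.adjoin K (quadCubicMonomials K) ≤ Algebra.adjoin K (diagonalImageCoordinates K) := by
  refine Algebra.adjoin_le ?_
  rintro p (rfl | rfl | rfl | rfl | rfl | rfl | rfl)
  iterate 3 exact Algebra.subset_adjoin (by simp [diagonalImageCoordinates, sq])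
  all_goals refine Subalgebra.mem_of_two_mul_mem _ (Algebra.subset_adjoin ?_)
  all_goals simp [diagonalImageCoordinates, mul_assoc]

end TwoVariables

end MvPolynomial

/-- The image of the diagonal locus under the `S₃`-invariant map has coordinate ring
`ℂ[s², st, t², s³, s²t, st², t³]`, the ring of polynomials with no linear term, which is
not normal: `s` and `t` lie in its fraction field and are integral over it but not in it. -/
theorem stmt_8 :
    let s : MvPolynomial (Fin 2) ℂ := X 0
    let t : MvPolynomial (Fin 2) ℂ := X 1
    let R : Subalgebra ℂ (MvPolynomial (Fin 2) ℂ) :=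
      Algebra.adjoin ℂ ({s * s, s * t, t * s, t * t,
        2 * s ^ 3, 2 * s ^ 2 * t, 2 * s * t ^ 2, 2 * t ^ 3} : Set (MvPolynomial (Fin 2) ℂ))
    R = Algebra.adjoin ℂ ({s ^ 2, s * t, t ^ 2, s ^ 3, s ^ 2 * t, s * t ^ 2, t ^ 3} :
        Set (MvPolynomial (Fin 2) ℂ)) ∧
    (∀ p : MvPolynomial (Fin 2) ℂ, p ∈ R ↔
      (MvPolynomial.coeff (Finsupp.single 0 1) p = 0 ∧
       MvPolynomial.coeff (Finsupp.single 1 1) p = 0)) ∧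
    IsIntegral R s ∧ IsIntegral R t ∧ s ∉ R ∧ t ∉ R ∧
    (∃ a ∈ R, ∃ b ∈ R, b ≠ 0 ∧ s * b = a) ∧
    (∃ a ∈ R, ∃ b ∈ R, b ≠ 0 ∧ t * b = a) := by
  intro s t R
  have hRN : R ≤ noLinearTerm (Fin 2) ℂ := adjoin_diagonalImageCoordinates_le_noLinearTerm
  have hAR : Algebra.adjoin ℂ (quadCubicMonomials ℂ) ≤ R :=
    adjoin_quadCubicMonomials_le_adjoin_diagonalImageCoordinates
  have hmem (p) : p ∈ R ↔ p ∈ noLinearTerm (Fin 2) ℂ :=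
    ⟨(hRN ·), (hAR <| noLinearTerm_le_adjoin_quadCubicMonomials ·)⟩
  have hsq (i : Fin 2) : X i ^ 2 ∈ R :=
    hAR (Algebra.subset_adjoin (by fin_cases i <;> simp [quadCubicMonomials]))
  have hcube (i : Fin 2) : X i ^ 3 ∈ R :=
    hAR (Algebra.subset_adjoin (by fin_cases i <;> simp [quadCubicMonomials]))
  refine ⟨le_antisymm (hRN.trans noLinearTerm_le_adjoin_quadCubicMonomials) hAR,
    fun p => by simp [hmem, Fin.forall_fin_two], R.isIntegral_of_pow_mem two_pos (hsq 0),
    R.isIntegral_of_pow_mem two_pos (hsq 1), fun h => X_notMem_noLinearTerm 0 ((hmem _).1 h),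
    fun h => X_notMem_noLinearTerm 1 ((hmem _).1 h),
    ⟨_, hcube 0, _, hsq 0, pow_ne_zero _ (X_ne_zero _), by ring⟩,
    ⟨_, hcube 1, _, hsq 1, pow_ne_zero _ (X_ne_zero _), by ring⟩⟩
end

section
/- Let μ = Spec ℂ[s²t², s³t³, s⁴, t⁴, s⁵t, st⁵] ⊆ Spec ℂ[s,t]. Then the normalization of the ring ℂ[s²t², s³t³, s⁴, t⁴, s⁵t, st⁵] is ℂ[st, s⁴, t⁴]. Moreover ℂ[st, s⁴, t⁴] ≅ ℂ[x,y,z]/(x⁴ − yz), i.e., Spec of it is a simple surface singularity of type A₃. -/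
/-!
`ℂ[st, s⁴, t⁴]` is the ring of invariants of `μ₄` acting on `ℂ[s, t]` by `s ↦ ζ s, t ↦ ζ⁻¹ t`,
that is, the degree-zero part of the `ZMod 4`-grading of `ℂ[s, t]` with weights `(1, 3)`. If `g`
is homogeneous of degree zero and nonzero, then `(g x)ᵢ = g xᵢ`, so the degree-zero part is closed
under division inside the integrally closed domain `ℂ[s, t]`, hence is itself integrally closed.
It contains `A`, is generated by elements whose squares or first powers lie in `A`
(`(st)² = s²t²`), and `st = s³t³ / s²t²`, so it is the normalization of `A`.

For the presentation, `p ↦ p(st, s⁴, t⁴)` kills `x⁴ - yz`, and its kernel is no larger because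
the `ℂ`-linear map `sᵃ tᵇ ↦ x^k y^((a-k)/4) z^((b-k)/4)` (`k = min a b`) from `ℂ[s, t]` to
`ℂ[x, y, z]/(x⁴ - yz)` sends `p(st, s⁴, t⁴)` back to the class of `p`.
-/

open scoped nonZeroDivisors

theorem Subalgebra.isIntegrallyClosed_of_mul_mem {R S : Type*} [CommRing R] [CommRing S]
    [IsDomain S] [IsIntegrallyClosed S] [Algebra R S] (B : Subalgebra R S)
    (hB : ∀ g ∈ B, g ≠ 0 → ∀ x, g * x ∈ B → x ∈ B) : IsIntegrallyClosed B := by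
  have hmap (b : B) : algebraMap B (FractionRing S) b = algebraMap S (FractionRing S) b :=
    IsScalarTower.algebraMap_apply B S _ b
  have hinj : Function.Injective (Algebra.ofId B (FractionRing S)) := fun a b h =>
    Subtype.ext (IsFractionRing.injective S (FractionRing S) (by simpa [hmap] using h))
  let f : FractionRing B →ₐ[B] FractionRing S := IsFractionRing.liftAlgHom hinj
  have hf (b : B) : f (algebraMap B _ b) = algebraMap S (FractionRing S) b := by
    rw [f.commutes, hmap]
  rw [isIntegrallyClosed_iff (FractionRing B)]
  intro x hx
  obtain ⟨⟨p, q⟩, rfl⟩ := IsLocalization.mk'_surjective B⁰ x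
  obtain ⟨y, hy⟩ := IsIntegrallyClosed.isIntegral_iff.mp ((hx.map f).tower_top (A := S))
  have hqy : (q : S) * y = p := by
    apply IsFractionRing.injective S (FractionRing S)
    have hspec := congrArg f (IsLocalization.mk'_spec (FractionRing B) p q)
    rw [map_mul, hf, hf, ← hy] at hspec
    rw [map_mul, mul_comm, hspec]
  have hq : (q : S) ≠ 0 := fun h => nonZeroDivisors.ne_zero q.2 (Subtype.ext h)
  exact ⟨⟨y, hB q q.1.2 hq y (hqy ▸ p.2)⟩, f.injective ((hf _).trans hy)⟩

open DirectSum in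
theorem DirectSum.mem_zero_of_mul_mem_zero {ι A σ : Type*} [DecidableEq ι] [AddMonoid ι]
    [Semiring A] [NoZeroDivisors A] [SetLike σ A] [AddSubmonoidClass σ A] (𝒜 : ι → σ)
    [GradedRing 𝒜] {a x : A} (ha : a ∈ 𝒜 0) (ha0 : a ≠ 0) (hax : a * x ∈ 𝒜 0) : x ∈ 𝒜 0 := by
  have hx : decompose 𝒜 x = of _ 0 (decompose 𝒜 x 0) := by
    ext j
    obtain rfl | hj := eq_or_ne j 0
    · simp
    · have : a * (decompose 𝒜 x j : A) = 0 := by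
        rw [← coe_decompose_mul_of_left_mem_zero 𝒜 ha, decompose_of_mem_ne 𝒜 hax hj.symm]
      rw [of_eq_of_ne _ _ _ hj, (mul_eq_zero.mp this).resolve_left ha0]
      rfl
  rw [← (decompose 𝒜).symm_apply_apply x, hx, decompose_symm_of]
  exact SetLike.coe_mem _

section Fractions

variable {R S : Type*} [CommSemiring R] [CommRing S] [IsDomain S] [Algebra R S]

def Subalgebra.fractions (A : Subalgebra R S) : Subalgebra R S where
  carrier := {b | ∃ p ∈ A, ∃ q ∈ A, q ≠ 0 ∧ q * b = p}
  mul_mem' := by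
    rintro x y ⟨p₁, hp₁, q₁, hq₁, hq₁0, rfl⟩ ⟨p₂, hp₂, q₂, hq₂, hq₂0, rfl⟩
    exact ⟨q₁ * x * (q₂ * y), mul_mem hp₁ hp₂, q₁ * q₂, mul_mem hq₁ hq₂, mul_ne_zero hq₁0 hq₂0,
      by ring⟩
  add_mem' := by
    rintro x y ⟨p₁, hp₁, q₁, hq₁, hq₁0, rfl⟩ ⟨p₂, hp₂, q₂, hq₂, hq₂0, rfl⟩
    exact ⟨q₂ * (q₁ * x) + q₁ * (q₂ * y), add_mem (mul_mem hq₂ hp₁) (mul_mem hq₁ hp₂),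
      q₁ * q₂, mul_mem hq₁ hq₂, mul_ne_zero hq₁0 hq₂0, by ring⟩
  algebraMap_mem' r :=
    ⟨algebraMap R S r, A.algebraMap_mem r, 1, A.one_mem, one_ne_zero, one_mul _⟩

theorem Subalgebra.le_fractions (A : Subalgebra R S) : A ≤ A.fractions :=
  fun a ha => ⟨a, ha, 1, A.one_mem, one_ne_zero, one_mul a⟩

end Fractions

theorem isIntegral_of_mem_adjoin_of_pow_mem {R S : Type*} [CommRing R] [CommRing S]
    [Algebra R S] (A : Subalgebra R S) {s : Set S} (hs : ∀ x ∈ s, ∃ n, 0 < n ∧ x ^ n ∈ A)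
    {b : S} (hb : b ∈ Algebra.adjoin R s) : IsIntegral A b := by
  refine Algebra.adjoin_le (S := (integralClosure A S).restrictScalars R) (fun x hx => ?_) hb
  obtain ⟨n, hn, hxn⟩ := hs x hx
  exact IsIntegral.of_pow hn (isIntegral_algebraMap (x := (⟨x ^ n, hxn⟩ : A)))

open MvPolynomial

namespace A3

noncomputable abbrev muRing : Subalgebra ℂ (MvPolynomial (Fin 2) ℂ) :=
  Algebra.adjoin ℂ {X 0 ^ 2 * X 1 ^ 2, X 0 ^ 3 * X 1 ^ 3, X 0 ^ 4, X 1 ^ 4, X 0 ^ 5 * X 1,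
    X 0 * X 1 ^ 5}

noncomputable abbrev coordRing : Subalgebra ℂ (MvPolynomial (Fin 2) ℂ) :=
  Algebra.adjoin ℂ {X 0 * X 1, X 0 ^ 4, X 1 ^ 4}

theorem X_zero_mul_X_one_mem : (X 0 * X 1 : MvPolynomial (Fin 2) ℂ) ∈ coordRing :=
  Algebra.subset_adjoin (by simp)

theorem X_zero_pow_four_mem : (X 0 ^ 4 : MvPolynomial (Fin 2) ℂ) ∈ coordRing :=
  Algebra.subset_adjoin (by simp)

theorem X_one_pow_four_mem : (X 1 ^ 4 : MvPolynomial (Fin 2) ℂ) ∈ coordRing :=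
  Algebra.subset_adjoin (by simp)

theorem X_zero_pow_mul_X_one_pow_mem {a b : ℕ} (h : 4 ∣ a + 3 * b) :
    (X 0 ^ a * X 1 ^ b : MvPolynomial (Fin 2) ℂ) ∈ coordRing := by
  rcases le_total a b with hab | hab
  · obtain ⟨k, rfl⟩ : ∃ k, b = a + 4 * k := ⟨(b - a) / 4, by omega⟩
    rw [show (X 0 ^ a * X 1 ^ (a + 4 * k) : MvPolynomial (Fin 2) ℂ) =
      (X 0 * X 1) ^ a * (X 1 ^ 4) ^ k by ring]
    exact mul_mem (pow_mem X_zero_mul_X_one_mem a) (pow_mem X_one_pow_four_mem k)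
  · obtain ⟨k, rfl⟩ : ∃ k, a = b + 4 * k := ⟨(a - b) / 4, by omega⟩
    rw [show (X 0 ^ (b + 4 * k) * X 1 ^ b : MvPolynomial (Fin 2) ℂ) =
      (X 0 * X 1) ^ b * (X 0 ^ 4) ^ k by ring]
    exact mul_mem (pow_mem X_zero_mul_X_one_mem b) (pow_mem X_zero_pow_four_mem k)

theorem muRing_le_coordRing : muRing ≤ coordRing := by
  refine Algebra.adjoin_le ?_
  simp only [Set.insert_subset_iff, Set.singleton_subset_iff, SetLike.mem_coe]
  have h (a b : ℕ) (hab : 4 ∣ a + 3 * b := by norm_num) := X_zero_pow_mul_X_one_pow_mem hab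
  exact ⟨h 2 2, h 3 3, by simpa using h 4 0, by simpa using h 0 4, by simpa using h 5 1,
    by simpa using h 1 5⟩

theorem coordRing_le_fractions : coordRing ≤ muRing.fractions := by
  refine Algebra.adjoin_le ?_
  simp only [Set.insert_subset_iff, Set.singleton_subset_iff, SetLike.mem_coe]
  refine ⟨⟨X 0 ^ 3 * X 1 ^ 3, Algebra.subset_adjoin (by simp), X 0 ^ 2 * X 1 ^ 2,
    Algebra.subset_adjoin (by simp), by simp [X_ne_zero], by ring⟩,
    muRing.le_fractions (Algebra.subset_adjoin (by simp)),
    muRing.le_fractions (Algebra.subset_adjoin (by simp))⟩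

theorem isIntegral_of_mem_coordRing {b : MvPolynomial (Fin 2) ℂ} (hb : b ∈ coordRing) :
    IsIntegral muRing b := by
  refine isIntegral_of_mem_adjoin_of_pow_mem muRing (fun x hx => ?_) hb
  simp only [Set.mem_insert_iff, Set.mem_singleton_iff] at hx
  obtain rfl | rfl | rfl := hx
  · exact ⟨2, two_pos, by rw [mul_pow]; exact Algebra.subset_adjoin (by simp)⟩
  · exact ⟨1, one_pos, by rw [pow_one]; exact Algebra.subset_adjoin (by simp)⟩
  · exact ⟨1, one_pos, by rw [pow_one]; exact Algebra.subset_adjoin (by simp)⟩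

def weights : Fin 2 → ZMod 4 := ![1, 3]

attribute [local instance] weightedGradedAlgebra

theorem monomial_mem_coordRing {m : Fin 2 →₀ ℕ} (hm : Finsupp.weight weights m = 0) (c : ℂ) :
    monomial m c ∈ coordRing := by
  have hdvd : 4 ∣ m 0 + 3 * m 1 := by
    rw [← ZMod.natCast_eq_zero_iff]
    simpa [Finsupp.weight_apply, Finsupp.sum_fintype, weights, mul_comm] using hm
  rw [monomial_eq, Finsupp.prod_pow, Fin.prod_univ_two]
  exact mul_mem (Subalgebra.algebraMap_mem _ c) (X_zero_pow_mul_X_one_pow_mem hdvd)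

theorem mem_coordRing_iff {p : MvPolynomial (Fin 2) ℂ} :
    p ∈ coordRing ↔ p ∈ weightedHomogeneousSubmodule ℂ weights 0 := by
  constructor
  · refine fun hp => Algebra.adjoin_le (S := SetLike.GradeZero.subalgebra
      (weightedHomogeneousSubmodule ℂ weights)) ?_ hp
    simp only [Set.insert_subset_iff, Set.singleton_subset_iff, SetLike.mem_coe]
    exact ⟨(isWeightedHomogeneous_X ℂ weights 0).mul (isWeightedHomogeneous_X ℂ weights 1),
      (isWeightedHomogeneous_X ℂ weights 0).pow 4, (isWeightedHomogeneous_X ℂ weights 1).pow 4⟩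
  · intro hp
    rw [← support_sum_monomial_coeff p]
    exact sum_mem fun m hm => monomial_mem_coordRing (hp (mem_support_iff.mp hm)) _

theorem isIntegrallyClosed_coordRing : IsIntegrallyClosed coordRing :=
  coordRing.isIntegrallyClosed_of_mul_mem fun g hg hg0 x hgx => by
    rw [mem_coordRing_iff] at hg hgx ⊢
    exact DirectSum.mem_zero_of_mul_mem_zero _ hg hg0 hgx

noncomputable def param : MvPolynomial (Fin 3) ℂ →ₐ[ℂ] MvPolynomial (Fin 2) ℂ :=
  aeval ![X 0 * X 1, X 0 ^ 4, X 1 ^ 4]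

@[simp] theorem param_X_zero : param (X 0) = X 0 * X 1 := by simp [param]

@[simp] theorem param_X_one : param (X 1) = X 0 ^ 4 := by simp [param]

@[simp] theorem param_X_two : param (X 2) = X 1 ^ 4 := by simp [param]

theorem range_param : param.range = coordRing := by
  rw [param, ← Algebra.adjoin_range_eq_range_aeval]
  simp only [Matrix.range_cons, Matrix.range_empty, Set.union_empty, Set.singleton_union]

local notation "Q" =>
  MvPolynomial (Fin 3) ℂ ⧸ Ideal.span {(X 0 : MvPolynomial (Fin 3) ℂ) ^ 4 - X 1 * X 2}

-- Only monomials `sᵃ tᵇ` with `a ≡ b mod 4` lie in the image of `param`; on them, `k = min a b`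
-- and one of `a - k`, `b - k` is zero, the other divisible by `4`.
noncomputable def retraction : MvPolynomial (Fin 2) ℂ →ₗ[ℂ] Q :=
  (basisMonomials (Fin 2) ℂ).constr ℂ fun m =>
    Ideal.Quotient.mk _ (X 0 ^ min (m 0) (m 1) * X 1 ^ ((m 0 - min (m 0) (m 1)) / 4) *
      X 2 ^ ((m 1 - min (m 0) (m 1)) / 4))

theorem retraction_X_zero_pow_mul_X_one_pow (a b : ℕ) :
    retraction (X 0 ^ a * X 1 ^ b) = Ideal.Quotient.mk _
      (X 0 ^ min a b * X 1 ^ ((a - min a b) / 4) * X 2 ^ ((b - min a b) / 4)) := by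
  have : (X 0 ^ a * X 1 ^ b : MvPolynomial (Fin 2) ℂ) =
      basisMonomials (Fin 2) ℂ (Finsupp.single 0 a + Finsupp.single 1 b) := by
    rw [coe_basisMonomials, X_pow_eq_monomial, X_pow_eq_monomial, monomial_mul, one_mul]
  rw [this, retraction, Module.Basis.constr_basis]
  simp

theorem retraction_param (p : MvPolynomial (Fin 3) ℂ) :
    retraction (param p) = Ideal.Quotient.mk _ p := by
  suffices retraction ∘ₗ param.toLinearMap = (Ideal.Quotient.mkₐ ℂ _).toLinearMap from
    LinearMap.congr_fun this p
  refine (basisMonomials (Fin 3) ℂ).ext fun n => ?_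
  have hrel : (Ideal.Quotient.mk _ (X 0) : Q) ^ 4 =
      Ideal.Quotient.mk _ (X 1) * Ideal.Quotient.mk _ (X 2) := by
    rw [← map_pow, ← map_mul, Ideal.Quotient.eq, Ideal.mem_span_singleton]
  have hparam : param (monomial n 1) = X 0 ^ (n 0 + 4 * n 1) * X 1 ^ (n 0 + 4 * n 2) := by
    rw [monomial_eq, C_1, one_mul, Finsupp.prod_pow, Fin.prod_univ_three]
    simp only [map_mul, map_pow, param_X_zero, param_X_one, param_X_two]
    ring
  simp only [LinearMap.coe_comp, Function.comp_apply, AlgHom.toLinearMap_apply,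
    coe_basisMonomials, hparam, retraction_X_zero_pow_mul_X_one_pow, Ideal.Quotient.mkₐ_eq_mk]
  rw [monomial_eq, Finsupp.prod_pow, Fin.prod_univ_three]
  simp only [map_mul, map_pow, map_one, one_mul]
  rcases le_total (n 1) (n 2) with h | h
  · obtain ⟨k, hk⟩ := Nat.exists_eq_add_of_le h
    rw [show min (n 0 + 4 * n 1) (n 0 + 4 * n 2) = n 0 + 4 * n 1 by omega,
      show (n 0 + 4 * n 1 - (n 0 + 4 * n 1)) / 4 = 0 by omega,
      show (n 0 + 4 * n 2 - (n 0 + 4 * n 1)) / 4 = k by omega, hk, pow_add, pow_mul, hrel]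
    ring
  · obtain ⟨k, hk⟩ := Nat.exists_eq_add_of_le h
    rw [show min (n 0 + 4 * n 1) (n 0 + 4 * n 2) = n 0 + 4 * n 2 by omega,
      show (n 0 + 4 * n 2 - (n 0 + 4 * n 2)) / 4 = 0 by omega,
      show (n 0 + 4 * n 1 - (n 0 + 4 * n 2)) / 4 = k by omega, hk, pow_add, pow_mul, hrel]
    ring

noncomputable def paramCoordRing : MvPolynomial (Fin 3) ℂ →ₐ[ℂ] coordRing :=
  param.codRestrict coordRing fun p => range_param ▸ param.mem_range_self p

theorem paramCoordRing_surjective : Function.Surjective paramCoordRing := by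
  rintro ⟨b, hb⟩
  obtain ⟨p, rfl⟩ := (range_param ▸ hb : b ∈ param.range)
  exact ⟨p, rfl⟩

theorem ker_paramCoordRing :
    RingHom.ker paramCoordRing = Ideal.span {(X 0 : MvPolynomial (Fin 3) ℂ) ^ 4 - X 1 * X 2} := by
  refine le_antisymm (fun p hp => ?_) (Ideal.span_le.mpr ?_)
  · rw [← Ideal.Quotient.eq_zero_iff_mem, ← retraction_param]
    rw [RingHom.mem_ker, Subtype.ext_iff] at hp
    exact (congrArg retraction hp).trans (map_zero _)
  · rintro _ rfl
    rw [SetLike.mem_coe, RingHom.mem_ker, Subtype.ext_iff]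
    change param _ = 0
    rw [map_sub, map_pow, map_mul, param_X_zero, param_X_one, param_X_two]
    ring

noncomputable def quotientEquiv : Q ≃ₐ[ℂ] coordRing :=
  (Ideal.quotientEquivAlgOfEq ℂ ker_paramCoordRing.symm).trans
    (Ideal.quotientKerAlgEquivOfSurjective paramCoordRing_surjective)

theorem quotientEquiv_mk (p : MvPolynomial (Fin 3) ℂ) :
    (quotientEquiv (Ideal.Quotient.mk _ p) : MvPolynomial (Fin 2) ℂ) = param p := by
  rw [quotientEquiv, AlgEquiv.trans_apply, Ideal.quotientEquivAlgOfEq_mk,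
    Ideal.quotientKerAlgEquivOfSurjective_mk]
  rfl

end A3

/-- The normalization of `ℂ[s²t², s³t³, s⁴, t⁴, s⁵t, st⁵]` is `ℂ[st, s⁴, t⁴]`, which is
isomorphic to `ℂ[x,y,z]/(x⁴ − yz)` via `x ↦ st`, `y ↦ s⁴`, `z ↦ t⁴`. -/
theorem stmt_11 :
    let s : MvPolynomial (Fin 2) ℂ := X 0
    let t : MvPolynomial (Fin 2) ℂ := X 1
    let A : Subalgebra ℂ (MvPolynomial (Fin 2) ℂ) :=
      Algebra.adjoin ℂ ({s ^ 2 * t ^ 2, s ^ 3 * t ^ 3, s ^ 4, t ^ 4, s ^ 5 * t, s * t ^ 5} :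
        Set (MvPolynomial (Fin 2) ℂ))
    let B : Subalgebra ℂ (MvPolynomial (Fin 2) ℂ) :=
      Algebra.adjoin ℂ ({s * t, s ^ 4, t ^ 4} : Set (MvPolynomial (Fin 2) ℂ))
    A ≤ B ∧
    (∀ b ∈ B, ∃ p ∈ A, ∃ q ∈ A, q ≠ 0 ∧ q * b = p) ∧
    (∀ b ∈ B, IsIntegral A b) ∧
    IsIntegrallyClosed B ∧
    ∃ e : (MvPolynomial (Fin 3) ℂ ⧸
        Ideal.span {(X 0 : MvPolynomial (Fin 3) ℂ) ^ 4 - X 1 * X 2}) ≃ₐ[ℂ] B,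
      (e (Ideal.Quotient.mk _ (X 0)) : MvPolynomial (Fin 2) ℂ) = s * t ∧
      (e (Ideal.Quotient.mk _ (X 1)) : MvPolynomial (Fin 2) ℂ) = s ^ 4 ∧
      (e (Ideal.Quotient.mk _ (X 2)) : MvPolynomial (Fin 2) ℂ) = t ^ 4 := by
  intro s t A B
  refine ⟨A3.muRing_le_coordRing, fun b hb => A3.coordRing_le_fractions hb,
    fun b hb => A3.isIntegral_of_mem_coordRing hb, A3.isIntegrallyClosed_coordRing,
    A3.quotientEquiv, ?_, ?_, ?_⟩
  · exact (A3.quotientEquiv_mk _).trans A3.param_X_zero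
  · exact (A3.quotientEquiv_mk _).trans A3.param_X_one
  · exact (A3.quotientEquiv_mk _).trans A3.param_X_two
end

section
/- Let V = ℂ^{2n} be the symplectic vector space for Sp_{2n} with standard basis v₁,...,v_{2n}, and let s = e_{11} − e_{2n,2n} ∈ sp_{2n}. The Sp_{2n}×G_m-orbit of (s, v₁⊗v₁⊗v₁ + v_{2n}⊗v_{2n}⊗v_{2n}) in sp_{2n} ⊕ S³V (G_m acting with weight 2 on sp_{2n} and weight 3 on S³V) has dimension 4n; in particular its stabilizer's identity component is isomorphic to Sp_{2n−2}. -/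
/-!
A matrix `A` lies in `sp_{2m}` exactly when `(i, j) ↦ sign i * A (dual i) j` is symmetric, so
`sp_{2m}` is the space of functions on unordered pairs of basis indices and has dimension
`m (2m + 1)`. An infinitesimal stabilizer `(A, c)` of `(s, v₁³ + v_{2n}³)` has `c = 0`, since the
`(1, 1)` entry of `[A, s] + 2c s` is `2c`, and then `A v₁ = A v_{2n} = 0`, read off from the
coefficients of `v_k ⊗ v₁ ⊗ v₁` and `v_k ⊗ v_{2n} ⊗ v_{2n}` in `A · p`. In the pair picture these
are the functions supported on pairs avoiding `1` and `2n`, a space of dimension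
`(n - 1)(2n - 1) = dim sp_{2n-2}`, and rank–nullity leaves `n (2n + 1) + 1 - (n - 1)(2n - 1) = 4n`
for the orbit.
-/

open Matrix
open scoped TensorProduct

namespace SymplecticOrbit

/-- `Sum.inl a` is the basis vector `v_{a+1}` and `Sum.inr b` is `v_{m+b+1}`. -/
abbrev Idx (m : ℕ) := Fin m ⊕ Fin m

variable {m : ℕ} {K : Type*} [Field K]

namespace Idx

def dual : Idx m → Idx m
  | .inl a => .inr a.rev
  | .inr b => .inl b.rev

def sign : Idx m → K
  | .inl _ => 1
  | .inr _ => -1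

@[simp] lemma dual_dual (i : Idx m) : dual (dual i) = i := by
  cases i <;> simp [dual]

lemma eq_dual_comm {i j : Idx m} : i = dual j ↔ j = dual i := by
  constructor <;> rintro rfl <;> simp

@[simp] lemma sign_dual (i : Idx m) : (sign (dual i) : K) = -sign i := by
  cases i <;> simp [dual, sign]

lemma sq_sign (i : Idx m) : (sign i : K) ^ 2 = 1 := by
  cases i <;> simp [sign]

lemma sign_ne_zero (i : Idx m) : (sign i : K) ≠ 0 := by
  cases i <;> simp [sign]

lemma dual_ne (i : Idx m) : dual i ≠ i := by
  cases i <;> simp [dual]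

end Idx

open Idx

def antidiag (K : Type*) [Field K] (m : ℕ) : Matrix (Fin m) (Fin m) K :=
  of fun i j => if (i : ℕ) + (j : ℕ) + 1 = m then 1 else 0

lemma antidiag_apply (i j : Fin m) : antidiag K m i j = if j = i.rev then 1 else 0 := by
  have := i.isLt
  simp only [antidiag, of_apply, Fin.ext_iff, Fin.val_rev]
  congr 1
  exact propext ⟨fun h => by omega, fun h => by omega⟩

def symplecticForm (K : Type*) [Field K] (m : ℕ) : Matrix (Idx m) (Idx m) K :=
  fromBlocks 0 (antidiag K m) (-antidiag K m) 0

lemma symplecticForm_apply (i j : Idx m) :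
    symplecticForm K m i j = if j = dual i then sign i else 0 := by
  rcases i with a | a <;> rcases j with b | b <;>
    simp [symplecticForm, antidiag_apply, dual, sign]
  split_ifs <;> simp

lemma symplecticForm_mul_apply (M : Matrix (Idx m) (Idx m) K) (i j : Idx m) :
    (symplecticForm K m * M) i j = sign i * M (dual i) j := by
  simp [mul_apply, symplecticForm_apply, ite_mul]

lemma mul_symplecticForm_apply (M : Matrix (Idx m) (Idx m) K) (i j : Idx m) :
    (M * symplecticForm K m) i j = -sign j * M i (dual j) := by
  simp only [mul_apply, symplecticForm_apply, eq_dual_comm (i := j), mul_ite, mul_zero,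
    Finset.sum_ite_eq', Finset.mem_univ, if_true, sign_dual]
  ring

def sp (K : Type*) [Field K] (m : ℕ) : Submodule K (Matrix (Idx m) (Idx m) K) where
  carrier := {A | symplecticForm K m * Aᵀ * symplecticForm K m = A}
  add_mem' {A B} hA hB := by
    simp only [Set.mem_ofPred_eq, transpose_add, Matrix.mul_add, Matrix.add_mul] at *
    rw [hA, hB]
  zero_mem' := by simp
  smul_mem' c A hA := by
    simp only [Set.mem_ofPred_eq, transpose_smul, Matrix.mul_smul, Matrix.smul_mul] at *
    rw [hA]

lemma mem_sp {A : Matrix (Idx m) (Idx m) K} :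
    A ∈ sp K m ↔ symplecticForm K m * Aᵀ * symplecticForm K m = A := Iff.rfl

lemma mem_sp_iff_apply {A : Matrix (Idx m) (Idx m) K} :
    A ∈ sp K m ↔ ∀ i j, A i j = -(sign i * sign j) * A (dual j) (dual i) := by
  rw [mem_sp, ← Matrix.ext_iff]
  refine forall_congr' fun i => forall_congr' fun j => ?_
  rw [mul_symplecticForm_apply, symplecticForm_mul_apply, transpose_apply, eq_comm]
  ring_nf

/-- On `sp K m`, the inverse of `A ↦ (s(i, j) ↦ sign i * A (dual i) j)`. -/
def ofSym (K : Type*) [Field K] (m : ℕ) :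
    (Sym2 (Idx m) →₀ K) →ₗ[K] Matrix (Idx m) (Idx m) K where
  toFun f := of fun i j => -sign i * f s(dual i, j)
  map_add' f g := by ext; simp [mul_add]
  map_smul' c f := by ext; simp; ring

lemma ofSym_apply (f : Sym2 (Idx m) →₀ K) (i j : Idx m) :
    ofSym K m f i j = -sign i * f s(dual i, j) := rfl

lemma ofSym_apply_dual (f : Sym2 (Idx m) →₀ K) (i j : Idx m) :
    ofSym K m f (dual i) j = sign i * f s(i, j) := by
  simp [ofSym_apply]

lemma ofSym_injective : Function.Injective (ofSym K m) := by
  intro f g h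
  ext z
  induction z using Sym2.ind with
  | _ i j =>
    have := congr_fun₂ h (dual i) j
    rw [ofSym_apply_dual, ofSym_apply_dual] at this
    linear_combination sign i * this - (f s(i, j) - g s(i, j)) * sq_sign (K := K) i

lemma range_ofSym : LinearMap.range (ofSym K m) = sp K m := by
  ext A
  constructor
  · rintro ⟨f, rfl⟩
    rw [mem_sp_iff_apply]
    intro i j
    simp only [ofSym_apply, sign_dual, dual_dual, Sym2.eq_swap (a := j)]
    linear_combination (sign i * f s(dual i, j)) * sq_sign (K := K) j
  · intro hA
    rw [mem_sp_iff_apply] at hA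
    let g : Sym2 (Idx m) → K := Sym2.lift ⟨fun i j => sign i * A (dual i) j, fun i j => by
      dsimp only
      rw [hA (dual i) j, dual_dual, sign_dual]
      linear_combination (sign j * A (dual j) i) * sq_sign (K := K) i⟩
    refine ⟨Finsupp.equivFunOnFinite.symm g, ?_⟩
    ext i j
    simp only [ofSym_apply, Finsupp.coe_equivFunOnFinite_symm, g, Sym2.lift_mk, dual_dual,
      sign_dual]
    linear_combination A i j * sq_sign (K := K) i

lemma choose_two_two_mul_add_one (m : ℕ) : (2 * m + 1).choose 2 = m * (2 * m + 1) := by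
  rw [Nat.choose_two_right]
  exact Nat.div_eq_of_eq_mul_left two_pos (by rw [Nat.add_sub_cancel]; ring)

lemma finrank_sp : Module.finrank K (sp K m) = m * (2 * m + 1) := by
  rw [← range_ofSym, LinearMap.finrank_range_of_inj ofSym_injective, Module.finrank_finsupp_self,
    Sym2.card, Fintype.card_sum, Fintype.card_fin, ← two_mul, choose_two_two_mul_add_one]

def sym2SubtypeEquiv {α : Type*} (P : α → Prop) :
    {z : Sym2 α // ∀ a ∈ z, P a} ≃ Sym2 {a // P a} where
  toFun z := z.1.attachWith z.2
  invFun w := ⟨w.map Subtype.val, fun a ha => by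
    obtain ⟨b, -, rfl⟩ := Sym2.mem_map.mp ha
    exact b.2⟩
  left_inv z := Subtype.ext (Sym2.attachWith_map_subtypeVal z.2)
  right_inv w := by induction w using Sym2.ind; rfl

lemma finrank_supported_avoiding {α : Type*} [Fintype α] [DecidableEq α] (S : Finset α) :
    Module.finrank K (Finsupp.supported K K {z : Sym2 α | ∀ a ∈ z, a ∉ S}) =
      (Fintype.card α - S.card + 1).choose 2 := by
  classical
  rw [(Finsupp.supportedEquivFinsupp _).finrank_eq, Module.finrank_finsupp_self]
  refine (Fintype.card_congr (sym2SubtypeEquiv fun a => a ∉ S)).trans ?_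
  rw [Sym2.card, Fintype.card_subtype_compl, Fintype.card_coe]

lemma ofSym_col_eq_zero_iff (f : Sym2 (Idx m) →₀ K) (S : Finset (Idx m)) :
    (∀ i, ∀ j ∈ S, ofSym K m f i j = 0) ↔ f ∈ Finsupp.supported K K {z | ∀ a ∈ z, a ∉ S} := by
  rw [Finsupp.mem_supported']
  constructor
  · intro h z hz
    induction z using Sym2.ind with
    | _ a b =>
      have key : ∀ a b, b ∈ S → f s(a, b) = 0 := fun a b hb => by
        have := h (dual a) b hb
        rw [ofSym_apply_dual] at this
        exact (mul_eq_zero.mp this).resolve_left (Idx.sign_ne_zero a)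
      simp only [Set.mem_ofPred_eq, Sym2.mem_iff, forall_eq_or_imp, forall_eq, not_and_or,
        not_not] at hz
      rcases hz with ha | hb
      · rw [Sym2.eq_swap]; exact key b a ha
      · exact key a b hb
  · intro h i j hj
    rw [ofSym_apply, h _ fun hz => hz j (Sym2.mem_mk_right _ _) hj, mul_zero]

lemma apply_dual_eq_zero_of_col_eq_zero {A : Matrix (Idx m) (Idx m) K} (hA : A ∈ sp K m)
    {j : Idx m} (hj : ∀ i, A i j = 0) (k : Idx m) : A (dual j) k = 0 := by
  rw [mem_sp_iff_apply.mp hA, dual_dual, hj, mul_zero]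

section Cube

variable {ι R : Type*} [Fintype ι] [CommRing R]

def cube (x : ι → R) : (ι → R) ⊗[R] ((ι → R) ⊗[R] (ι → R)) := x ⊗ₜ (x ⊗ₜ x)

def cubeAction (A : Matrix ι ι R) :
    (ι → R) ⊗[R] ((ι → R) ⊗[R] (ι → R)) →ₗ[R] (ι → R) ⊗[R] ((ι → R) ⊗[R] (ι → R)) :=
  TensorProduct.map A.mulVecLin LinearMap.id
    + TensorProduct.map LinearMap.id (TensorProduct.map A.mulVecLin LinearMap.id)
    + TensorProduct.map LinearMap.id (TensorProduct.map LinearMap.id A.mulVecLin)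

lemma cubeAction_cube (A : Matrix ι ι R) (x : ι → R) :
    cubeAction A (cube x) =
      (A *ᵥ x) ⊗ₜ (x ⊗ₜ x) + x ⊗ₜ ((A *ᵥ x) ⊗ₜ x) + x ⊗ₜ (x ⊗ₜ (A *ᵥ x)) := by
  simp [cubeAction, cube]

lemma cubeAction_cube_single_eq_zero [DecidableEq ι] {A : Matrix ι ι R} {i : ι}
    (h : ∀ k, A k i = 0) : cubeAction A (cube (Pi.single i 1)) = 0 := by
  simp [cubeAction_cube, show A.col i = 0 from funext h]

noncomputable def cubeBasis [DecidableEq ι] :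
    Module.Basis (ι × ι × ι) R ((ι → R) ⊗[R] ((ι → R) ⊗[R] (ι → R))) :=
  (Pi.basisFun R ι).tensorProduct ((Pi.basisFun R ι).tensorProduct (Pi.basisFun R ι))

lemma cubeBasis_repr_tmul [DecidableEq ι] (x y z : ι → R) (a b c : ι) :
    cubeBasis.repr (x ⊗ₜ (y ⊗ₜ z)) (a, b, c) = x a * y b * z c := by
  simp [cubeBasis, Module.Basis.tensorProduct_repr_tmul_apply]
  ring

lemma cubeBasis_repr_cubeAction_cube_add [DecidableEq ι] {i j : ι} (hij : i ≠ j)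
    (A : Matrix ι ι R) (k : ι) :
    cubeBasis.repr (cubeAction A (cube (Pi.single i 1) + cube (Pi.single j 1))) (k, i, i) =
      A k i + if k = i then 2 * A i i else 0 := by
  simp only [map_add, cubeAction_cube]
  simp only [Finsupp.add_apply, cubeBasis_repr_tmul, mulVec_single_one, col_apply,
    Pi.single_apply, hij, if_true, if_false, mul_one, mul_zero, add_zero]
  rcases eq_or_ne k i with rfl | hki
  · simp only [if_true]
    ring
  · simp [hki]

lemma mul_single_eq_zero [DecidableEq ι] {A : Matrix ι ι R} {i j : ι} (r : R)
    (h : ∀ k, A k i = 0) : A * single i j r = 0 := by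
  ext a b
  simp [mul_apply, single, ite_and, h]

lemma single_mul_eq_zero [DecidableEq ι] {A : Matrix ι ι R} {i j : ι} (r : R)
    (h : ∀ k, A j k = 0) : single i j r * A = 0 := by
  ext a b
  simp [mul_apply, single, ite_and, h]

end Cube

theorem infinitesimal_stabilizer_iff [CharZero K] {A : Matrix (Idx m) (Idx m) K}
    (hA : A ∈ sp K m) {i j : Idx m} (hj : dual i = j) (c : K) :
    (A * (single i i 1 - single j j 1) - (single i i 1 - single j j 1) * A
        + (2 * c) • (single i i 1 - single j j 1) = 0 ∧
      cubeAction A (cube (Pi.single i 1) + cube (Pi.single j 1))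
        + (3 * c) • (cube (Pi.single i 1) + cube (Pi.single j 1)) = 0) ↔
    c = 0 ∧ ∀ k, A k i = 0 ∧ A k j = 0 := by
  subst hj
  have hij : i ≠ dual i := (dual_ne i).symm
  constructor
  · rintro ⟨hmat, hten⟩
    have hc : c = 0 := by
      have := congr_fun₂ hmat i i
      simpa [Matrix.mul_sub, Matrix.sub_mul, hij, hij.symm] using this
    subst hc
    have hcol : ∀ a b : Idx m, a ≠ b →
        cubeAction A (cube (Pi.single a 1) + cube (Pi.single b 1)) = 0 → ∀ k, A k a = 0 := by
      intro a b hab h k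
      have := cubeBasis_repr_cubeAction_cube_add hab A k
      rw [h, LinearEquiv.map_zero, Finsupp.coe_zero, Pi.zero_apply] at this
      rcases eq_or_ne k a with rfl | hk
      · rw [if_pos rfl] at this
        linear_combination -this / 3
      · simpa [hk] using this.symm
    simp only [mul_zero, zero_smul, add_zero] at hten
    refine ⟨rfl, fun k => ⟨hcol _ _ hij hten k, hcol _ _ hij.symm ?_ k⟩⟩
    rwa [add_comm]
  · rintro ⟨rfl, hcol⟩
    have hrow : ∀ k, A i k = 0 ∧ A (dual i) k = 0 := fun k =>
      ⟨by simpa using apply_dual_eq_zero_of_col_eq_zero hA (fun k => (hcol k).2) k,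
        apply_dual_eq_zero_of_col_eq_zero hA (fun k => (hcol k).1) k⟩
    simp only [Matrix.mul_sub, Matrix.sub_mul, mul_single_eq_zero _ fun k => (hcol k).1,
      mul_single_eq_zero _ fun k => (hcol k).2, single_mul_eq_zero _ fun k => (hrow k).1,
      single_mul_eq_zero _ fun k => (hrow k).2, map_add,
      cubeAction_cube_single_eq_zero fun k => (hcol k).1,
      cubeAction_cube_single_eq_zero fun k => (hcol k).2]
    simp

theorem finrank_ker_orbitMap [CharZero K] {T : Type*} [AddCommGroup T] [Module K T]
    (τ : (Idx m → K) ⊗[K] ((Idx m → K) ⊗[K] (Idx m → K)) ≃ₗ[K] T) {i j : Idx m} (hj : dual i = j)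
    (Φ : (sp K m × K) →ₗ[K] (Matrix (Idx m) (Idx m) K × T))
    (hΦ : ∀ (A : sp K m) (c : K), Φ (A, c) =
      ((A : Matrix (Idx m) (Idx m) K) * (single i i 1 - single j j 1)
          - (single i i 1 - single j j 1) * (A : Matrix (Idx m) (Idx m) K)
          + (2 * c) • (single i i 1 - single j j 1),
        τ (cubeAction (A : Matrix (Idx m) (Idx m) K) (cube (Pi.single i 1) + cube (Pi.single j 1))
          + (3 * c) • (cube (Pi.single i 1) + cube (Pi.single j 1))))) :
    Module.finrank K (LinearMap.ker Φ) = (m - 1) * (2 * (m - 1) + 1) := by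
  let ψ : (Sym2 (Idx m) →₀ K) →ₗ[K] sp K m × K :=
    LinearMap.inl K _ _ ∘ₗ (ofSym K m).codRestrict (sp K m)
      fun f => range_ofSym (K := K) ▸ LinearMap.mem_range_self _ f
  have hψ : Function.Injective ψ := fun f g h =>
    ofSym_injective (congr_arg Subtype.val (congr_arg Prod.fst h))
  let S : Finset (Idx m) := {i, j}
  have hker : LinearMap.ker Φ = (Finsupp.supported K K {z | ∀ a ∈ z, a ∉ S}).map ψ := by
    ext ⟨⟨A, hA⟩, c⟩
    obtain ⟨f, rfl⟩ : A ∈ LinearMap.range (ofSym K m) := range_ofSym (K := K) ▸ hA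
    rw [LinearMap.mem_ker, hΦ, Prod.mk_eq_zero, LinearEquiv.map_eq_zero_iff,
      infinitesimal_stabilizer_iff hA hj, Submodule.mem_map]
    constructor
    · rintro ⟨rfl, hcol⟩
      refine ⟨f, (ofSym_col_eq_zero_iff f S).mp ?_, rfl⟩
      simpa [S, or_imp, forall_and] using hcol
    · rintro ⟨g, hg, hgf⟩
      obtain rfl : g = f := ofSym_injective (congr_arg (Subtype.val ∘ Prod.fst) hgf)
      have hcol := (ofSym_col_eq_zero_iff g S).mpr hg
      exact ⟨(congr_arg Prod.snd hgf).symm,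
        fun k => ⟨hcol k i (by simp [S]), hcol k j (by simp [S])⟩⟩
  rw [hker, ← (Submodule.equivMapOfInjective ψ hψ _).finrank_eq, finrank_supported_avoiding,
    Finset.card_pair (hj ▸ (dual_ne i).symm), Fintype.card_sum, Fintype.card_fin,
    ← choose_two_two_mul_add_one]
  have : 0 < m := by rcases i with a | a <;> exact a.pos
  congr 1
  omega

end SymplecticOrbit

open SymplecticOrbit

/-- Infinitesimal version of: the `Sp_{2n} × G_m`-orbit of
`(s, v₁⊗v₁⊗v₁ + v_{2n}⊗v_{2n}⊗v_{2n})` in `sp_{2n} ⊕ S³V` (weights 2 and 3) has dimension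
`4n`, and the identity component of its stabilizer is isomorphic to `Sp_{2n−2}`: the image of
the Lie algebra action map `Φ` at this point has rank `4n`, and its kernel (the Lie algebra
of the stabilizer) is isomorphic to `sp_{2n−2}`.  Here `T` is any model (via `τ`) of the
triple tensor power `V ⊗ V ⊗ V` containing `S³V`. -/
theorem stmt_14 (n : ℕ) (hn : 0 < n)
    (T : Type) [AddCommGroup T] [Module ℂ T]
    (τ : (((Fin n ⊕ Fin n) → ℂ) ⊗[ℂ] (((Fin n ⊕ Fin n) → ℂ) ⊗[ℂ] ((Fin n ⊕ Fin n) → ℂ)))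
        ≃ₗ[ℂ] T) :
    let J : Matrix (Fin n) (Fin n) ℂ :=
      Matrix.of fun i j => if (i : ℕ) + (j : ℕ) + 1 = n then 1 else 0
    let J' : Matrix (Fin n ⊕ Fin n) (Fin n ⊕ Fin n) ℂ := Matrix.fromBlocks 0 J (-J) 0
    let J₂ : Matrix (Fin (n - 1)) (Fin (n - 1)) ℂ :=
      Matrix.of fun i j => if (i : ℕ) + (j : ℕ) + 1 = n - 1 then 1 else 0
    let J₂' : Matrix (Fin (n - 1) ⊕ Fin (n - 1)) (Fin (n - 1) ⊕ Fin (n - 1)) ℂ :=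
      Matrix.fromBlocks 0 J₂ (-J₂) 0
    let i₁ : Fin n ⊕ Fin n := Sum.inl ⟨0, hn⟩
    let i₂ : Fin n ⊕ Fin n := Sum.inr ⟨n - 1, by omega⟩
    let v₁ : (Fin n ⊕ Fin n) → ℂ := Pi.single i₁ 1
    let v₂ : (Fin n ⊕ Fin n) → ℂ := Pi.single i₂ 1
    let s : Matrix (Fin n ⊕ Fin n) (Fin n ⊕ Fin n) ℂ :=
      Matrix.single i₁ i₁ 1 - Matrix.single i₂ i₂ 1
    let p : ((Fin n ⊕ Fin n) → ℂ) ⊗[ℂ] (((Fin n ⊕ Fin n) → ℂ) ⊗[ℂ] ((Fin n ⊕ Fin n) → ℂ)) :=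
      v₁ ⊗ₜ[ℂ] (v₁ ⊗ₜ[ℂ] v₁) + v₂ ⊗ₜ[ℂ] (v₂ ⊗ₜ[ℂ] v₂)
    let Dmap : Matrix (Fin n ⊕ Fin n) (Fin n ⊕ Fin n) ℂ →
        (((Fin n ⊕ Fin n) → ℂ) ⊗[ℂ] (((Fin n ⊕ Fin n) → ℂ) ⊗[ℂ] ((Fin n ⊕ Fin n) → ℂ)) →ₗ[ℂ]
          ((Fin n ⊕ Fin n) → ℂ) ⊗[ℂ] (((Fin n ⊕ Fin n) → ℂ) ⊗[ℂ] ((Fin n ⊕ Fin n) → ℂ))) :=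
      fun A =>
        TensorProduct.map A.mulVecLin LinearMap.id
          + TensorProduct.map LinearMap.id (TensorProduct.map A.mulVecLin LinearMap.id)
          + TensorProduct.map LinearMap.id (TensorProduct.map LinearMap.id A.mulVecLin)
    ∀ W : Submodule ℂ (Matrix (Fin n ⊕ Fin n) (Fin n ⊕ Fin n) ℂ),
      (∀ A, A ∈ W ↔ J' * Aᵀ * J' = A) →
    ∀ W' : Submodule ℂ (Matrix (Fin (n - 1) ⊕ Fin (n - 1)) (Fin (n - 1) ⊕ Fin (n - 1)) ℂ),
      (∀ A, A ∈ W' ↔ J₂' * Aᵀ * J₂' = A) →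
    ∀ Φ : (W × ℂ) →ₗ[ℂ] (Matrix (Fin n ⊕ Fin n) (Fin n ⊕ Fin n) ℂ × T),
      (∀ (A : W) (c : ℂ), Φ (A, c) =
        ((A : Matrix (Fin n ⊕ Fin n) (Fin n ⊕ Fin n) ℂ) * s
            - s * (A : Matrix (Fin n ⊕ Fin n) (Fin n ⊕ Fin n) ℂ) + (2 * c) • s,
          τ (Dmap (A : Matrix (Fin n ⊕ Fin n) (Fin n ⊕ Fin n) ℂ) p + (3 * c) • p))) →
    Module.finrank ℂ (LinearMap.range Φ) = 4 * n ∧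
      Nonempty ((LinearMap.ker Φ) ≃ₗ[ℂ] W') := by
  intro J J' J₂ J₂' i₁ i₂ v₁ v₂ s p Dmap W hW W' hW' Φ hΦ
  obtain rfl : W = sp ℂ n := Submodule.ext fun A => (hW A).trans mem_sp.symm
  obtain rfl : W' = sp ℂ (n - 1) := Submodule.ext fun A => (hW' A).trans mem_sp.symm
  have hdual : Idx.dual i₁ = i₂ := by simp [i₁, i₂, Idx.dual, Fin.ext_iff]
  have hker := finrank_ker_orbitMap τ hdual Φ hΦ
  have hrank := Φ.finrank_range_add_finrank_ker
  rw [Module.finrank_prod, finrank_sp, Module.finrank_self, hker] at hrank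
  -- `ker Φ` only carries the `AddCommMonoid` structure of `W × ℂ`, so freeness is not inferred.
  have : Module.Free ℂ (LinearMap.ker Φ) :=
    let := Module.addCommMonoidToAddCommGroup ℂ (M := LinearMap.ker Φ)
    Module.Free.of_divisionRing ℂ _
  refine ⟨?_, FiniteDimensional.nonempty_linearEquiv_of_finrank_eq (by rw [hker, finrank_sp])⟩
  obtain ⟨k, rfl⟩ : ∃ k, n = k + 1 := ⟨n - 1, by omega⟩
  simp only [Nat.add_sub_cancel] at hrank
  nlinarith
end

section
/- Over ℂ, let X be the variety of 3×3 matrices of rank at most 1, parametrized as X = {x yᵀ : x, y ∈ ℂ³} (trace arbitrary). Let Γ₄ ⊆ SL₃ be the diagonal Klein four-group {diag(±1,±1,±1) of determinant 1}. Then the Γ₄-invariant regular functions on X are generated by bᵢ = xᵢyᵢ, cᵢ = x_{i+1}² y_{i−1}², and dᵢ = x_{i−1}² y_{i+1}², for i ∈ ℤ/3 (indices mod 3). -/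
open MvPolynomial


noncomputable def Ssign (ε : (Fin 3 ⊕ Fin 3) → ℂ) (m : (Fin 3 ⊕ Fin 3) →₀ ℕ) : ℂ :=
  m.prod fun v k => ε v ^ k

lemma aeval_sign_monomial (ε : (Fin 3 ⊕ Fin 3) → ℂ) (m : (Fin 3 ⊕ Fin 3) →₀ ℕ) (c : ℂ) :
    aeval (fun v => C (ε v) * X v) (monomial m c) = monomial m (Ssign ε m * c) := by
  rw [aeval_monomial, monomial_eq]
  have h1 : (m.prod fun v k => (C (ε v) * X v : MvPolynomial (Fin 3 ⊕ Fin 3) ℂ) ^ k)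
      = C (Ssign ε m) * m.prod fun v k => (X v : MvPolynomial (Fin 3 ⊕ Fin 3) ℂ) ^ k := by
    simp only [mul_pow]
    rw [Finsupp.prod_mul, Ssign, map_finsuppProd]
    simp [C_pow]
  rw [h1]
  simp only [algebraMap_eq]
  rw [map_mul]; ring

lemma sign_eq_one_of_invariant (ε : (Fin 3 ⊕ Fin 3) → ℂ) (p : MvPolynomial (Fin 3 ⊕ Fin 3) ℂ)
    (h : aeval (fun v => C (ε v) * X v) p = p) (m : (Fin 3 ⊕ Fin 3) →₀ ℕ) (hm : m ∈ p.support) :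
    Ssign ε m = 1 := by
  have h2 : aeval (fun v => C (ε v) * X v) p
      = ∑ m' ∈ p.support, monomial m' (Ssign ε m' * coeff m' p) := by
    conv_lhs => rw [p.as_sum]
    rw [map_sum]
    exact Finset.sum_congr rfl fun m' _ => aeval_sign_monomial ε m' _
  have h3 : coeff m p = Ssign ε m * coeff m p := by
    conv_lhs => rw [← h, h2]
    rw [coeff_sum]
    rw [Finset.sum_eq_single m]
    · simp [coeff_monomial]
    · intro b _ hb; simp [coeff_monomial, hb]
    · intro hmem; exact absurd hm hmem
  have hc : coeff m p ≠ 0 := mem_support_iff.mp hm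
  have := h3.symm
  field_simp at this
  exact this

lemma Ssign_eval (ε : (Fin 3 ⊕ Fin 3) → ℂ) (m : (Fin 3 ⊕ Fin 3) →₀ ℕ) :
    Ssign ε m = ∏ v : (Fin 3 ⊕ Fin 3), ε v ^ m v :=
  Finsupp.prod_fintype _ _ (fun v => pow_zero _)

lemma even_of_sign (e : Fin 3 → ℂ) (m : (Fin 3 ⊕ Fin 3) →₀ ℕ) (i : Fin 3)
    (hi : e i = 1) (hj : ∀ j, j ≠ i → e j = -1)
    (hs : Ssign (Sum.elim e e) m = 1) :
    Even (∑ j ∈ Finset.univ.erase i, (m (Sum.inl j) + m (Sum.inr j))) := by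
  rw [Ssign_eval, Fintype.prod_sum_type] at hs
  have key : ∀ f : Fin 3 → ℕ, (∏ j, e j ^ f j) = (-1 : ℂ) ^ (∑ j ∈ Finset.univ.erase i, f j) := by
    intro f
    rw [← Finset.prod_erase_mul _ _ (Finset.mem_univ i), hi, one_pow, mul_one,
      ← Finset.prod_pow_eq_pow_sum]
    exact Finset.prod_congr rfl fun j hj' => by rw [hj j (Finset.ne_of_mem_erase hj')]
  simp only [Sum.elim_inl, Sum.elim_inr] at hs
  rw [key (fun j => m (Sum.inl j)), key (fun j => m (Sum.inr j)), ← pow_add] at hs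
  have := (neg_one_pow_eq_one_iff_even (R := ℂ) (by norm_num)).mp hs
  rwa [Finset.sum_add_distrib]

lemma sum_eq_of_mem_R0 (p : MvPolynomial (Fin 3 ⊕ Fin 3) ℂ)
    (hp : p ∈ Algebra.adjoin ℂ {q : MvPolynomial (Fin 3 ⊕ Fin 3) ℂ |
      ∃ i j : Fin 3, q = X (Sum.inl i) * X (Sum.inr j)})
    (m : (Fin 3 ⊕ Fin 3) →₀ ℕ) (hm : m ∈ p.support) :
    ∑ i : Fin 3, m (Sum.inl i) = ∑ i : Fin 3, m (Sum.inr i) := by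
  classical
  set w : (Fin 3 ⊕ Fin 3) → ℤ := Sum.elim (fun _ => 1) (fun _ => -1) with hw
  have hhom : IsWeightedHomogeneous w p 0 := by
    refine Algebra.adjoin_induction ?_ ?_ ?_ ?_ hp
    · rintro q ⟨i, j, rfl⟩
      have := (isWeightedHomogeneous_X ℂ w (Sum.inl i)).mul (isWeightedHomogeneous_X ℂ w (Sum.inr j))
      simpa [hw] using this
    · intro r; exact isWeightedHomogeneous_C w r
    · intro a b _ _ ha hb; exact ha.add hb
    · intro a b _ _ ha hb; simpa using ha.mul hb
  have h0 := hhom (mem_support_iff.mp hm)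
  have h1 : (Finsupp.weight w) m = ∑ v : (Fin 3 ⊕ Fin 3), (m v : ℤ) * w v := by
    rw [Finsupp.weight_apply]
    rw [Finsupp.sum_fintype]
    · simp [smul_eq_mul]
    · intro v; simp
  rw [h1, Fintype.sum_sum_type] at h0
  simp only [hw, Sum.elim_inl, Sum.elim_inr, mul_one, mul_neg] at h0
  rw [Fin.sum_univ_three, Fin.sum_univ_three] at h0
  rw [Fin.sum_univ_three, Fin.sum_univ_three]
  omega

lemma X_eq_monomial (v : Fin 3 ⊕ Fin 3) :
    (X v : MvPolynomial (Fin 3 ⊕ Fin 3) ℂ) = monomial (Finsupp.single v 1) 1 := rfl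

lemma monomial_mem (T : Subalgebra ℂ (MvPolynomial (Fin 3 ⊕ Fin 3) ℂ))
    (hb : ∀ i : Fin 3, X (Sum.inl i) * X (Sum.inr i) ∈ T)
    (hcd : ∀ i j : Fin 3, i ≠ j → (X (Sum.inl i))^2 * (X (Sum.inr j))^2 ∈ T) :
    ∀ (n : ℕ) (m : (Fin 3 ⊕ Fin 3) →₀ ℕ),
      (∑ i : Fin 3, m (Sum.inl i)) = n → (∑ i : Fin 3, m (Sum.inr i)) = n →
      (∀ i, Even (m (Sum.inl i) + m (Sum.inr i))) →
      monomial m 1 ∈ T := by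
  intro n
  induction n using Nat.strong_induction_on with
  | _ n IH =>
  intro m hα hβ hev
  rcases Nat.eq_zero_or_pos n with hn | hn
  · -- n = 0 : m = 0
    subst hn
    have hz : ∀ v, m v = 0 := by
      rintro (j | j)
      · have := Finset.sum_eq_zero_iff.mp hα (j) (Finset.mem_univ j); exact this
      · have := Finset.sum_eq_zero_iff.mp hβ (j) (Finset.mem_univ j); exact this
    have : m = 0 := Finsupp.ext fun v => hz v
    rw [this]
    simpa [monomial_zero'] using T.algebraMap_mem 1
  · by_cases hcase : ∃ i, 0 < m (Sum.inl i) ∧ 0 < m (Sum.inr i)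
    · obtain ⟨i, hi1, hi2⟩ := hcase
      set δ : (Fin 3 ⊕ Fin 3) →₀ ℕ :=
        Finsupp.single (Sum.inl i) 1 + Finsupp.single (Sum.inr i) 1 with hδdef
      set m' := m - δ with hm'def
      have hδval : ∀ v, δ v = (if v = Sum.inl i then 1 else 0) + (if v = Sum.inr i then 1 else 0) := by
        intro v
        simp [hδdef, Finsupp.single_apply, eq_comm]
      have hsplit : m = δ + m' := by
        ext v
        have h1 : δ v ≤ m v := by
          rcases v with j' | j'
          · have hd1 : δ (Sum.inl j') = if j' = i then 1 else 0 := by simp [hδval]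
            split_ifs at hd1 with h
            · subst h; omega
            · omega
          · have hd2 : δ (Sum.inr j') = if j' = i then 1 else 0 := by simp [hδval]
            split_ifs at hd2 with h
            · subst h; omega
            · omega
        simp [hm'def, Finsupp.tsub_apply]
        omega
      have hm'v : ∀ v, m v = δ v + m' v := fun v => by rw [hsplit]; simp
      have hsl : ∑ j : Fin 3, δ (Sum.inl j) = 1 := by
        simp [hδval, Finset.sum_ite_eq']
      have hsr : ∑ j : Fin 3, δ (Sum.inr j) = 1 := by
        simp [hδval, Finset.sum_ite_eq']
      have hα' : ∑ j : Fin 3, m' (Sum.inl j) = n - 1 := by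
        have : ∑ j : Fin 3, m (Sum.inl j) = (∑ j : Fin 3, δ (Sum.inl j)) + ∑ j : Fin 3, m' (Sum.inl j) := by
          rw [← Finset.sum_add_distrib]; exact Finset.sum_congr rfl fun j _ => hm'v _
        omega
      have hβ' : ∑ j : Fin 3, m' (Sum.inr j) = n - 1 := by
        have : ∑ j : Fin 3, m (Sum.inr j) = (∑ j : Fin 3, δ (Sum.inr j)) + ∑ j : Fin 3, m' (Sum.inr j) := by
          rw [← Finset.sum_add_distrib]; exact Finset.sum_congr rfl fun j _ => hm'v _
        omega
      have hev' : ∀ j, Even (m' (Sum.inl j) + m' (Sum.inr j)) := by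
        intro j
        have e1 := hev j
        have h1 := hm'v (Sum.inl j)
        have h2 := hm'v (Sum.inr j)
        rw [Nat.even_iff] at e1 ⊢
        have hd1 : δ (Sum.inl j) = if j = i then 1 else 0 := by simp [hδval]
        have hd2 : δ (Sum.inr j) = if j = i then 1 else 0 := by simp [hδval]
        split_ifs at hd1 hd2 <;> omega
      have hrec : monomial m' 1 ∈ T := IH (n - 1) (by omega) m' hα' hβ' hev'
      have hfac : (monomial m 1 : MvPolynomial (Fin 3 ⊕ Fin 3) ℂ)
          = (X (Sum.inl i) * X (Sum.inr i)) * monomial m' 1 := by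
        rw [X_eq_monomial, X_eq_monomial, monomial_mul, monomial_mul, hsplit]
        norm_num
        exact hδdef
      rw [hfac]
      exact T.mul_mem (hb i) hrec
    · push_neg at hcase
      -- disjoint supports, all entries even
      have hex : ∃ i, 0 < m (Sum.inl i) := by
        by_contra h
        push_neg at h
        simp only [Nat.le_zero] at h
        rw [Finset.sum_eq_zero (fun j _ => h j)] at hα
        omega
      obtain ⟨i, hi⟩ := hex
      have hiz : m (Sum.inr i) = 0 := by
        have := hcase i; omega
      have hi2 : 2 ≤ m (Sum.inl i) := by
        have := hev i
        rcases this with ⟨k, hk⟩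
        omega
      have hexj : ∃ j, 0 < m (Sum.inr j) := by
        by_contra h
        push_neg at h
        simp only [Nat.le_zero] at h
        rw [Finset.sum_eq_zero (fun j _ => h j)] at hβ
        omega
      obtain ⟨j, hj⟩ := hexj
      have hjz : m (Sum.inl j) = 0 := by
        have := hcase j; omega
      have hij : i ≠ j := by
        rintro rfl; omega
      have hj2 : 2 ≤ m (Sum.inr j) := by
        have := hev j
        rcases this with ⟨k, hk⟩
        omega
      set δ : (Fin 3 ⊕ Fin 3) →₀ ℕ :=
        Finsupp.single (Sum.inl i) 2 + Finsupp.single (Sum.inr j) 2 with hδdef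
      set m' := m - δ with hm'def
      have hδval : ∀ v, δ v = (if v = Sum.inl i then 2 else 0) + (if v = Sum.inr j then 2 else 0) := by
        intro v
        simp [hδdef, Finsupp.single_apply, eq_comm]
      have hsplit : m = δ + m' := by
        ext v
        have h1 : δ v ≤ m v := by
          rcases v with j' | j'
          · have hd1 : δ (Sum.inl j') = if j' = i then 2 else 0 := by simp [hδval]
            split_ifs at hd1 with h
            · subst h; omega
            · omega
          · have hd2 : δ (Sum.inr j') = if j' = j then 2 else 0 := by simp [hδval]
            split_ifs at hd2 with h
            · subst h; omega
            · omega
        simp [hm'def, Finsupp.tsub_apply]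
        omega
      have hm'v : ∀ v, m v = δ v + m' v := fun v => by rw [hsplit]; simp
      have hsl : ∑ j' : Fin 3, δ (Sum.inl j') = 2 := by
        simp [hδval, Finset.sum_ite_eq']
      have hsr : ∑ j' : Fin 3, δ (Sum.inr j') = 2 := by
        simp [hδval, Finset.sum_ite_eq']
      have hα' : ∑ j' : Fin 3, m' (Sum.inl j') = n - 2 := by
        have : ∑ j' : Fin 3, m (Sum.inl j') = (∑ j' : Fin 3, δ (Sum.inl j')) + ∑ j' : Fin 3, m' (Sum.inl j') := by
          rw [← Finset.sum_add_distrib]; exact Finset.sum_congr rfl fun j' _ => hm'v _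
        omega
      have hn2 : 2 ≤ n := by
        calc 2 ≤ m (Sum.inl i) := hi2
        _ ≤ ∑ j' : Fin 3, m (Sum.inl j') := Finset.single_le_sum (f := fun j' => m (Sum.inl j')) (fun j' _ => Nat.zero_le _) (Finset.mem_univ i)
        _ = n := hα
      have hβ' : ∑ j' : Fin 3, m' (Sum.inr j') = n - 2 := by
        have : ∑ j' : Fin 3, m (Sum.inr j') = (∑ j' : Fin 3, δ (Sum.inr j')) + ∑ j' : Fin 3, m' (Sum.inr j') := by
          rw [← Finset.sum_add_distrib]; exact Finset.sum_congr rfl fun j' _ => hm'v _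
        omega
      have hev' : ∀ j', Even (m' (Sum.inl j') + m' (Sum.inr j')) := by
        intro j'
        have e1 := hev j'
        have h1 := hm'v (Sum.inl j')
        have h2 := hm'v (Sum.inr j')
        rw [Nat.even_iff] at e1 ⊢
        have hd1 : δ (Sum.inl j') = if j' = i then 2 else 0 := by simp [hδval]
        have hd2 : δ (Sum.inr j') = if j' = j then 2 else 0 := by simp [hδval]
        split_ifs at hd1 hd2 <;> omega
      have hrec : monomial m' 1 ∈ T := IH (n - 2) (by omega) m' hα' hβ' hev'
      have hfac : (monomial m 1 : MvPolynomial (Fin 3 ⊕ Fin 3) ℂ)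
          = ((X (Sum.inl i))^2 * (X (Sum.inr j))^2) * monomial m' 1 := by
        rw [X_pow_eq_monomial, X_pow_eq_monomial, monomial_mul, monomial_mul, hsplit]
        norm_num
        exact hδdef
      rw [hfac]
      exact T.mul_mem (hcd i j hij) hrec


/-- On the cone `X` of rank ≤ 1 matrices `x yᵀ` (coordinate ring `ℂ[xᵢyⱼ]`), the invariants
for the Klein four-group `Γ₄ ⊆ SL₃` of diagonal sign matrices are generated by
`bᵢ = xᵢyᵢ`, `cᵢ = x_{i+1}² y_{i−1}²`, `dᵢ = x_{i−1}² y_{i+1}²` (indices mod 3). -/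
theorem stmt_16 :
    let x : Fin 3 → MvPolynomial (Fin 3 ⊕ Fin 3) ℂ := fun i => X (Sum.inl i)
    let y : Fin 3 → MvPolynomial (Fin 3 ⊕ Fin 3) ℂ := fun i => X (Sum.inr i)
    let R0 : Subalgebra ℂ (MvPolynomial (Fin 3 ⊕ Fin 3) ℂ) :=
      Algebra.adjoin ℂ {q | ∃ i j : Fin 3, q = x i * y j}
    ∀ p ∈ R0,
      ((∀ ε : Fin 3 → ℂ, (∀ i, ε i = 1 ∨ ε i = -1) → ε 0 * ε 1 * ε 2 = 1 →
          MvPolynomial.aeval (Sum.elim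
            (fun i : Fin 3 => C (ε i) * x i) (fun i : Fin 3 => C (ε i) * y i)) p = p) ↔
        p ∈ Algebra.adjoin ℂ
          {q : MvPolynomial (Fin 3 ⊕ Fin 3) ℂ |
            (∃ i : Fin 3, q = x i * y i) ∨
            (∃ i : Fin 3, q = (x (i + 1)) ^ 2 * (y (i + 2)) ^ 2) ∨
            (∃ i : Fin 3, q = (x (i + 2)) ^ 2 * (y (i + 1)) ^ 2)}) := by
  intro x y R0 p hp
  set T := Algebra.adjoin ℂ
          {q : MvPolynomial (Fin 3 ⊕ Fin 3) ℂ |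
            (∃ i : Fin 3, q = x i * y i) ∨
            (∃ i : Fin 3, q = (x (i + 1)) ^ 2 * (y (i + 2)) ^ 2) ∨
            (∃ i : Fin 3, q = (x (i + 2)) ^ 2 * (y (i + 1)) ^ 2)} with hT
  have helim : ∀ ε : Fin 3 → ℂ,
      (Sum.elim (fun i : Fin 3 => C (ε i) * x i) (fun i : Fin 3 => C (ε i) * y i))
        = fun v => C (Sum.elim ε ε v) * X v := by
    intro ε; funext v; rcases v with i | i <;> rfl
  have hb : ∀ i : Fin 3, x i * y i ∈ T :=
    fun i => Algebra.subset_adjoin (Or.inl ⟨i, rfl⟩)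
  have e1 : ∀ k : Fin 3, k + 2 + 1 = k := by decide
  have e2 : ∀ k : Fin 3, k + 2 + 2 = k + 1 := by decide
  have e3 : ∀ k : Fin 3, k + 1 + 2 = k := by decide
  have e4 : ∀ k : Fin 3, k + 1 + 1 = k + 2 := by decide
  have hcd : ∀ i j : Fin 3, i ≠ j → (x i)^2 * (y j)^2 ∈ T := by
    intro i j hij
    have hj : j = i + 1 ∨ j = i + 2 := by revert hij; revert i j; decide
    rcases hj with rfl | rfl
    · exact Algebra.subset_adjoin (Or.inr (Or.inl ⟨i + 2, by rw [e1, e2]⟩))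
    · exact Algebra.subset_adjoin (Or.inr (Or.inr ⟨i + 1, by rw [e3, e4]⟩))
  constructor
  · -- invariance → membership
    intro hinv
    -- the three parity facts for each monomial
    have key : ∀ m ∈ p.support, ∀ k : Fin 3,
        Even (∑ j ∈ Finset.univ.erase k, (m (Sum.inl j) + m (Sum.inr j))) := by
      intro m hm k
      set e : Fin 3 → ℂ := fun i => if i = k then 1 else -1 with he
      have h1 : ∀ i, e i = 1 ∨ e i = -1 := by
        intro i; by_cases h : i = k <;> simp [he, h]
      have h2 : e 0 * e 1 * e 2 = 1 := by
        fin_cases k <;> simp only [he] <;> norm_num <;> decide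
      have h3 := hinv e h1 h2
      rw [helim e] at h3
      have h4 := sign_eq_one_of_invariant (Sum.elim e e) p h3 m hm
      exact even_of_sign e m k (by simp [he]) (fun j hj => by simp [he, hj]) h4
    have hsum : ∀ m ∈ p.support,
        ∑ i : Fin 3, m (Sum.inl i) = ∑ i : Fin 3, m (Sum.inr i) := by
      intro m hm
      exact sum_eq_of_mem_R0 p hp m hm
    have hmono : ∀ m ∈ p.support, (monomial m 1 : MvPolynomial (Fin 3 ⊕ Fin 3) ℂ) ∈ T := by
      intro m hm
      have hev : ∀ i : Fin 3, Even (m (Sum.inl i) + m (Sum.inr i)) := by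
        intro i
        have htot : ∑ j : Fin 3, (m (Sum.inl j) + m (Sum.inr j))
            = (∑ j : Fin 3, m (Sum.inl j)) + ∑ j : Fin 3, m (Sum.inr j) :=
          Finset.sum_add_distrib
        have heven_tot : Even (∑ j : Fin 3, (m (Sum.inl j) + m (Sum.inr j))) := by
          rw [htot, ← hsum m hm]
          exact ⟨_, rfl⟩
        have hsplit : m (Sum.inl i) + m (Sum.inr i)
            + ∑ j ∈ Finset.univ.erase i, (m (Sum.inl j) + m (Sum.inr j))
            = ∑ j : Fin 3, (m (Sum.inl j) + m (Sum.inr j)) :=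
          Finset.add_sum_erase Finset.univ
            (fun j => m (Sum.inl j) + m (Sum.inr j)) (Finset.mem_univ i)
        have h5 := key m hm i
        rw [Nat.even_iff] at heven_tot h5 ⊢
        omega
      exact monomial_mem T hb hcd (∑ i : Fin 3, m (Sum.inl i)) m rfl
        (hsum m hm).symm hev
    rw [p.as_sum]
    refine Subalgebra.sum_mem T fun m hm => ?_
    have : (monomial m (coeff m p) : MvPolynomial (Fin 3 ⊕ Fin 3) ℂ)
        = coeff m p • monomial m 1 := by
      rw [smul_monomial, smul_eq_mul, mul_one]
    rw [this]
    exact Subalgebra.smul_mem T (hmono m hm) _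
  · -- membership → invariance
    intro hpT ε hε _
    rw [helim ε]
    set σ : (Fin 3 ⊕ Fin 3) → MvPolynomial (Fin 3 ⊕ Fin 3) ℂ :=
      fun v => C (Sum.elim ε ε v) * X v with hσ
    have hsq : ∀ i, ε i * ε i = 1 := by
      intro i; rcases hε i with h | h <;> rw [h] <;> norm_num
    have lem1 : ∀ (a b : ℂ) (u v : MvPolynomial (Fin 3 ⊕ Fin 3) ℂ),
        (C a * u) * (C b * v) = C (a * b) * (u * v) := fun a b u v => by
      rw [map_mul]; ring
    have lem2 : ∀ (a b : ℂ) (u v : MvPolynomial (Fin 3 ⊕ Fin 3) ℂ),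
        (C a * u) ^ 2 * (C b * v) ^ 2 = C ((a * a) * (b * b)) * (u ^ 2 * v ^ 2) :=
      fun a b u v => by rw [map_mul, map_mul, map_mul]; ring
    have hgen : ∀ q ∈ {q : MvPolynomial (Fin 3 ⊕ Fin 3) ℂ |
            (∃ i : Fin 3, q = x i * y i) ∨
            (∃ i : Fin 3, q = (x (i + 1)) ^ 2 * (y (i + 2)) ^ 2) ∨
            (∃ i : Fin 3, q = (x (i + 2)) ^ 2 * (y (i + 1)) ^ 2)},
        aeval σ q = q := by
      rintro q (⟨i, rfl⟩ | ⟨i, rfl⟩ | ⟨i, rfl⟩)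
      · show aeval σ (X (Sum.inl i) * X (Sum.inr i)) = X (Sum.inl i) * X (Sum.inr i)
        simp only [map_mul, aeval_X, hσ, Sum.elim_inl, Sum.elim_inr]
        rw [lem1, hsq, map_one, one_mul]
      · show aeval σ ((X (Sum.inl (i + 1))) ^ 2 * (X (Sum.inr (i + 2))) ^ 2)
            = (X (Sum.inl (i + 1))) ^ 2 * (X (Sum.inr (i + 2))) ^ 2
        simp only [map_mul, map_pow, aeval_X, hσ, Sum.elim_inl, Sum.elim_inr]
        rw [lem2, hsq, hsq, mul_one, map_one, one_mul]
      · show aeval σ ((X (Sum.inl (i + 2))) ^ 2 * (X (Sum.inr (i + 1))) ^ 2)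
            = (X (Sum.inl (i + 2))) ^ 2 * (X (Sum.inr (i + 1))) ^ 2
        simp only [map_mul, map_pow, aeval_X, hσ, Sum.elim_inl, Sum.elim_inr]
        rw [lem2, hsq, hsq, mul_one, map_one, one_mul]
    have : T ≤ AlgHom.equalizer (aeval σ) (AlgHom.id ℂ (MvPolynomial (Fin 3 ⊕ Fin 3) ℂ)) := by
      rw [hT]
      refine Algebra.adjoin_le ?_
      intro q hq
      exact hgen q hq
    exact this hpT
end

section
/- Let h₃ be the 3-dimensional reflection representation of S₄, realized as trace-zero diagonal 4×4 matrices with S₄ permuting the diagonal entries. On h₃ ⊕ h₃, with diagonal S₄-action on pairs (x,y), the invariant ring ℂ[h₃ ⊕ h₃]^{S₄} is generated by the twelve functions g_{ij}(x,y) = tr(xⁱ yʲ) with 2 ≤ i + j ≤ 4, i, j ≥ 0 (excluding i+j ≤ 1), namely three generators of degree 2, four of degree 3, and five of degree 4. -/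
open MvPolynomial Finset

namespace Stmt17Aux

noncomputable section

abbrev A : Type := MvPolynomial (Fin 4 ⊕ Fin 4) ℂ

/-- polarized power sum -/
def P (a b : ℕ) : A := ∑ m : Fin 4, X (Sum.inl m) ^ a * X (Sum.inr m) ^ b

abbrev Idx1 := {ij : ℕ × ℕ // 1 ≤ ij.1 + ij.2 ∧ ij.1 + ij.2 ≤ 4}

def s : Idx1 → A := fun g => P g.1.1 g.1.2

def S : Subalgebra ℂ A := Algebra.adjoin ℂ (Set.range s)

lemma mem_S_of_le (a b : ℕ) (h1 : 1 ≤ a + b) (h2 : a + b ≤ 4) : P a b ∈ S :=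
  Algebra.subset_adjoin ⟨⟨(a, b), h1, h2⟩, rfl⟩

lemma P00 : P 0 0 = (4 : A) := by
  simp [P]

private lemma newton4 {R : Type*} [CommRing R] (a b c d : R) (p : ℕ → R)
    (hp : ∀ i, p i = a ^ i + b ^ i + c ^ i + d ^ i) (k : ℕ) :
    24 * p (k + 5) =
      24 * p 1 * p (k + 4) - 12 * (p 1 ^ 2 - p 2) * p (k + 3)
        + 4 * (p 1 ^ 3 - 3 * p 1 * p 2 + 2 * p 3) * p (k + 2)
        - (p 1 ^ 4 - 6 * p 1 ^ 2 * p 2 + 3 * p 2 ^ 2 + 8 * p 1 * p 3 - 6 * p 4) * p (k + 1) := by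
  simp only [hp]
  ring

/-- the polarization variable `x_m + t y_m` -/
def u (m : Fin 4) : Polynomial A :=
  Polynomial.C (X (Sum.inl m)) + Polynomial.C (X (Sum.inr m)) * Polynomial.X

def π (k : ℕ) : Polynomial A := ∑ m : Fin 4, u m ^ k

lemma hπ4 : ∀ i, π i = u 0 ^ i + u 1 ^ i + u 2 ^ i + u 3 ^ i := fun i => by
  rw [π, Fin.sum_univ_four]

lemma upow (m : Fin 4) (k : ℕ) :
    u m ^ k = ∑ j ∈ Finset.range (k + 1),
      Polynomial.monomial j ((k.choose j : A) * (X (Sum.inl m) ^ (k - j) * X (Sum.inr m) ^ j)) := by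
  rw [u, add_comm, add_pow]
  refine Finset.sum_congr rfl fun j hj => ?_
  rw [mul_pow, ← Polynomial.C_mul_X_pow_eq_monomial]
  simp only [map_mul, map_pow, Polynomial.C_eq_natCast]
  ring

lemma pik (k : ℕ) : π k = ∑ j ∈ Finset.range (k + 1),
    Polynomial.monomial j ((k.choose j : A) * P (k - j) j) := by
  rw [π]
  simp only [upow]
  rw [Finset.sum_comm]
  refine Finset.sum_congr rfl fun j _ => ?_
  rw [P, Finset.mul_sum, ← map_sum]

lemma coeff_pik (k j : ℕ) (h : j ≤ k) :
    (π k).coeff j = (k.choose j : A) * P (k - j) j := by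
  rw [pik, Polynomial.finset_sum_coeff]
  simp only [Polynomial.coeff_monomial]
  rw [Finset.sum_ite_eq' (Finset.range (k + 1)) j]
  simp [Nat.lt_succ_iff, h]

lemma coeff_pik_zero (k j : ℕ) (h : k < j) : (π k).coeff j = 0 := by
  rw [pik, Polynomial.finset_sum_coeff]
  refine Finset.sum_eq_zero fun j' hj' => ?_
  rw [Polynomial.coeff_monomial, if_neg]
  simp only [Finset.mem_range] at hj'
  omega

def T : Subalgebra ℂ (Polynomial A) where
  carrier := {f | ∀ j, f.coeff j ∈ S}
  add_mem' := fun hf hg j => by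
    rw [Polynomial.coeff_add]; exact S.add_mem (hf j) (hg j)
  zero_mem' := fun j => by simp [S.zero_mem]
  mul_mem' := fun hf hg j => by
    rw [Polynomial.coeff_mul]; exact S.sum_mem fun x _ => S.mul_mem (hf x.1) (hg x.2)
  one_mem' := fun j => by
    rw [Polynomial.coeff_one]
    split
    · exact S.one_mem
    · exact S.zero_mem
  algebraMap_mem' := fun c j => by
    rw [Polynomial.algebraMap_apply, Polynomial.coeff_C]
    split
    · exact S.algebraMap_mem c
    · exact S.zero_mem

lemma mem_T_iff (f : Polynomial A) : f ∈ T ↔ ∀ j, f.coeff j ∈ S := Iff.rfl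

lemma pi_mem : ∀ k, π k ∈ T := by
  intro k
  induction k using Nat.strong_induction_on with
  | _ k ih =>
    by_cases hk : k ≤ 4
    · rw [mem_T_iff]
      intro j
      rcases le_or_gt j k with hj | hj
      · rw [coeff_pik k j hj]
        refine S.mul_mem (S.natCast_mem _) ?_
        rcases Nat.eq_zero_or_pos k with rfl | hk1
        · have hj0 : j = 0 := Nat.le_zero.mp hj
          subst hj0
          rw [show (0 : ℕ) - 0 = 0 from rfl, P00]
          exact_mod_cast S.natCast_mem 4
        · exact mem_S_of_le _ _ (by omega) (by omega)
      · rw [coeff_pik_zero k j hj]; exact S.zero_mem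
    · push_neg at hk
      obtain ⟨l, rfl⟩ : ∃ l, k = l + 5 := ⟨k - 5, by omega⟩
      have h24 := newton4 (u 0) (u 1) (u 2) (u 3) π hπ4 l
      have hc : ∀ n : ℕ, ((n : ℕ) : Polynomial A) ∈ T := fun n => T.natCast_mem n
      have h1 : π 1 ∈ T := ih 1 (by omega)
      have h2 : π 2 ∈ T := ih 2 (by omega)
      have h3 : π 3 ∈ T := ih 3 (by omega)
      have h4 : π 4 ∈ T := ih 4 (by omega)
      have e1 : π (l + 1) ∈ T := ih (l + 1) (by omega)
      have e2 : π (l + 2) ∈ T := ih (l + 2) (by omega)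
      have e3 : π (l + 3) ∈ T := ih (l + 3) (by omega)
      have e4 : π (l + 4) ∈ T := ih (l + 4) (by omega)
      have hmem : (24 * π 1 * π (l + 4) - 12 * (π 1 ^ 2 - π 2) * π (l + 3)
          + 4 * (π 1 ^ 3 - 3 * π 1 * π 2 + 2 * π 3) * π (l + 2)
          - (π 1 ^ 4 - 6 * π 1 ^ 2 * π 2 + 3 * π 2 ^ 2 + 8 * π 1 * π 3 - 6 * π 4) * π (l + 1))
          ∈ T := by
        refine T.sub_mem (T.add_mem (T.sub_mem
          (T.mul_mem (T.mul_mem (by exact_mod_cast hc 24) h1) e4)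
          (T.mul_mem (T.mul_mem (by exact_mod_cast hc 12) (T.sub_mem (T.pow_mem h1 2) h2)) e3))
          (T.mul_mem (T.mul_mem (by exact_mod_cast hc 4)
            (T.add_mem (T.sub_mem (T.pow_mem h1 3)
              (T.mul_mem (T.mul_mem (by exact_mod_cast hc 3) h1) h2))
              (T.mul_mem (by exact_mod_cast hc 2) h3))) e2))
          (T.mul_mem (T.sub_mem (T.add_mem (T.add_mem (T.sub_mem (T.pow_mem h1 4)
            (T.mul_mem (T.mul_mem (by exact_mod_cast hc 6) (T.pow_mem h1 2)) h2))
            (T.mul_mem (by exact_mod_cast hc 3) (T.pow_mem h2 2)))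
            (T.mul_mem (T.mul_mem (by exact_mod_cast hc 8) h1) h3))
            (T.mul_mem (by exact_mod_cast hc 6) h4)) e1)
      have key : π (l + 5) = (24 : ℂ)⁻¹ • (24 * π (l + 5)) := by
        have h24' : ((24 : ℂ) • π (l + 5)) = 24 * π (l + 5) := by
          rw [Algebra.smul_def, map_ofNat]
        rw [← h24', smul_smul]
        norm_num
      rw [key, h24]
      exact T.smul_mem hmem _

lemma P_mem (a b : ℕ) (h : 1 ≤ a + b) : P a b ∈ S := by
  have h1 : (π (a + b)).coeff b ∈ S := (mem_T_iff _).mp (pi_mem (a + b)) b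
  rw [coeff_pik (a + b) b (by omega)] at h1
  rw [show a + b - b = a by omega] at h1
  have hc : (((a + b).choose b : ℕ) : ℂ) ≠ 0 := by
    exact_mod_cast (Nat.choose_pos (by omega : b ≤ a + b)).ne'
  have key : P a b = (((a + b).choose b : ℕ) : ℂ)⁻¹ • (((a + b).choose b : A) * P a b) := by
    have : (((a + b).choose b : ℕ) : ℂ) • P a b = ((a + b).choose b : A) * P a b := by
      rw [Algebra.smul_def, map_natCast]
    rw [← this, smul_smul, inv_mul_cancel₀ hc, one_smul]
  rw [key]
  exact S.smul_mem h1 _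

end

end Stmt17Aux
namespace Stmt17Aux

noncomputable section

def mono (f : Fin 4 → Fin 4) (v : Fin 4 → ℕ × ℕ) : A :=
  ∏ m : Fin 4, (X (Sum.inl (f m)) ^ (v m).1 * X (Sum.inr (f m)) ^ (v m).2)

def N (v : Fin 4 → ℕ × ℕ) : A := ∑ σ : Equiv.Perm (Fin 4), mono σ v

lemma mono_update (f : Fin 4 → Fin 4) (v : Fin 4 → ℕ × ℕ) (c : Fin 4) (z : ℕ × ℕ) :
    mono f (Function.update v c (v c + z)) =
      X (Sum.inl (f c)) ^ z.1 * X (Sum.inr (f c)) ^ z.2 * mono f v := by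
  rw [mono, mono, ← Finset.mul_prod_erase _ _ (Finset.mem_univ c),
    ← Finset.mul_prod_erase _ _ (Finset.mem_univ c)]
  rw [Finset.prod_congr rfl (fun m hm => by
    rw [Function.update_of_ne (Finset.ne_of_mem_erase hm)])]
  rw [Function.update_self, Prod.fst_add, Prod.snd_add, pow_add, pow_add]
  ring

lemma key3 (a b : ℕ) (w : Fin 4 → ℕ × ℕ) :
    P a b * N w = ∑ c : Fin 4, N (Function.update w c (w c + (a, b))) := by
  simp only [N, Finset.mul_sum]
  rw [Finset.sum_comm]
  refine Finset.sum_congr rfl fun σ _ => ?_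
  rw [P, Finset.sum_mul]
  rw [← Equiv.sum_comp σ (fun j => X (Sum.inl j) ^ a * X (Sum.inr j) ^ b * mono σ w)]
  exact Finset.sum_congr rfl fun c _ => (mono_update σ w c (a, b)).symm

lemma mono_comp (f : Fin 4 → Fin 4) (τ : Equiv.Perm (Fin 4)) (v : Fin 4 → ℕ × ℕ) :
    mono f (v ∘ τ) = mono (f ∘ τ.symm) v := by
  rw [mono, mono]
  refine Fintype.prod_equiv τ _ _ fun x => ?_
  simp

lemma N_comp (τ : Equiv.Perm (Fin 4)) (v : Fin 4 → ℕ × ℕ) : N (v ∘ τ) = N v := by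
  rw [N, N]
  simp only [mono_comp]
  refine Fintype.sum_equiv (Equiv.mulRight τ.symm) _ _ fun σ => ?_
  congr 1

lemma key5 (v : Fin 4 → ℕ × ℕ) (i : Fin 4) :
    P (v i).1 (v i).2 * N (Function.update v i (0 : ℕ × ℕ)) =
      (Finset.univ.filter fun c => Function.update v i (0 : ℕ × ℕ) c = 0).card • N v
        + ∑ c ∈ Finset.univ.filter
            (fun c => ¬ Function.update v i (0 : ℕ × ℕ) c = 0),
            N (Function.update (Function.update v i (0 : ℕ × ℕ)) c
              ((Function.update v i (0 : ℕ × ℕ)) c + v i)) := by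
  set w := Function.update v i (0 : ℕ × ℕ) with hw
  have h3 := key3 (v i).1 (v i).2 w
  rw [Prod.mk.eta] at h3
  rw [h3, ← Finset.sum_filter_add_sum_filter_not Finset.univ (fun c => w c = 0)]
  congr 1
  have hzero : ∀ c ∈ Finset.univ.filter (fun c => w c = 0),
      N (Function.update w c (w c + v i)) = N v := by
    intro c hc
    have hc0 : w c = 0 := (Finset.mem_filter.mp hc).2
    have hupd : Function.update w c (w c + v i) = v ∘ (Equiv.swap i c) := by
      funext m
      rcases eq_or_ne m c with rfl | hmc
      · rw [Function.update_self, hc0, zero_add, Function.comp_apply, Equiv.swap_apply_right]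
      · rw [Function.update_of_ne hmc, Function.comp_apply]
        by_cases hmi : m = i
        · have h1 : w m = 0 := by rw [hw, hmi, Function.update_self]
          have h2 : v c = 0 := by
            have h3c := hc0
            rw [hw, Function.update_of_ne (fun h => hmc (hmi.trans h.symm))] at h3c
            exact h3c
          rw [h1, hmi, Equiv.swap_apply_left, h2]
        · rw [Equiv.swap_apply_of_ne_of_ne hmi hmc, hw, Function.update_of_ne hmi]
    rw [hupd, N_comp]
  rw [Finset.sum_congr rfl hzero, Finset.sum_const]

lemma ne_zero_pair {p : ℕ × ℕ} (h : p ≠ 0) (q : ℕ × ℕ) : p + q ≠ 0 := by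
  rcases p with ⟨p1, p2⟩
  rcases q with ⟨q1, q2⟩
  simp only [Prod.mk_add_mk, Ne, Prod.mk_eq_zero, not_and] at *
  omega

lemma one_le_of_ne_zero {p : ℕ × ℕ} (h : p ≠ 0) : 1 ≤ p.1 + p.2 := by
  rcases p with ⟨p1, p2⟩
  simp only [Ne, Prod.mk_eq_zero, not_and] at h
  simp only []
  by_contra hc
  omega

lemma N_zero_mem (v : Fin 4 → ℕ × ℕ) (h : ∀ m, v m = (0 : ℕ × ℕ)) : N v ∈ S := by
  have hN : N v = ∑ _σ : Equiv.Perm (Fin 4), (1 : A) := by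
    refine Finset.sum_congr rfl fun σ _ => Finset.prod_eq_one fun m _ => ?_
    rw [h m]
    simp
  rw [hN, Finset.sum_const, nsmul_eq_mul, mul_one]
  exact S.natCast_mem _

lemma N_mem (v : Fin 4 → ℕ × ℕ) : N v ∈ S := by
  suffices H : ∀ n (v : Fin 4 → ℕ × ℕ),
      (Finset.univ.filter fun m => v m ≠ (0 : ℕ × ℕ)).card ≤ n → N v ∈ S from
    H _ v le_rfl
  intro n
  induction n with
  | zero =>
    intro v hv
    refine N_zero_mem v fun m => ?_
    by_contra hm
    have hmem : m ∈ Finset.univ.filter fun m => v m ≠ (0 : ℕ × ℕ) :=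
      Finset.mem_filter.mpr ⟨Finset.mem_univ m, hm⟩
    have := Finset.card_pos.mpr ⟨m, hmem⟩
    omega
  | succ n ihn =>
    intro v hv
    by_cases h0 : ∀ m, v m = (0 : ℕ × ℕ)
    · exact N_zero_mem v h0
    push_neg at h0
    obtain ⟨i, hi⟩ := h0
    set w := Function.update v i (0 : ℕ × ℕ) with hw
    have hfilter : (Finset.univ.filter fun m => w m ≠ (0 : ℕ × ℕ))
        = (Finset.univ.filter fun m => v m ≠ (0 : ℕ × ℕ)).erase i := by
      ext m
      simp only [Finset.mem_filter, Finset.mem_erase, Finset.mem_univ, true_and, hw,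
        Function.update_apply]
      rcases eq_or_ne m i with rfl | hmi
      · simp
      · simp [hmi]
    have hicard : i ∈ Finset.univ.filter fun m => v m ≠ (0 : ℕ × ℕ) :=
      Finset.mem_filter.mpr ⟨Finset.mem_univ i, hi⟩
    have hwcard : (Finset.univ.filter fun m => w m ≠ (0 : ℕ × ℕ)).card ≤ n := by
      rw [hfilter, Finset.card_erase_of_mem hicard]
      have := Finset.card_pos.mpr ⟨i, hicard⟩
      omega
    have hNw : N w ∈ S := ihn w hwcard
    have hmerge : ∀ c ∈ Finset.univ.filter (fun c => ¬ w c = (0 : ℕ × ℕ)),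
        N (Function.update w c (w c + v i)) ∈ S := by
      intro c hc
      have hc' : w c ≠ 0 := (Finset.mem_filter.mp hc).2
      refine ihn _ ?_
      have heq : (Finset.univ.filter fun m =>
          Function.update w c (w c + v i) m ≠ (0 : ℕ × ℕ))
          = Finset.univ.filter fun m => w m ≠ (0 : ℕ × ℕ) := by
        ext m
        simp only [Finset.mem_filter, Finset.mem_univ, true_and, Function.update_apply]
        rcases eq_or_ne m c with rfl | hmc
        · simp [ne_zero_pair hc' (v i), hc']
        · simp [hmc]
      rw [heq]
      exact hwcard
    have hP : P (v i).1 (v i).2 ∈ S := P_mem _ _ (one_le_of_ne_zero hi)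
    have hkey := key5 v i
    rw [← hw] at hkey
    set t := (Finset.univ.filter fun c => w c = (0 : ℕ × ℕ)).card with ht
    have htpos : 0 < t := by
      refine Finset.card_pos.mpr ⟨i, Finset.mem_filter.mpr ⟨Finset.mem_univ i, ?_⟩⟩
      rw [hw, Function.update_self]
    have hts : (t : ℂ) • N v = P (v i).1 (v i).2 * N w
        - ∑ c ∈ Finset.univ.filter (fun c => ¬ w c = (0 : ℕ × ℕ)),
            N (Function.update w c (w c + v i)) := by
      rw [eq_sub_iff_add_eq, Nat.cast_smul_eq_nsmul]
      exact hkey.symm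
    have hNv : N v = (t : ℂ)⁻¹ • ((t : ℂ) • N v) := by
      rw [smul_smul, inv_mul_cancel₀ (by exact_mod_cast htpos.ne'), one_smul]
    rw [hNv, hts]
    exact S.smul_mem (S.sub_mem (S.mul_mem hP hNw) (S.sum_mem hmerge)) _

end

end Stmt17Aux
namespace Stmt17Aux

noncomputable section

lemma monomial_one_eq (d : (Fin 4 ⊕ Fin 4) →₀ ℕ) :
    (monomial d (1 : ℂ) : A) = ∏ s : Fin 4 ⊕ Fin 4, X s ^ d s := by
  rw [monomial_eq, map_one, one_mul]
  exact Finsupp.prod_fintype _ _ fun s => pow_zero _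

lemma sym_monomial (d : (Fin 4 ⊕ Fin 4) →₀ ℕ) (σ : Equiv.Perm (Fin 4)) :
    rename (Sum.map ⇑σ ⇑σ) (monomial d (1 : ℂ)) =
      mono σ (fun m => (d (Sum.inl m), d (Sum.inr m))) := by
  rw [rename_monomial, monomial_one_eq, Fintype.prod_sum_type, mono]
  have hmap : ∀ s : Fin 4 ⊕ Fin 4,
      Finsupp.mapDomain (Sum.map ⇑σ ⇑σ) d ((Equiv.sumCongr σ σ) s) = d s := by
    intro s
    rw [show (Sum.map ⇑σ ⇑σ) = ⇑(Equiv.sumCongr σ σ) from rfl,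
      Finsupp.mapDomain_equiv_apply]
    simp
  rw [Finset.prod_mul_distrib]
  congr 1
  · rw [← Equiv.prod_comp σ
      (fun a => X (Sum.inl a) ^ (Finsupp.mapDomain (Sum.map ⇑σ ⇑σ) d (Sum.inl a)) : Fin 4 → A)]
    refine Finset.prod_congr rfl fun m _ => ?_
    have := hmap (Sum.inl m)
    simp only [Equiv.sumCongr_apply, Sum.map_inl] at this
    rw [this]
  · rw [← Equiv.prod_comp σ
      (fun a => X (Sum.inr a) ^ (Finsupp.mapDomain (Sum.map ⇑σ ⇑σ) d (Sum.inr a)) : Fin 4 → A)]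
    refine Finset.prod_congr rfl fun m _ => ?_
    have := hmap (Sum.inr m)
    simp only [Equiv.sumCongr_apply, Sum.map_inr] at this
    rw [this]

lemma sym_mem (p : A) :
    (∑ σ : Equiv.Perm (Fin 4), rename (Sum.map ⇑σ ⇑σ) p) ∈ S := by
  have hexp : ∀ σ : Equiv.Perm (Fin 4), rename (Sum.map ⇑σ ⇑σ) p
      = ∑ d ∈ p.support, (coeff d p) • mono σ (fun m => (d (Sum.inl m), d (Sum.inr m))) := by
    intro σ
    conv_lhs => rw [p.as_sum]
    rw [map_sum]
    refine Finset.sum_congr rfl fun d _ => ?_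
    rw [← sym_monomial d σ, ← map_smul]
    congr 1
    rw [smul_monomial, smul_eq_mul, mul_one]
  simp only [hexp]
  rw [Finset.sum_comm]
  refine S.sum_mem fun d _ => ?_
  rw [← Finset.smul_sum]
  exact S.smul_mem (N_mem _) _

lemma eval_aeval' {σ τ : Type*} (w : τ → ℂ) (u : σ → MvPolynomial τ ℂ)
    (Q : MvPolynomial σ ℂ) :
    eval w (aeval u Q) = eval (fun g => eval w (u g)) Q := by
  rw [aeval_def]
  rw [eval₂_comp_left (eval w) (algebraMap ℂ (MvPolynomial τ ℂ)) u Q]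
  have hcomp : (eval w).comp (algebraMap ℂ (MvPolynomial τ ℂ)) = RingHom.id ℂ :=
    RingHom.ext fun c => by simp [MvPolynomial.algebraMap_eq]
  rw [hcomp]
  rfl

end

end Stmt17Aux

open Stmt17Aux in
/-- The invariant ring of `S₄` acting diagonally on two copies of its reflection
representation `h₃` (trace-zero diagonal 4×4 matrices) is generated by the twelve functions
`g_{ij}(x,y) = tr(xⁱyʲ)` with `2 ≤ i + j ≤ 4`. -/
theorem stmt_17 :
    let D : Set ((Fin 4 ⊕ Fin 4) → ℂ) :=
      {q | (∑ i, q (Sum.inl i)) = 0 ∧ (∑ i, q (Sum.inr i)) = 0}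
    ∀ p : MvPolynomial (Fin 4 ⊕ Fin 4) ℂ,
      (∀ σ : Equiv.Perm (Fin 4), ∀ q ∈ D,
        MvPolynomial.eval (q ∘ Sum.map σ σ) p = MvPolynomial.eval q p) ↔
      ∃ P : MvPolynomial {ij : ℕ × ℕ // 2 ≤ ij.1 + ij.2 ∧ ij.1 + ij.2 ≤ 4} ℂ,
        ∀ q ∈ D, MvPolynomial.eval q p =
          MvPolynomial.eval
            (fun g => ∑ m : Fin 4, (q (Sum.inl m)) ^ (g.1.1) * (q (Sum.inr m)) ^ (g.1.2)) P := by
  intro D p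
  constructor
  · intro hp
    have hmem : ((24 : ℂ)⁻¹ • ∑ σ : Equiv.Perm (Fin 4), rename (Sum.map ⇑σ ⇑σ) p)
        ∈ Algebra.adjoin ℂ (Set.range Stmt17Aux.s) :=
      Subalgebra.smul_mem _ (sym_mem p) _
    rw [Algebra.adjoin_range_eq_range_aeval ℂ Stmt17Aux.s] at hmem
    obtain ⟨Q, hQ⟩ := hmem
    have hQ' : (aeval Stmt17Aux.s) Q
        = (24 : ℂ)⁻¹ • ∑ σ : Equiv.Perm (Fin 4), rename (Sum.map ⇑σ ⇑σ) p := hQ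
    set subst : Idx1 → MvPolynomial {ij : ℕ × ℕ // 2 ≤ ij.1 + ij.2 ∧ ij.1 + ij.2 ≤ 4} ℂ :=
      fun g => if h : 2 ≤ g.1.1 + g.1.2 then
        X (⟨g.1, h, g.2.2⟩ : {ij : ℕ × ℕ // 2 ≤ ij.1 + ij.2 ∧ ij.1 + ij.2 ≤ 4}) else 0
      with hsubst
    refine ⟨aeval subst Q, ?_⟩
    intro q hq
    have h1 : eval q ((24 : ℂ)⁻¹ • ∑ σ : Equiv.Perm (Fin 4), rename (Sum.map ⇑σ ⇑σ) p)
        = eval q p := by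
      rw [smul_eq_C_mul, map_mul, eval_C, map_sum]
      have hall : ∀ σ ∈ (Finset.univ : Finset (Equiv.Perm (Fin 4))),
          eval q (rename (Sum.map ⇑σ ⇑σ) p) = eval q p := fun σ _ => by
        rw [eval_rename]; exact hp σ q hq
      rw [Finset.sum_congr rfl hall, Finset.sum_const, Finset.card_univ, Fintype.card_perm]
      simp only [Fintype.card_fin, nsmul_eq_mul]
      norm_num [Nat.factorial]
      ring
    rw [← h1, ← hQ', eval_aeval', eval_aeval']
    have hfun : (fun g : Idx1 => eval q (Stmt17Aux.s g))
        = fun g : Idx1 => eval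
            (fun g2 : {ij : ℕ × ℕ // 2 ≤ ij.1 + ij.2 ∧ ij.1 + ij.2 ≤ 4} =>
              ∑ m : Fin 4, (q (Sum.inl m)) ^ (g2.1.1) * (q (Sum.inr m)) ^ (g2.1.2))
            (subst g) := by
      funext g
      rw [hsubst]
      simp only [Stmt17Aux.s, Stmt17Aux.P]
      split_ifs with h
      · simp
      · have h1' : g.1.1 + g.1.2 = 1 := by have := g.2.1; omega
        rcases Nat.add_eq_one_iff.mp h1' with ⟨ha, hb⟩ | ⟨ha, hb⟩ <;>
          simp [ha, hb, hq.1, hq.2]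
    rw [hfun]
  · rintro ⟨P, hP⟩ σ q hq
    have hq' : (q ∘ Sum.map ⇑σ ⇑σ) ∈ D := by
      constructor
      · rw [show (∑ i, (q ∘ Sum.map ⇑σ ⇑σ) (Sum.inl i)) = ∑ i, q (Sum.inl (σ i)) from rfl,
          Equiv.sum_comp σ (fun i => q (Sum.inl i))]
        exact hq.1
      · rw [show (∑ i, (q ∘ Sum.map ⇑σ ⇑σ) (Sum.inr i)) = ∑ i, q (Sum.inr (σ i)) from rfl,
          Equiv.sum_comp σ (fun i => q (Sum.inr i))]
        exact hq.2
    have hvals : (fun g : {ij : ℕ × ℕ // 2 ≤ ij.1 + ij.2 ∧ ij.1 + ij.2 ≤ 4} =>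
        ∑ m : Fin 4, ((q ∘ Sum.map ⇑σ ⇑σ) (Sum.inl m)) ^ (g.1.1)
          * ((q ∘ Sum.map ⇑σ ⇑σ) (Sum.inr m)) ^ (g.1.2))
        = (fun g : {ij : ℕ × ℕ // 2 ≤ ij.1 + ij.2 ∧ ij.1 + ij.2 ≤ 4} =>
            ∑ m : Fin 4, (q (Sum.inl m)) ^ (g.1.1) * (q (Sum.inr m)) ^ (g.1.2)) := by
      funext g
      exact Equiv.sum_comp σ (fun m => (q (Sum.inl m)) ^ (g.1.1) * (q (Sum.inr m)) ^ (g.1.2))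
    rw [hP _ hq', hP _ hq, hvals]
end
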